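/- arXiv:2510.24666 — 9 statements merged into one kernel-verified Lean document; each statement's English description precedes it below -/
import Mathlib

section
/- Let F be a strictly convex asymmetric norm on a finite-dimensional inner product space V with dual asymmetric norm F_*(α) = sup_{F(y)=1} α(y). Then F(d(F_*²)(α)) = 2F_*(α) for every α ∈ V*, where d(F_*²)(α) ∈ V is the gradient of F_*² at α (identified via the duality). -/
open scoped RealInnerProductSpace

/-- For a strictly convex asymmetric norm `F`, the gradient of the square of the dual
asymmetric norm satisfies `F(d(F_*²)(α)) = 2 F_*(α)` for every `α` (here the dual space is
identified with `V` via the inner product). -/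
theorem norm_of_gradient_dual_sq
    {V : Type*} [NormedAddCommGroup V] [InnerProductSpace ℝ V] [FiniteDimensional ℝ V]
    (F : V → ℝ)
    (hF_nonneg : ∀ y, 0 ≤ F y)
    (hF_zero : ∀ y, F y = 0 → y = 0)
    (hF_homog : ∀ (μ : ℝ) (y : V), 0 ≤ μ → F (μ • y) = μ * F y)
    (hF_triangle : ∀ y z, F (y + z) ≤ F y + F z)
    (hstrict : ∀ (y z : V), F y = 1 → F z = 1 → y ≠ z → ∀ t ∈ Set.Ioo (0:ℝ) 1,
      F ((1 - t) • y + t • z) < (1 - t) * F y + t * F z)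
    (Fs : V → ℝ)
    (hFs : ∀ a : V, Fs a = sSup ((fun y => ⟪a, y⟫) '' {y : V | F y = 1})) :
    ∀ a : V, F (gradient (fun b => Fs b ^ 2) a) = 2 * Fs a := by
  classical
  have hF0 : F 0 = 0 := by simpa using hF_homog 0 0 le_rfl
  have hconv : ConvexOn ℝ Set.univ F := by
    refine ⟨convex_univ, fun y _ z _ s t hs ht hst => ?_⟩
    calc F (s • y + t • z) ≤ F (s • y) + F (t • z) := hF_triangle _ _
      _ = s * F y + t * F z := by rw [hF_homog s y hs, hF_homog t z ht]
  have hFcont : Continuous F := by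
    rw [← continuousOn_univ]
    exact hconv.continuousOn isOpen_univ
  intro a
  rcases subsingleton_or_nontrivial V with hsub | hnt
  · haveI := hsub
    have hSempty : {y : V | F y = 1} = ∅ := by
      ext y
      simp only [Set.mem_setOf_eq, Set.mem_empty_iff_false, iff_false]
      have hy : y = 0 := Subsingleton.elim _ _
      rw [hy, hF0]; norm_num
    have hgrad : gradient (fun b => Fs b ^ 2) a = 0 := Subsingleton.elim _ _
    rw [hgrad, hF0, hFs a, hSempty]
    simp [Real.sSup_empty]
  · haveI := hnt
    set S : Set V := {y : V | F y = 1} with hSdef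
    have hFpos : ∀ w : V, w ≠ 0 → 0 < F w := fun w hw =>
      lt_of_le_of_ne (hF_nonneg w) (fun h => hw (hF_zero w h.symm))
    have hmemS : ∀ w : V, w ≠ 0 → (F w)⁻¹ • w ∈ S := by
      intro w hw
      have hFw := hFpos w hw
      show F ((F w)⁻¹ • w) = 1
      rw [hF_homog _ _ (inv_nonneg.2 hFw.le), inv_mul_cancel₀ hFw.ne']
    obtain ⟨y₀, hy₀mem, hy₀min⟩ := (isCompact_sphere (0:V) 1).exists_isMinOn
      (NormedSpace.sphere_nonempty.2 zero_le_one) hFcont.continuousOn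
    set c : ℝ := F y₀ with hc
    have hy₀norm : ‖y₀‖ = 1 := mem_sphere_zero_iff_norm.mp hy₀mem
    have hcpos : 0 < c := hFpos y₀ (by intro h; rw [h] at hy₀norm; simp at hy₀norm)
    have hlow : ∀ y : V, c * ‖y‖ ≤ F y := by
      intro y
      rcases eq_or_ne y 0 with rfl | hy
      · simp [hF0]
      · have hny : (0:ℝ) < ‖y‖ := norm_pos_iff.2 hy
        have hmem : ‖y‖⁻¹ • y ∈ Metric.sphere (0:V) 1 := by
          rw [mem_sphere_zero_iff_norm, norm_smul, norm_inv, norm_norm,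
            inv_mul_cancel₀ hny.ne']
        have h1 : c ≤ F (‖y‖⁻¹ • y) := hy₀min hmem
        rw [hF_homog _ _ (inv_nonneg.2 hny.le)] at h1
        have h2 := mul_le_mul_of_nonneg_right h1 hny.le
        rwa [mul_comm (‖y‖⁻¹) (F y), mul_assoc, inv_mul_cancel₀ hny.ne', mul_one] at h2
    have hSb : ∀ y ∈ S, ‖y‖ ≤ c⁻¹ := by
      intro y hy
      have h1 : c * ‖y‖ ≤ 1 := by
        have := hlow y
        rwa [(hy : F y = 1)] at this
      calc ‖y‖ = c⁻¹ * (c * ‖y‖) := by field_simp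
        _ ≤ c⁻¹ * 1 := by
            have : (0:ℝ) ≤ c⁻¹ := (inv_pos.2 hcpos).le
            nlinarith
        _ = c⁻¹ := mul_one _
    have hScl : IsClosed S := isClosed_eq hFcont continuous_const
    have hScomp : IsCompact S := Metric.isCompact_of_isClosed_isBounded hScl
      (isBounded_iff_forall_norm_le.2 ⟨c⁻¹, hSb⟩)
    obtain ⟨v, hv⟩ := exists_ne (0 : V)
    have hSne : S.Nonempty := ⟨(F v)⁻¹ • v, hmemS v hv⟩
    have hmax : ∀ b : V, ∃ y ∈ S, (∀ z ∈ S, ⟪b, z⟫ ≤ ⟪b, y⟫) ∧ Fs b = ⟪b, y⟫ := by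
      intro b
      have hcont : Continuous fun y : V => ⟪b, y⟫ := continuous_const.inner continuous_id
      obtain ⟨y, hy, hmaxy⟩ := hScomp.exists_isMaxOn hSne hcont.continuousOn
      refine ⟨y, hy, fun z hz => hmaxy hz, ?_⟩
      rw [hFs b]
      exact IsGreatest.csSup_eq ⟨Set.mem_image_of_mem _ hy, by
        rintro _ ⟨z, hz, rfl⟩; exact hmaxy hz⟩
    have hbdd : ∀ b : V, BddAbove ((fun y => ⟪b, y⟫) '' S) := by
      intro b
      refine ⟨‖b‖ * c⁻¹, ?_⟩
      rintro _ ⟨z, hz, rfl⟩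
      calc ⟪b, z⟫ ≤ ‖b‖ * ‖z‖ := real_inner_le_norm _ _
        _ ≤ ‖b‖ * c⁻¹ := mul_le_mul_of_nonneg_left (hSb z hz) (norm_nonneg _)
    have hles : ∀ b : V, ∀ y ∈ S, ⟪b, y⟫ ≤ Fs b := by
      intro b y hy
      rw [hFs b]
      exact le_csSup (hbdd b) (Set.mem_image_of_mem _ hy)
    have hFspos : ∀ b : V, b ≠ 0 → 0 < Fs b := by
      intro b hb
      have h1 : ⟪b, (F b)⁻¹ • b⟫ ≤ Fs b := hles b _ (hmemS b hb)
      have h2 : (0:ℝ) < ⟪b, (F b)⁻¹ • b⟫ := by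
        rw [real_inner_smul_right, real_inner_self_eq_norm_sq]
        exact mul_pos (inv_pos.2 (hFpos b hb)) (pow_pos (norm_pos_iff.2 hb) 2)
      linarith
    by_cases ha : a = 0
    · subst ha
      obtain ⟨y0, hy0S, _, hFs0⟩ := hmax 0
      rw [inner_zero_left] at hFs0
      have habs : ∀ h : V, |Fs h| ≤ c⁻¹ * ‖h‖ := by
        intro h
        obtain ⟨y, hyS, _, hFsh⟩ := hmax h
        rw [hFsh]
        calc |⟪h, y⟫| ≤ ‖h‖ * ‖y‖ := abs_real_inner_le_norm h y
          _ ≤ ‖h‖ * c⁻¹ := mul_le_mul_of_nonneg_left (hSb y hyS) (norm_nonneg _)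
          _ = c⁻¹ * ‖h‖ := mul_comm _ _
      have hgrad : HasGradientAt (fun b => Fs b ^ 2) 0 0 := by
        rw [hasGradientAt_iff_hasFDerivAt, map_zero,
          hasFDerivAt_iff_isLittleO_nhds_zero, Asymptotics.isLittleO_iff]
        intro ε hε
        rw [Metric.eventually_nhds_iff]
        refine ⟨ε * c ^ 2, by positivity, fun {h} hh => ?_⟩
        rw [dist_zero_right] at hh
        simp only [zero_add, hFs0, ContinuousLinearMap.zero_apply, sub_zero,
          Real.norm_eq_abs]
        have hk : |Fs h ^ 2 - 0 ^ 2| = |Fs h| * |Fs h| := by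
          norm_num [pow_two, abs_mul]
        rw [hk]
        have hb1 := habs h
        have hinv : (0:ℝ) ≤ c⁻¹ := (inv_pos.2 hcpos).le
        have step : |Fs h| * |Fs h| ≤ (c⁻¹ * ‖h‖) * (c⁻¹ * ‖h‖) :=
          mul_le_mul hb1 hb1 (abs_nonneg _) (by positivity)
        have step2 : (c⁻¹ * ‖h‖) * (c⁻¹ * ‖h‖) ≤ ε * ‖h‖ := by
          have h1 : (c⁻¹ * ‖h‖) * (c⁻¹ * ‖h‖) = (c⁻¹ * c⁻¹) * (‖h‖ * ‖h‖) := by ring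
          have h2 : (c⁻¹ * c⁻¹) * (‖h‖ * ‖h‖) ≤ (c⁻¹ * c⁻¹) * (‖h‖ * (ε * c ^ 2)) := by
            have : ‖h‖ * ‖h‖ ≤ ‖h‖ * (ε * c ^ 2) :=
              mul_le_mul_of_nonneg_left hh.le (norm_nonneg _)
            nlinarith [norm_nonneg h]
          have h3 : (c⁻¹ * c⁻¹) * (‖h‖ * (ε * c ^ 2)) = ε * ‖h‖ := by
            field_simp
          linarith [h1.le, h2, h3.le]
        linarith
      rw [hgrad.gradient, hF0, hFs0]
      ring
    · obtain ⟨ya, hyaS, hyamax, hFsa_eq⟩ := hmax a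
      have hFsapos : 0 < Fs a := hFspos a ha
      have huniq : ∀ z ∈ S, ⟪a, z⟫ = Fs a → z = ya := by
        intro z hz haz
        by_contra hne
        have hz' : F z = 1 := hz
        have hya' : F ya = 1 := hyaS
        have hw := hstrict z ya hz' hya' hne (1/2) (by norm_num)
        rw [hz', hya'] at hw
        have hFw1 : F ((1 - 1/2 : ℝ) • z + (1/2 : ℝ) • ya) < 1 := by linarith
        have haw : ⟪a, (1 - 1/2 : ℝ) • z + (1/2 : ℝ) • ya⟫ = Fs a := by
          rw [inner_add_right, real_inner_smul_right, real_inner_smul_right, haz,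
            ← hFsa_eq]
          ring
        have hw0 : ((1 - 1/2 : ℝ) • z + (1/2 : ℝ) • ya) ≠ 0 := by
          intro h
          rw [h, inner_zero_right] at haw
          linarith
        have hFwpos := hFpos _ hw0
        have hkey : ⟪a, (F ((1 - 1/2 : ℝ) • z + (1/2 : ℝ) • ya))⁻¹ •
            ((1 - 1/2 : ℝ) • z + (1/2 : ℝ) • ya)⟫ ≤ Fs a := hles a _ (hmemS _ hw0)
        rw [real_inner_smul_right, haw] at hkey
        have h2 := mul_le_mul_of_nonneg_left hkey hFwpos.le
        rw [← mul_assoc, mul_inv_cancel₀ hFwpos.ne', one_mul] at h2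
        nlinarith
      have hsel : ∀ ε : ℝ, 0 < ε → ∃ δ : ℝ, 0 < δ ∧ ∀ b : V, ‖b - a‖ < δ →
          ∀ y ∈ S, (∀ z ∈ S, ⟪b, z⟫ ≤ ⟪b, y⟫) → ‖y - ya‖ < ε := by
        intro ε hε
        set T : Set V := S ∩ {y | ε ≤ ‖y - ya‖} with hT
        rcases T.eq_empty_or_nonempty with hTe | hTne
        · refine ⟨1, one_pos, fun b hb y hyS hymax => ?_⟩
          by_contra hcon
          push_neg at hcon
          exact Set.eq_empty_iff_forall_notMem.mp hTe y ⟨hyS, hcon⟩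
        · have hTcomp : IsCompact T := hScomp.inter_right
            (isClosed_le continuous_const ((continuous_id.sub continuous_const).norm))
          have hcontT : Continuous fun y : V => ⟪a, y⟫ := continuous_const.inner continuous_id
          obtain ⟨z, hzT, hzmax⟩ := hTcomp.exists_isMaxOn hTne hcontT.continuousOn
          have hzS : z ∈ S := hzT.1
          have hzne : z ≠ ya := by
            intro h
            have h2 : ε ≤ ‖z - ya‖ := hzT.2
            rw [h, sub_self, norm_zero] at h2
            linarith
          have hzlt : ⟪a, z⟫ < Fs a :=
            lt_of_le_of_ne (hles a z hzS) (fun h => hzne (huniq z hzS h))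
          have hκpos : 0 < Fs a - ⟪a, z⟫ := by linarith
          refine ⟨(Fs a - ⟪a, z⟫) * c / 2, by positivity, fun b hb y hyS hymax => ?_⟩
          by_contra hcon
          push_neg at hcon
          have hyT : y ∈ T := ⟨hyS, hcon⟩
          have h1 : ⟪b, y⟫ ≤ ⟪a, z⟫ + ‖b - a‖ * c⁻¹ := by
            have e1 : ⟪b - a, y⟫ = ⟪b, y⟫ - ⟪a, y⟫ := inner_sub_left _ _ _
            have e2 : ⟪a, y⟫ ≤ ⟪a, z⟫ := hzmax hyT
            have e3 : ⟪b - a, y⟫ ≤ ‖b - a‖ * ‖y‖ := real_inner_le_norm _ _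
            have e4 : ‖b - a‖ * ‖y‖ ≤ ‖b - a‖ * c⁻¹ :=
              mul_le_mul_of_nonneg_left (hSb y hyS) (norm_nonneg _)
            linarith
          have h2 : Fs a - ‖b - a‖ * c⁻¹ ≤ ⟪b, ya⟫ := by
            have e1 : ⟪b - a, ya⟫ = ⟪b, ya⟫ - ⟪a, ya⟫ := inner_sub_left _ _ _
            have e3 : |⟪b - a, ya⟫| ≤ ‖b - a‖ * ‖ya‖ := abs_real_inner_le_norm _ _
            have e4 : ‖b - a‖ * ‖ya‖ ≤ ‖b - a‖ * c⁻¹ :=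
              mul_le_mul_of_nonneg_left (hSb ya hyaS) (norm_nonneg _)
            have e5 : -(‖b - a‖ * c⁻¹) ≤ ⟪b - a, ya⟫ := by
              have := neg_abs_le ⟪b - a, ya⟫
              linarith
            rw [hFsa_eq]
            linarith
          have h3 : ⟪b, ya⟫ ≤ ⟪b, y⟫ := hymax ya hyaS
          have h4 : ‖b - a‖ * c⁻¹ < (Fs a - ⟪a, z⟫) / 2 := by
            have h5 := mul_lt_mul_of_pos_right hb (inv_pos.2 hcpos)
            rwa [div_mul_eq_mul_div, mul_assoc, mul_inv_cancel₀ hcpos.ne', mul_one] at h5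
          linarith
      have hgrad1 : HasGradientAt Fs ya a := by
        rw [hasGradientAt_iff_hasFDerivAt, hasFDerivAt_iff_isLittleO_nhds_zero,
          Asymptotics.isLittleO_iff]
        intro ε hε
        obtain ⟨δ, hδ, hδsel⟩ := hsel ε hε
        rw [Metric.eventually_nhds_iff]
        refine ⟨δ, hδ, fun {h} hh => ?_⟩
        rw [dist_zero_right] at hh
        obtain ⟨yb, hybS, hybmax, hFsb⟩ := hmax (a + h)
        have hclose : ‖yb - ya‖ < ε := hδsel (a + h) (by simpa using hh) yb hybS hybmax
        have hlow1 : 0 ≤ Fs (a + h) - Fs a - (InnerProductSpace.toDual ℝ V ya) h := by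
          have h1 : ⟪a + h, ya⟫ ≤ Fs (a + h) := hles (a + h) ya hyaS
          rw [inner_add_left] at h1
          have hcm : ⟪ya, h⟫ = ⟪h, ya⟫ := real_inner_comm _ _
          rw [InnerProductSpace.toDual_apply_apply, hFsa_eq]
          linarith
        have hup1 : Fs (a + h) - Fs a - (InnerProductSpace.toDual ℝ V ya) h ≤ ε * ‖h‖ := by
          rw [InnerProductSpace.toDual_apply_apply]
          have hcm : ⟪ya, h⟫ = ⟪h, ya⟫ := real_inner_comm _ _
          have h1 : ⟪a, yb⟫ ≤ Fs a := hles a yb hybS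
          have h2 : ⟪h, yb⟫ - ⟪h, ya⟫ = ⟪h, yb - ya⟫ := (inner_sub_right _ _ _).symm
          have h3 : ⟪h, yb - ya⟫ ≤ ‖h‖ * ‖yb - ya‖ := real_inner_le_norm _ _
          have h4 : ‖h‖ * ‖yb - ya‖ ≤ ε * ‖h‖ := by
            rw [mul_comm ε ‖h‖]
            exact mul_le_mul_of_nonneg_left hclose.le (norm_nonneg h)
          rw [hFsb, inner_add_left]
          linarith
        simp only [Real.norm_eq_abs]
        rw [abs_of_nonneg hlow1]
        exact hup1
      have hfd := hgrad1.hasFDerivAt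
      have hsq : HasFDerivAt (fun b => Fs b ^ 2)
          ((2 * Fs a) • (InnerProductSpace.toDual ℝ V ya : V →L[ℝ] ℝ)) a := by
        have heq : (fun b => Fs b ^ 2) = fun b => Fs b * Fs b := funext fun b => pow_two (Fs b)
        have hD : (2 * Fs a) • (InnerProductSpace.toDual ℝ V ya : V →L[ℝ] ℝ) =
            Fs a • (InnerProductSpace.toDual ℝ V ya : V →L[ℝ] ℝ) +
            Fs a • (InnerProductSpace.toDual ℝ V ya : V →L[ℝ] ℝ) := by
          rw [two_mul, add_smul]
        rw [heq, hD]
        exact hfd.mul hfd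
      have hgsq : HasGradientAt (fun b => Fs b ^ 2) ((2 * Fs a) • ya) a := by
        rw [hasGradientAt_iff_hasFDerivAt, map_smul]
        exact hsq
      rw [hgsq.gradient, hF_homog _ _ (by positivity), (hyaS : F ya = 1), mul_one]
end

section
/- Let F be a strictly convex asymmetric norm on a finite-dimensional inner product space V and α ∈ V*\{0}. Then u(α) = d(F_*²)(α)/(2F_*(α)) is the unique point of the unit sphere S_F[0,1] that maximizes α on S_F[0,1]. -/
open scoped RealInnerProductSpace

/-- For a strictly convex asymmetric norm `F` and `α ≠ 0` (identified with a vector `a ∈ V`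
via the inner product), `u(α) = d(F_*²)(α)/(2 F_*(α))` is the unique point of the unit
sphere `S_F[0,1]` maximizing `α` on `S_F[0,1]`. -/
theorem unique_maximizer_formula
    {V : Type*} [NormedAddCommGroup V] [InnerProductSpace ℝ V] [FiniteDimensional ℝ V]
    (F : V → ℝ)
    (hF_nonneg : ∀ y, 0 ≤ F y)
    (hF_zero : ∀ y, F y = 0 → y = 0)
    (hF_homog : ∀ (μ : ℝ) (y : V), 0 ≤ μ → F (μ • y) = μ * F y)
    (hF_triangle : ∀ y z, F (y + z) ≤ F y + F z)
    (hstrict : ∀ (y z : V), F y = 1 → F z = 1 → y ≠ z → ∀ t ∈ Set.Ioo (0:ℝ) 1,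
      F ((1 - t) • y + t • z) < (1 - t) * F y + t * F z)
    (Fs : V → ℝ)
    (hFs : ∀ a : V, Fs a = sSup ((fun y => ⟪a, y⟫) '' {y : V | F y = 1}))
    (a : V) (ha : a ≠ 0) :
    F ((2 * Fs a)⁻¹ • gradient (fun b => Fs b ^ 2) a) = 1 ∧
    (∀ y : V, F y = 1 → ⟪a, y⟫ ≤ ⟪a, (2 * Fs a)⁻¹ • gradient (fun b => Fs b ^ 2) a⟫) ∧
    (∀ z : V, F z = 1 → (∀ y : V, F y = 1 → ⟪a, y⟫ ≤ ⟪a, z⟫) →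
      z = (2 * Fs a)⁻¹ • gradient (fun b => Fs b ^ 2) a) := by
  classical
  have hF0 : F 0 = 0 := by
    have h := hF_homog 0 0 le_rfl
    simpa using h
  -- convexity and continuity of F
  have hconv : ConvexOn ℝ Set.univ F := by
    refine ⟨convex_univ, fun y _ z _ s t hs ht hst => ?_⟩
    calc F (s • y + t • z) ≤ F (s • y) + F (t • z) := hF_triangle _ _
      _ = s * F y + t * F z := by rw [hF_homog s y hs, hF_homog t z ht]
  have hFc : Continuous F := by
    rw [← continuousOn_univ]
    exact hconv.continuousOn isOpen_univ
  have hFpos : ∀ y : V, y ≠ 0 → 0 < F y := by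
    intro y hy
    rcases (hF_nonneg y).lt_or_eq with h | h
    · exact h
    · exact absurd (hF_zero y h.symm) hy
  have hnorm : ∀ y : V, y ≠ 0 → F ((F y)⁻¹ • y) = 1 := by
    intro y hy
    rw [hF_homog _ _ (inv_nonneg.2 (hF_nonneg y))]
    exact inv_mul_cancel₀ (ne_of_gt (hFpos y hy))
  set S : Set V := {y : V | F y = 1} with hS
  have hS_closed : IsClosed S := isClosed_eq hFc continuous_const
  -- lower bound c‖y‖ ≤ F y
  have hsph_ne : (Metric.sphere (0:V) 1).Nonempty := by
    refine ⟨‖a‖⁻¹ • a, ?_⟩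
    simp [norm_smul, inv_mul_cancel₀ (norm_ne_zero_iff.2 ha)]
  obtain ⟨y0, hy0, hy0min⟩ :=
    (isCompact_sphere (0:V) 1).exists_isMinOn hsph_ne hFc.continuousOn
  set c : ℝ := F y0 with hc
  have hy0ne : y0 ≠ 0 := by
    intro h
    rw [Metric.mem_sphere, h] at hy0
    simp at hy0
  have hcpos : 0 < c := hFpos y0 hy0ne
  have hlow : ∀ y : V, c * ‖y‖ ≤ F y := by
    intro y
    rcases eq_or_ne y 0 with rfl | hy
    · simp [hF0]
    · have hyn : (‖y‖⁻¹ • y) ∈ Metric.sphere (0:V) 1 := by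
        simp [norm_smul, inv_mul_cancel₀ (norm_ne_zero_iff.2 hy)]
      have h1 : c ≤ F (‖y‖⁻¹ • y) := hy0min hyn
      have h2 : F (‖y‖⁻¹ • y) = ‖y‖⁻¹ * F y :=
        hF_homog _ _ (inv_nonneg.2 (norm_nonneg y))
      rw [h2] at h1
      have hny : (0:ℝ) < ‖y‖ := norm_pos_iff.2 hy
      calc c * ‖y‖ ≤ (‖y‖⁻¹ * F y) * ‖y‖ := by nlinarith
        _ = F y := by field_simp
  have hS_bdd : ∀ y ∈ S, ‖y‖ ≤ c⁻¹ := by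
    intro y hy
    have h1 : c * ‖y‖ ≤ 1 := by
      have := hlow y
      have hy1 : F y = 1 := hy
      linarith [hy1 ▸ this]
    nlinarith [mul_inv_cancel₀ (ne_of_gt hcpos), hcpos]
  have hS_compact : IsCompact S := by
    refine Metric.isCompact_of_isClosed_isBounded hS_closed ?_
    exact (isBounded_iff_forall_norm_le).2 ⟨c⁻¹, hS_bdd⟩
  have hS_ne : S.Nonempty := ⟨(F a)⁻¹ • a, hnorm a ha⟩
  -- maximizers exist and realize Fs
  have hmax : ∀ b : V, ∃ u ∈ S, (∀ y ∈ S, ⟪b, y⟫ ≤ ⟪b, u⟫) ∧ Fs b = ⟪b, u⟫ := by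
    intro b
    have hcont : ContinuousOn (fun y : V => ⟪b, y⟫) S :=
      (continuous_const.inner continuous_id).continuousOn
    obtain ⟨u, huS, humax⟩ := hS_compact.exists_isMaxOn hS_ne hcont
    have humax' : ∀ y ∈ S, ⟪b, y⟫ ≤ ⟪b, u⟫ := fun y hy => humax hy
    refine ⟨u, huS, humax', ?_⟩
    rw [hFs b]
    apply le_antisymm
    · apply csSup_le ((hS_ne).image _)
      rintro x ⟨y, hy, rfl⟩
      exact humax' y hy
    · exact le_csSup ⟨⟪b, u⟫, by rintro x ⟨y, hy, rfl⟩; exact humax' y hy⟩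
        ⟨u, huS, rfl⟩
  obtain ⟨u, huS, humax, huFs⟩ := hmax a
  -- Fs a > 0
  have hmem : ((F a)⁻¹ • a) ∈ S := hnorm a ha
  have hFsa_pos : 0 < Fs a := by
    have h1 : ⟪a, (F a)⁻¹ • a⟫ ≤ ⟪a, u⟫ := humax _ hmem
    have h2 : ⟪a, (F a)⁻¹ • a⟫ = (F a)⁻¹ * ‖a‖ ^ 2 := by
      rw [real_inner_smul_right, real_inner_self_eq_norm_sq]
    have h3 : 0 < (F a)⁻¹ * ‖a‖ ^ 2 := by
      have := hFpos a ha
      have hna : (0:ℝ) < ‖a‖ := norm_pos_iff.2 ha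
      positivity
    rw [huFs]
    linarith [h2 ▸ h1]
  -- uniqueness of the maximizer
  have huniq : ∀ z ∈ S, (∀ y ∈ S, ⟪a, y⟫ ≤ ⟪a, z⟫) → z = u := by
    intro z hz hzmax
    by_contra hne
    have hzu : ⟪a, z⟫ = Fs a := by
      rw [huFs]
      exact le_antisymm (humax z hz) (hzmax u huS)
    have hmlt := hstrict z u hz huS hne (1/2) (by norm_num)
    set m : V := (1 - (1/2:ℝ)) • z + (1/2:ℝ) • u with hm
    have hmF : F m < 1 := by
      have : (1 - (1/2:ℝ)) * F z + (1/2:ℝ) * F u = 1 := by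
        rw [hz, huS]; norm_num
      linarith [this ▸ hmlt]
    have hma : ⟪a, m⟫ = Fs a := by
      rw [hm, inner_add_right, real_inner_smul_right, real_inner_smul_right, hzu,
        show ⟪a, u⟫ = Fs a from huFs.symm]
      ring
    have hm0 : m ≠ 0 := by
      intro h
      rw [h, inner_zero_right] at hma
      linarith
    have hmpos : 0 < F m := hFpos m hm0
    have hm' : ((F m)⁻¹ • m) ∈ S := hnorm m hm0
    have h1 : ⟪a, (F m)⁻¹ • m⟫ ≤ Fs a := huFs ▸ humax _ hm'
    rw [real_inner_smul_right, hma] at h1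
    have hinv : 1 < (F m)⁻¹ := by
      rw [show (1:ℝ) = (F m) * (F m)⁻¹ from (mul_inv_cancel₀ (ne_of_gt hmpos)).symm]
      nlinarith [inv_pos.2 hmpos]
    nlinarith
  -- Danskin: Fs has gradient u at a
  have hub : ‖u‖ ≤ c⁻¹ := hS_bdd u huS
  have hgrad : HasGradientAt Fs u a := by
    rw [hasGradientAt_iff_isLittleO, Asymptotics.isLittleO_iff]
    intro ε hε
    -- find η > 0 separating far points
    obtain ⟨δ, hδpos, hδ⟩ :
        ∃ δ > 0, ∀ b : V, ‖b - a‖ < δ → ∀ w ∈ S,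
          (∀ y ∈ S, ⟪b, y⟫ ≤ ⟪b, w⟫) → ‖w - u‖ < ε := by
      set K : Set V := {y ∈ S | ε ≤ ‖y - u‖} with hK
      rcases K.eq_empty_or_nonempty with hKe | hKne
      · refine ⟨1, one_pos, fun b _ w hw _ => ?_⟩
        by_contra hcon
        exact (Set.eq_empty_iff_forall_notMem.1 hKe w) ⟨hw, le_of_not_gt hcon⟩
      · have hKc : IsCompact K :=
          hS_compact.of_isClosed_subset
            (hS_closed.inter (isClosed_le continuous_const
              ((continuous_id.sub continuous_const).norm)))
            (fun y hy => hy.1)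
        obtain ⟨w0, hw0K, hw0max⟩ := hKc.exists_isMaxOn hKne
          ((innerSL ℝ a).continuous.continuousOn)
        have hw0S : w0 ∈ S := hw0K.1
        have hw0lt : ⟪a, w0⟫ < Fs a := by
          rcases lt_or_eq_of_le (huFs ▸ humax w0 hw0S) with h | h
          · exact h
          · exfalso
            have : w0 = u := huniq w0 hw0S (fun y hy => h.symm ▸ (huFs ▸ humax y hy))
            rw [this] at hw0K
            have := hw0K.2
            simp at this
            linarith
        set η : ℝ := Fs a - ⟪a, w0⟫ with hη
        have hηpos : 0 < η := by simp only [hη]; linarith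
        refine ⟨η * c / 2, by positivity, fun b hb w hwS hwmax => ?_⟩
        by_contra hcon
        have hwK : w ∈ K := ⟨hwS, le_of_not_gt hcon⟩
        have hwb : ‖w‖ ≤ c⁻¹ := hS_bdd w hwS
        -- upper bound for Fs-like quantity at b
        have h1 : ⟪b, u⟫ ≤ ⟪b, w⟫ := hwmax u huS
        have h2 : ⟪b, w⟫ = ⟪a, w⟫ + ⟪b - a, w⟫ := by
          rw [inner_sub_left]; ring
        have h3 : ⟪b, u⟫ = ⟪a, u⟫ + ⟪b - a, u⟫ := by
          rw [inner_sub_left]; ring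
        have h4 : ⟪a, w⟫ ≤ ⟪a, w0⟫ := hw0max hwK
        have h5 : ⟪b - a, w⟫ ≤ ‖b - a‖ * ‖w‖ := real_inner_le_norm _ _
        have h6 : -(‖b - a‖ * ‖u‖) ≤ ⟪b - a, u⟫ := by
          have := real_inner_le_norm (b - a) (-u)
          rw [inner_neg_right] at this
          simp only [norm_neg] at this
          linarith
        have hbu : ⟪a, u⟫ = Fs a := huFs.symm
        have hbac : ‖b - a‖ * c⁻¹ < η / 2 := by
          have hbnn : (0:ℝ) ≤ ‖b - a‖ := norm_nonneg _
          have : ‖b - a‖ < η * c / 2 := hb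
          calc ‖b - a‖ * c⁻¹ < (η * c / 2) * c⁻¹ := by
                apply mul_lt_mul_of_pos_right this (by positivity)
            _ = η / 2 := by field_simp
        have hw5 : ⟪b - a, w⟫ < η / 2 := by
          have : ‖b - a‖ * ‖w‖ ≤ ‖b - a‖ * c⁻¹ :=
            mul_le_mul_of_nonneg_left hwb (norm_nonneg _)
          linarith
        have hw6 : -(η / 2) < ⟪b - a, u⟫ := by
          have : ‖b - a‖ * ‖u‖ ≤ ‖b - a‖ * c⁻¹ :=
            mul_le_mul_of_nonneg_left hub (norm_nonneg _)
          linarith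
        -- combine: Fs a - η/2 ≤ ⟪b,u⟫ ≤ ⟪b,w⟫ ≤ Fs a - η + η/2
        have hchain : Fs a - η / 2 < Fs a - η + η / 2 := by
          have l1 : Fs a - η / 2 < ⟪b, u⟫ := by rw [h3, hbu]; linarith
          have l2 : ⟪b, w⟫ < Fs a - η + η / 2 := by
            rw [h2]
            have : ⟪a, w⟫ ≤ Fs a - η := by rw [hη]; linarith
            linarith
          linarith
        linarith
    rw [Metric.eventually_nhds_iff]
    refine ⟨δ, hδpos, fun b hb => ?_⟩
    rw [dist_eq_norm] at hb
    obtain ⟨ub, hubS, hubmax, hubFs⟩ := hmax b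
    have hclose : ‖ub - u‖ < ε := hδ b hb ub hubS hubmax
    -- lower bound on error
    have hlow1 : 0 ≤ Fs b - Fs a - ⟪u, b - a⟫ := by
      have h1 : ⟪b, u⟫ ≤ Fs b := hubFs ▸ hubmax u huS
      have h2 : ⟪b, u⟫ = ⟪a, u⟫ + ⟪b - a, u⟫ := by rw [inner_sub_left]; ring
      have h3 : ⟪a, u⟫ = Fs a := huFs.symm
      have h4 : ⟪b - a, u⟫ = ⟪u, b - a⟫ := real_inner_comm _ _
      rw [h3, h4] at h2
      linarith
    -- upper bound on error
    have hup1 : Fs b - Fs a - ⟪u, b - a⟫ ≤ ε * ‖b - a‖ := by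
      have h1 : ⟪a, ub⟫ ≤ Fs a := huFs ▸ humax ub hubS
      have h2 : Fs b = ⟪a, ub⟫ + ⟪b - a, ub⟫ := by
        rw [hubFs, inner_sub_left]; ring
      have h3 : ⟪b - a, ub⟫ - ⟪b - a, u⟫ = ⟪b - a, ub - u⟫ := by
        rw [inner_sub_right]
      have h4 : ⟪b - a, ub - u⟫ ≤ ‖b - a‖ * ‖ub - u‖ := real_inner_le_norm _ _
      have h5 : ‖b - a‖ * ‖ub - u‖ ≤ ‖b - a‖ * ε :=
        mul_le_mul_of_nonneg_left hclose.le (norm_nonneg _)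
      have h6 : ⟪b - a, u⟫ = ⟪u, b - a⟫ := real_inner_comm _ _
      nlinarith [mul_comm ‖b - a‖ ε]
    have habs : |Fs b - Fs a - ⟪u, b - a⟫| ≤ ε * ‖b - a‖ := by
      rw [abs_of_nonneg hlow1]; exact hup1
    simpa [Real.norm_eq_abs] using habs
  -- gradient of Fs²
  have hfd : HasFDerivAt Fs (InnerProductSpace.toDual ℝ V u) a := hgrad.hasFDerivAt
  have hfd2 : HasFDerivAt (fun b => Fs b ^ 2)
      ((2 * Fs a) • (InnerProductSpace.toDual ℝ V u : V →L[ℝ] ℝ)) a := by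
    have h := hfd.mul hfd
    have heq : (fun b => Fs b ^ 2) = fun b => Fs b * Fs b := by
      funext b; ring
    rw [heq]
    refine h.congr_fderiv ?_
    rw [two_mul, add_smul]
  have hgrad2 : HasGradientAt (fun b => Fs b ^ 2) ((2 * Fs a) • u) a := by
    rw [hasGradientAt_iff_hasFDerivAt, map_smul]
    exact hfd2
  have hg : gradient (fun b => Fs b ^ 2) a = (2 * Fs a) • u := hgrad2.gradient
  have hval : (2 * Fs a)⁻¹ • gradient (fun b => Fs b ^ 2) a = u := by
    rw [hg, smul_smul, inv_mul_cancel₀ (by positivity), one_smul]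
  rw [hval]
  exact ⟨huS, fun y hy => humax y hy, fun z hz hzmax => huniq z hz (fun y hy => hzmax y hy)⟩
end

section
/- Let F be an asymmetric norm on a finite-dimensional inner product space V that is strongly convex with respect to √(γ/2)‖·‖. Then the map α ↦ d(F_*²)(α) from V* to V is Lipschitz with Lipschitz constant 4/γ. -/
open scoped RealInnerProductSpace

/-- If `F` is a strongly convex asymmetric norm with respect to `√(γ/2)‖·‖`, then the map
`α ↦ d(F_*²)(α)` (with the dual space identified with `V` via the inner product) is
Lipschitz with Lipschitz constant `4/γ`. -/
theorem gradient_dual_sq_lipschitz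
    {V : Type*} [NormedAddCommGroup V] [InnerProductSpace ℝ V] [FiniteDimensional ℝ V]
    (F : V → ℝ) (γ : ℝ) (hγ : 0 < γ)
    (hF_nonneg : ∀ y, 0 ≤ F y)
    (hF_zero : ∀ y, F y = 0 → y = 0)
    (hF_homog : ∀ (μ : ℝ) (y : V), 0 ≤ μ → F (μ • y) = μ * F y)
    (hF_triangle : ∀ y z, F (y + z) ≤ F y + F z)
    (hsc : ∀ (y z a : V),
      (∀ w, F w ^ 2 ≥ F y ^ 2 + ⟪a, w - y⟫) →
      F z ^ 2 ≥ F y ^ 2 + ⟪a, z - y⟫ + γ / 2 * ‖z - y‖ ^ 2)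
    (Fs : V → ℝ)
    (hFs : ∀ a : V, Fs a = sSup ((fun y => ⟪a, y⟫) '' {y : V | F y = 1})) :
    LipschitzWith (Real.toNNReal (4 / γ)) (fun a => gradient (fun b => Fs b ^ 2) a) := by
  have hF0 : F 0 = 0 := by simpa using hF_homog 0 0 le_rfl
  -- coercivity
  have hcoer : ∀ z : V, γ / 2 * ‖z‖ ^ 2 ≤ F z ^ 2 := by
    intro z
    have h := hsc 0 z 0 (by
      intro w
      simp only [hF0, inner_zero_left]
      nlinarith [sq_nonneg (F w)])
    simpa [hF0] using h
  -- convexity and continuity of F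
  have hconv : ConvexOn ℝ Set.univ F := by
    refine ⟨convex_univ, ?_⟩
    intro x _ y _ s t hs ht hst
    calc F (s • x + t • y) ≤ F (s • x) + F (t • y) := hF_triangle _ _
      _ = s * F x + t * F y := by rw [hF_homog s x hs, hF_homog t y ht]
  have hFcont : Continuous F := by
    exact continuousOn_univ.mp (hconv.continuousOn isOpen_univ)
  -- global maximizer of w ↦ ⟪a,w⟫ - F w ^ 2
  have hexists : ∀ a : V, ∃ y : V, ∀ w : V, ⟪a, w⟫ - F w ^ 2 ≤ ⟪a, y⟫ - F y ^ 2 := by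
    intro a
    set φ : V → ℝ := fun w => ⟪a, w⟫ - F w ^ 2 with hφ
    have hφcont : Continuous φ := (continuous_const.inner continuous_id).sub (hFcont.pow 2)
    obtain ⟨R, hR⟩ : ∃ R : ℝ, R = 2 * ‖a‖ / γ + 1 := ⟨_, rfl⟩
    have hK : IsCompact (Metric.closedBall (0 : V) R) := isCompact_closedBall 0 R
    have h0K : (0 : V) ∈ Metric.closedBall (0 : V) R := by
      simp only [Metric.mem_closedBall, dist_zero_right, norm_zero, hR]
      positivity
    obtain ⟨y0, hy0K, hy0max⟩ := hK.exists_isMaxOn ⟨0, h0K⟩ hφcont.continuousOn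
    have hmax' : ∀ v ∈ Metric.closedBall (0 : V) R, ⟪a, v⟫ - F v ^ 2 ≤ ⟪a, y0⟫ - F y0 ^ 2 :=
      fun v hv => hy0max hv
    refine ⟨y0, fun w => ?_⟩
    by_cases hw : w ∈ Metric.closedBall (0 : V) R
    · exact hmax' w hw
    · have hwn : R < ‖w‖ := by
        simpa [Metric.mem_closedBall, dist_zero_right] using not_le.1 (by simpa using hw)
      have h1 : ⟪a, w⟫ - F w ^ 2 ≤ ‖a‖ * ‖w‖ - γ / 2 * ‖w‖ ^ 2 := by
        have := real_inner_le_norm a w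
        have := hcoer w
        nlinarith
      have h2 : ⟪a, w⟫ - F w ^ 2 ≤ 0 := by
        have hwn' : 2 * ‖a‖ / γ < ‖w‖ := by
          have h01 : (0:ℝ) < 1 := one_pos
          linarith [hwn, hR]
        have hkey : 2 * ‖a‖ < γ * ‖w‖ := by
          rw [div_lt_iff₀ hγ] at hwn'; linarith
        nlinarith [norm_nonneg w, norm_nonneg a]
      have h3 : ⟪a, (0:V)⟫ - F 0 ^ 2 ≤ ⟪a, y0⟫ - F y0 ^ 2 := hmax' 0 h0K
      simp only [inner_zero_right, hF0] at h3
      have h4 : (0:ℝ) - 0 ^ 2 = 0 := by norm_num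
      linarith
  choose y hy using hexists
  -- a is a subgradient of F² at y a
  have hsub : ∀ a w : V, F w ^ 2 ≥ F (y a) ^ 2 + ⟪a, w - y a⟫ := by
    intro a w
    have := hy a w
    rw [inner_sub_right]
    linarith
  have hstrong : ∀ a z : V,
      F z ^ 2 ≥ F (y a) ^ 2 + ⟪a, z - y a⟫ + γ / 2 * ‖z - y a‖ ^ 2 :=
    fun a z => hsc (y a) z a (hsub a)
  -- strong monotonicity and Lipschitz property of y
  have hyLip : ∀ a b : V, ‖y a - y b‖ ≤ 1 / γ * ‖a - b‖ := by
    intro a b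
    have h1 := hstrong a (y b)
    have h2 := hstrong b (y a)
    have hmono : γ * ‖y a - y b‖ ^ 2 ≤ ⟪a - b, y a - y b⟫ := by
      have e1 : ⟪a, y b - y a⟫ = -⟪a, y a - y b⟫ := by
        rw [← inner_neg_right]; congr 1; abel
      have e2 : ⟪a - b, y a - y b⟫ = ⟪a, y a - y b⟫ - ⟪b, y a - y b⟫ := by
        rw [inner_sub_left]
      have e3 : ‖y b - y a‖ = ‖y a - y b‖ := norm_sub_rev _ _
      rw [e3] at h1
      rw [e1] at h1
      linarith
    have hip := real_inner_le_norm (a - b) (y a - y b)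
    rcases eq_or_lt_of_le (norm_nonneg (y a - y b)) with h | h
    · rw [← h]; positivity
    · have key : γ * ‖y a - y b‖ ≤ ‖a - b‖ := by nlinarith
      rw [show (1:ℝ) / γ * ‖a - b‖ = ‖a - b‖ / γ by ring, le_div_iff₀ hγ, mul_comm]
      exact key
  -- the conjugate-type function h
  obtain ⟨h, hh⟩ : ∃ h : V → ℝ, h = fun a => ⟪a, y a⟫ - F (y a) ^ 2 := ⟨_, rfl⟩
  have hmax : ∀ a w : V, ⟪a, w⟫ - F w ^ 2 ≤ h a := by
    intro a w; rw [hh]; exact hy a w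
  have hnonneg : ∀ a : V, 0 ≤ h a := by
    intro a
    have := hmax a 0
    simp only [inner_zero_right, hF0] at this
    linarith
  -- two-sided expansion of h
  have hlow : ∀ a b : V, h a + ⟪b - a, y a⟫ ≤ h b := by
    intro a b
    have h1 := hmax b (y a)
    have e : ⟪b - a, y a⟫ = ⟪b, y a⟫ - ⟪a, y a⟫ := inner_sub_left _ _ _
    have e2 : h a = ⟪a, y a⟫ - F (y a) ^ 2 := by rw [hh]
    linarith
  have hup : ∀ a b : V, h b ≤ h a + ⟪b - a, y a⟫ + 1 / γ * ‖b - a‖ ^ 2 := by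
    intro a b
    have h1 := hmax a (y b)
    have e : ⟪b, y b⟫ - ⟪a, y b⟫ = ⟪b - a, y b⟫ := (inner_sub_left _ _ _).symm
    have e2 : ⟪b - a, y b⟫ = ⟪b - a, y a⟫ + ⟪b - a, y b - y a⟫ := by
      rw [← inner_add_right]; congr 1; abel
    have hip : ⟪b - a, y b - y a⟫ ≤ ‖b - a‖ * ‖y b - y a‖ := real_inner_le_norm _ _
    have hyl : ‖y b - y a‖ ≤ 1 / γ * ‖b - a‖ := hyLip b a
    have hnn : (0:ℝ) ≤ ‖b - a‖ := norm_nonneg _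
    have h5 : ‖b - a‖ * ‖y b - y a‖ ≤ 1 / γ * ‖b - a‖ ^ 2 := by nlinarith
    have e3 : h b = ⟪b, y b⟫ - F (y b) ^ 2 := by rw [hh]
    nlinarith
  -- h has gradient y a at a
  have hgradh : ∀ a : V, HasGradientAt h (y a) a := by
    intro a
    rw [hasGradientAt_iff_isLittleO]
    rw [Asymptotics.isLittleO_iff]
    intro c hc
    have hev : ∀ᶠ b in nhds a, ‖b - a‖ ≤ c * γ := by
      have : Metric.ball a (c * γ) ∈ nhds a := Metric.ball_mem_nhds a (by positivity)
      filter_upwards [this] with b hb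
      rw [Metric.mem_ball, dist_eq_norm] at hb
      exact hb.le
    filter_upwards [hev] with b hb
    have h1 := hlow a b
    have h2 := hup a b
    have e : h b - h a - ⟪y a, b - a⟫ = h b - (h a + ⟪b - a, y a⟫) := by
      rw [real_inner_comm]; ring
    rw [Real.norm_eq_abs, abs_le]
    constructor
    · rw [e]; have := norm_nonneg (b - a); nlinarith [mul_nonneg hc.le (norm_nonneg (b - a))]
    · rw [e]
      have h3 : 1 / γ * ‖b - a‖ ^ 2 ≤ c * ‖b - a‖ := by
        have hnn : (0:ℝ) ≤ ‖b - a‖ := norm_nonneg _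
        have : ‖b - a‖ * ‖b - a‖ ≤ (c * γ) * ‖b - a‖ := by nlinarith
        rw [div_mul_eq_mul_div, div_le_iff₀ hγ]        
        nlinarith
      linarith
  -- Fs² = 4 h
  have hFs0 : ∀ a : V, 0 ≤ Fs a := by
    intro a
    rcases eq_or_ne a 0 with rfl | ha
    · rcases Set.eq_empty_or_nonempty ({y : V | F y = 1}) with he | ⟨u, hu⟩
      · simp [hFs, he]
      · rw [hFs]
        have himg : (fun y => ⟪(0:V), y⟫) '' {y : V | F y = 1} = {0} := by
          ext x
          constructor
          · rintro ⟨v, _, rfl⟩; simp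
          · rintro rfl; exact ⟨u, hu, by simp⟩
        rw [himg, csSup_singleton]
    · have hFa : 0 < F a := lt_of_le_of_ne (hF_nonneg a) (fun hc => ha (hF_zero a hc.symm))
      have hmem : (F a)⁻¹ • a ∈ {y : V | F y = 1} := by
        simp only [Set.mem_setOf_eq]
        rw [hF_homog _ _ (by positivity)]
        field_simp
      have hbdd : BddAbove ((fun y => ⟪a, y⟫) '' {y : V | F y = 1}) := by
        refine ⟨‖a‖ * Real.sqrt (2 / γ), ?_⟩
        rintro x ⟨v, hv, rfl⟩
        have hv1 : γ / 2 * ‖v‖ ^ 2 ≤ 1 := by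
          have := hcoer v
          simp only [Set.mem_setOf_eq] at hv
          rw [hv] at this; simpa using this
        have hvn : ‖v‖ ≤ Real.sqrt (2 / γ) := by
          rw [show (2:ℝ)/γ = (2/γ) from rfl, ← Real.sqrt_sq (norm_nonneg v)]
          apply Real.sqrt_le_sqrt
          rw [le_div_iff₀ hγ] at *
          nlinarith
        calc ⟪a, v⟫ ≤ ‖a‖ * ‖v‖ := real_inner_le_norm a v
          _ ≤ ‖a‖ * Real.sqrt (2 / γ) := by
              exact mul_le_mul_of_nonneg_left hvn (norm_nonneg a)
      rw [hFs]
      refine le_trans ?_ (le_csSup hbdd ⟨_, hmem, rfl⟩)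
      show (0:ℝ) ≤ ⟪a, (F a)⁻¹ • a⟫
      rw [real_inner_smul_right]
      have : (0:ℝ) ≤ ⟪a, a⟫ := real_inner_self_nonneg
      positivity
  have hbdd : ∀ a : V, BddAbove ((fun y => ⟪a, y⟫) '' {y : V | F y = 1}) := by
    intro a
    refine ⟨‖a‖ * Real.sqrt (2 / γ), ?_⟩
    rintro x ⟨v, hv, rfl⟩
    have hv1 : γ / 2 * ‖v‖ ^ 2 ≤ 1 := by
      have := hcoer v
      simp only [Set.mem_setOf_eq] at hv
      rw [hv] at this; simpa using this
    have hvn : ‖v‖ ≤ Real.sqrt (2 / γ) := by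
      rw [← Real.sqrt_sq (norm_nonneg v)]
      apply Real.sqrt_le_sqrt
      rw [le_div_iff₀ hγ] at *
      nlinarith
    calc ⟪a, v⟫ ≤ ‖a‖ * ‖v‖ := real_inner_le_norm a v
      _ ≤ ‖a‖ * Real.sqrt (2 / γ) := mul_le_mul_of_nonneg_left hvn (norm_nonneg a)
  have hFs4 : ∀ a : V, Fs a ^ 2 = 4 * h a := by
    intro a
    -- upper bound : Fs a ≤ 2 √(h a)
    have hub : Fs a ≤ 2 * Real.sqrt (h a) := by
      rw [hFs]
      apply Real.sSup_le
      · rintro x ⟨v, hv, rfl⟩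
        show ⟪a, v⟫ ≤ 2 * Real.sqrt (h a)
        simp only [Set.mem_setOf_eq] at hv
        rcases le_or_gt ⟪a, v⟫ 0 with hav | hav
        · have := Real.sqrt_nonneg (h a); linarith
        · have hkey : ⟪a, v⟫ ^ 2 / 4 ≤ h a := by
            have := hmax a ((⟪a, v⟫ / 2) • v)
            rw [real_inner_smul_right, hF_homog _ _ (by positivity), hv] at this
            nlinarith
          rw [show (2:ℝ) * Real.sqrt (h a) = Real.sqrt (4 * h a) by
            rw [show (4:ℝ) * h a = 2^2 * h a by ring, Real.sqrt_mul (by positivity),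
              Real.sqrt_sq (by norm_num)]]
          rw [← Real.sqrt_sq hav.le]
          apply Real.sqrt_le_sqrt
          nlinarith
      · positivity
    -- lower bound : 4 h a ≤ Fs a ^ 2
    have hlb : 4 * h a ≤ Fs a ^ 2 := by
      rcases eq_or_ne (y a) 0 with h0 | h0
      · have : h a = 0 := by
          have h6 := hnonneg a
          have h7 : h a = ⟪a, y a⟫ - F (y a) ^ 2 := by rw [hh]
          rw [h0] at h7
          simp only [inner_zero_right, hF0] at h7
          linarith
        rw [this]
        nlinarith [sq_nonneg (Fs a)]
      · have hFy : 0 < F (y a) :=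
          lt_of_le_of_ne (hF_nonneg _) (fun hc => h0 (hF_zero _ hc.symm))
        set t : ℝ := F (y a) with ht
        have hmem : (t⁻¹ • y a) ∈ {y : V | F y = 1} := by
          simp only [Set.mem_setOf_eq]
          rw [hF_homog _ _ (by positivity)]
          field_simp
          exact ht.symm
        have hin : ⟪a, t⁻¹ • y a⟫ ≤ Fs a := by
          rw [hFs]
          exact le_csSup (hbdd a) ⟨_, hmem, rfl⟩
        rw [real_inner_smul_right] at hin
        have hiy : ⟪a, y a⟫ ≤ t * Fs a := by
          rw [inv_mul_le_iff₀ hFy] at hin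
          linarith [hin]
        have : h a ≤ t * Fs a - t ^ 2 := by
          have h7 : h a = ⟪a, y a⟫ - F (y a) ^ 2 := by rw [hh]
          rw [h7, ← ht]; nlinarith
        nlinarith [sq_nonneg (2 * t - Fs a)]
    have : Fs a ^ 2 ≤ 4 * h a := by
      have h2 : (2 * Real.sqrt (h a)) ^ 2 = 4 * h a := by
        rw [mul_pow, Real.sq_sqrt (hnonneg a)]; ring
      calc Fs a ^ 2 ≤ (2 * Real.sqrt (h a)) ^ 2 := by
            apply sq_le_sq'
            · have := Real.sqrt_nonneg (h a); linarith [hFs0 a]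
            · exact hub
        _ = 4 * h a := h2
    linarith
  -- gradient of Fs²
  have hgradFs : ∀ a : V, HasGradientAt (fun b => Fs b ^ 2) ((4:ℝ) • y a) a := by
    intro a
    have heq : (fun b => Fs b ^ 2) = fun b => 4 * h b := funext fun b => hFs4 b
    rw [heq]
    have hder := (hgradh a).hasFDerivAt.const_mul (4:ℝ)
    rw [hasGradientAt_iff_hasFDerivAt, map_smul]
    exact hder
  have hgrad : ∀ a : V, gradient (fun b => Fs b ^ 2) a = (4:ℝ) • y a :=
    fun a => (hgradFs a).gradient
  -- conclusion
  apply LipschitzWith.of_dist_le_mul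
  intro a b
  rw [hgrad a, hgrad b, dist_eq_norm, dist_eq_norm, ← smul_sub, norm_smul]
  have h1 : ‖y a - y b‖ ≤ 1 / γ * ‖a - b‖ := hyLip a b
  have h2 : ((Real.toNNReal (4 / γ)) : ℝ) = 4 / γ := Real.coe_toNNReal _ (by positivity)
  rw [h2]
  simp only [Real.norm_eq_abs, abs_of_nonneg (by norm_num : (0:ℝ) ≤ 4)]
  calc 4 * ‖y a - y b‖ ≤ 4 * (1 / γ * ‖a - b‖) := by linarith
    _ = 4 / γ * ‖a - b‖ := by ring
end

section
/- Let F be a strongly convex asymmetric norm on a finite-dimensional inner product space V (with respect to √(γ/2)‖·‖). Then the map α ↦ u(α) = d(F_*²)(α)/(2F_*(α)) from V*\{0} to the unit sphere S_F[0,1] is Lipschitz on every compact subset of V*\{0}. -/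
open scoped RealInnerProductSpace

set_option maxHeartbeats 1600000 in
/-- If `F` is a strongly convex asymmetric norm with respect to `√(γ/2)‖·‖`, then the map
`α ↦ u(α) = d(F_*²)(α)/(2F_*(α))` is Lipschitz on every compact subset of `V*\{0}`
(with the dual identified with `V` via the inner product). -/
theorem maximizer_lipschitz_on_compacts
    {V : Type*} [NormedAddCommGroup V] [InnerProductSpace ℝ V] [FiniteDimensional ℝ V]
    (F : V → ℝ) (γ : ℝ) (hγ : 0 < γ)
    (hF_nonneg : ∀ y, 0 ≤ F y)
    (hF_zero : ∀ y, F y = 0 → y = 0)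
    (hF_homog : ∀ (μ : ℝ) (y : V), 0 ≤ μ → F (μ • y) = μ * F y)
    (hF_triangle : ∀ y z, F (y + z) ≤ F y + F z)
    (hsc : ∀ (y z a : V),
      (∀ w, F w ^ 2 ≥ F y ^ 2 + ⟪a, w - y⟫) →
      F z ^ 2 ≥ F y ^ 2 + ⟪a, z - y⟫ + γ / 2 * ‖z - y‖ ^ 2)
    (Fs : V → ℝ)
    (hFs : ∀ a : V, Fs a = sSup ((fun y => ⟪a, y⟫) '' {y : V | F y = 1})) :
    ∀ K : Set V, IsCompact K → (0 : V) ∉ K →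
      ∃ 𝒦 > 0, ∀ a ∈ K, ∀ b ∈ K,
        ‖(2 * Fs a)⁻¹ • gradient (fun c => Fs c ^ 2) a
          - (2 * Fs b)⁻¹ • gradient (fun c => Fs c ^ 2) b‖ ≤ 𝒦 * ‖a - b‖ := by
  intro K hK hK0
  rcases K.eq_empty_or_nonempty with rfl | ⟨a₀, ha₀⟩
  · exact ⟨1, one_pos, by simp⟩
  have ha₀ne : a₀ ≠ 0 := fun h => hK0 (h ▸ ha₀)
  -- Basic facts about F
  have F0 : F 0 = 0 := by simpa using hF_homog 0 0 le_rfl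
  have Flb : ∀ z : V, γ / 2 * ‖z‖ ^ 2 ≤ F z ^ 2 := by
    intro z
    have h := hsc 0 z 0 (fun w => by simp [F0]; positivity)
    simpa [F0] using h
  have Fpos : ∀ z : V, z ≠ 0 → 0 < F z := by
    intro z hz
    rcases (hF_nonneg z).lt_or_eq with h | h
    · exact h
    · exact absurd (hF_zero z h.symm) hz
  have Fconv : ConvexOn ℝ (Set.univ : Set V) F := by
    refine ⟨convex_univ, fun x _ y _ s t hs ht hst => ?_⟩
    calc F (s • x + t • y) ≤ F (s • x) + F (t • y) := hF_triangle _ _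
      _ = s * F x + t * F y := by rw [hF_homog s x hs, hF_homog t y ht]
  have Fcont : Continuous F :=
    continuousOn_univ.mp (Fconv.continuousOn isOpen_univ)
  -- the function g a y = 2⟪a,y⟫ - F(y)² and its maximizers
  set g : V → V → ℝ := fun a y => 2 * ⟪a, y⟫ - F y ^ 2 with hg
  have gcont : ∀ a : V, Continuous (g a) := fun a =>
    (continuous_const.mul (continuous_const.inner continuous_id)).sub (Fcont.pow 2)
  have exY : ∀ a : V, ∃ y, ∀ w, g a w ≤ g a y := by
    intro a
    obtain ⟨y, hyB, hymax⟩ := (isCompact_closedBall (0 : V) (4 * ‖a‖ / γ + 1)).exists_isMaxOn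
      ⟨0, by simp; positivity⟩ (gcont a).continuousOn
    refine ⟨y, fun w => ?_⟩
    by_cases hw : w ∈ Metric.closedBall (0 : V) (4 * ‖a‖ / γ + 1)
    · exact hymax hw
    · have h0 : g a 0 ≤ g a y := hymax (by simp; positivity)
      have hg0 : g a 0 = 0 := by simp [hg, F0]
      have hwn : 4 * ‖a‖ / γ + 1 < ‖w‖ := by
        simpa [Metric.mem_closedBall, dist_zero_right] using hw
      have hib : ⟪a, w⟫ ≤ ‖a‖ * ‖w‖ := real_inner_le_norm a w
      have hfl := Flb w
      have ha' : ‖a‖ ≤ γ * ‖w‖ / 4 := by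
        have h4 : 4 * ‖a‖ < ‖w‖ * γ := by
          have := (div_lt_iff₀ hγ).mp (by linarith : 4 * ‖a‖ / γ < ‖w‖)
          linarith
        linarith
      have : g a w ≤ 0 := by
        simp only [hg]
        nlinarith [mul_le_mul_of_nonneg_right ha' (norm_nonneg w), norm_nonneg a,
          norm_nonneg w]
      linarith
  choose Y hY using exY
  have hkey : ∀ a w : V, F (Y a) ^ 2 + 2 * ⟪a, w - Y a⟫ ≤ F w ^ 2 := by
    intro a w
    have h := hY a w
    rw [inner_sub_right]
    simp only [hg] at h
    linarith
  have hstrong : ∀ a z : V,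
      F (Y a) ^ 2 + 2 * ⟪a, z - Y a⟫ + γ / 2 * ‖z - Y a‖ ^ 2 ≤ F z ^ 2 := by
    intro a z
    have h := hsc (Y a) z ((2 : ℝ) • a) (fun w => by
      have := hkey a w
      rw [real_inner_smul_left]
      linarith)
    rw [real_inner_smul_left] at h
    linarith
  have hYlip : ∀ a b : V, ‖Y a - Y b‖ ≤ 2 / γ * ‖a - b‖ := by
    intro a b
    have h1 := hstrong a (Y b)
    have h2 := hstrong b (Y a)
    have hsym : ‖Y b - Y a‖ = ‖Y a - Y b‖ := norm_sub_rev _ _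
    have hinn : ⟪a - b, Y a - Y b⟫ ≤ ‖a - b‖ * ‖Y a - Y b‖ := real_inner_le_norm _ _
    have e1 : ⟪a, Y b - Y a⟫ = ⟪a, Y b⟫ - ⟪a, Y a⟫ := inner_sub_right _ _ _
    have e2 : ⟪b, Y a - Y b⟫ = ⟪b, Y a⟫ - ⟪b, Y b⟫ := inner_sub_right _ _ _
    have e3 : ⟪a - b, Y a - Y b⟫ = ⟪a, Y a⟫ - ⟪a, Y b⟫ - ⟪b, Y a⟫ + ⟪b, Y b⟫ := by
      simp [inner_sub_left, inner_sub_right]; ring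
    have hq : γ * ‖Y a - Y b‖ ^ 2 ≤ 2 * (‖a - b‖ * ‖Y a - Y b‖) := by
      rw [hsym] at h1
      nlinarith
    rcases (norm_nonneg (Y a - Y b)).lt_or_eq with hn | hn
    · rw [div_mul_eq_mul_div, le_div_iff₀ hγ]
      nlinarith
    · rw [← hn]; positivity
  -- the unit sphere S and maximizers on it
  have hSne : ∃ y : V, F y = 1 := by
    refine ⟨(F a₀)⁻¹ • a₀, ?_⟩
    rw [hF_homog _ _ (inv_nonneg.mpr (Fpos a₀ ha₀ne).le)]
    exact inv_mul_cancel₀ (Fpos a₀ ha₀ne).ne'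
  have hSbd : ∀ y : V, F y = 1 → ‖y‖ ≤ Real.sqrt (2 / γ) := by
    intro y hy
    rw [Real.le_sqrt (norm_nonneg y)]
    have h := Flb y
    rw [hy] at h
    rw [le_div_iff₀ hγ]
    nlinarith
    positivity
  have hScpt : IsCompact {y : V | F y = 1} := by
    refine (isCompact_closedBall (0 : V) (Real.sqrt (2 / γ))).of_isClosed_subset
      (isClosed_singleton.preimage Fcont) ?_
    intro y hy
    simpa [Metric.mem_closedBall, dist_zero_right] using hSbd y hy
  have exZ : ∀ a : V, ∃ z, F z = 1 ∧ ∀ y, F y = 1 → ⟪a, y⟫ ≤ ⟪a, z⟫ := by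
    intro a
    have hc : Continuous fun y : V => (⟪a, y⟫ : ℝ) := continuous_const.inner continuous_id
    obtain ⟨z, hz, hzmax⟩ := hScpt.exists_isMaxOn (by exact hSne) hc.continuousOn
    exact ⟨z, hz, fun y hy => hzmax hy⟩
  choose Z hZ1 hZmax using exZ
  have hFs_eq : ∀ a : V, Fs a = ⟪a, Z a⟫ := by
    intro a
    rw [hFs]
    refine IsGreatest.csSup_eq ⟨⟨Z a, hZ1 a, rfl⟩, ?_⟩
    rintro x ⟨y, hy, rfl⟩
    exact hZmax a y hy
  have hFs_pos : ∀ a : V, a ≠ 0 → 0 < Fs a := by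
    intro a ha
    have hFa : 0 < F a := Fpos a ha
    have hmem : F ((F a)⁻¹ • a) = 1 := by
      rw [hF_homog _ _ (inv_nonneg.mpr hFa.le)]
      exact inv_mul_cancel₀ hFa.ne'
    have := hZmax a _ hmem
    rw [hFs_eq]
    refine lt_of_lt_of_le ?_ this
    rw [real_inner_smul_right, real_inner_self_eq_norm_sq]
    have : 0 < ‖a‖ := norm_pos_iff.mpr ha
    positivity
  have hFs_lip : ∀ a b : V, Fs a - Fs b ≤ Real.sqrt (2 / γ) * ‖a - b‖ := by
    intro a b
    have h1 : Fs a = ⟪b, Z a⟫ + ⟪a - b, Z a⟫ := by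
      rw [hFs_eq, inner_sub_left]; ring
    have h2 : ⟪b, Z a⟫ ≤ Fs b := by rw [hFs_eq]; exact hZmax b _ (hZ1 a)
    have h3 : ⟪a - b, Z a⟫ ≤ ‖a - b‖ * ‖Z a‖ := real_inner_le_norm _ _
    have h4 : ‖Z a‖ ≤ Real.sqrt (2 / γ) := hSbd _ (hZ1 a)
    nlinarith [norm_nonneg (a - b)]
  have hFs_cont : Continuous Fs := by
    have hs0 : 0 ≤ Real.sqrt (2 / γ) := Real.sqrt_nonneg _
    refine (LipschitzWith.of_dist_le_mul (K := Real.toNNReal (Real.sqrt (2 / γ)))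
      (fun a b => ?_)).continuous
    rw [Real.dist_eq, dist_eq_norm, Real.coe_toNNReal _ hs0]
    rw [abs_sub_le_iff]
    exact ⟨hFs_lip a b, by rw [← norm_sub_rev]; exact hFs_lip b a⟩
  -- Fs a ^ 2 = g a (Y a)
  have hgY0 : ∀ a : V, 0 ≤ g a (Y a) := by
    intro a
    have := hY a 0
    simp only [hg, inner_zero_right, F0] at this ⊢
    linarith
  have hFs2 : ∀ a : V, Fs a ^ 2 = g a (Y a) := by
    intro a
    rcases eq_or_ne a 0 with rfl | ha
    · have hFs0 : Fs 0 = 0 := by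
        rw [hFs_eq]; simp
      have hY00 : F (Y 0) = 0 := by
        have h := hY 0 0
        simp only [hg, inner_zero_left, F0] at h
        have h2 : F (Y 0) ^ 2 ≤ 0 := by linarith
        nlinarith [hF_nonneg (Y 0), sq_nonneg (F (Y 0))]
      simp [hg, hFs0, hY00]
    · have hFsa := hFs_pos a ha
      have le1 : Fs a ^ 2 ≤ g a (Y a) := by
        have h := hY a (Fs a • Z a)
        have hin : ⟪a, Fs a • Z a⟫ = Fs a * Fs a := by
          rw [real_inner_smul_right, ← hFs_eq]
        have hF' : F (Fs a • Z a) = Fs a := by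
          rw [hF_homog _ _ hFsa.le, hZ1 a, mul_one]
        simp only [hg, hin, hF'] at h
        simp only [hg]
        nlinarith
      have le2 : g a (Y a) ≤ Fs a ^ 2 := by
        rcases eq_or_ne (Y a) 0 with h0 | h0
        · simp only [hg, h0, inner_zero_right, F0]
          nlinarith
        · have hs : 0 < F (Y a) := Fpos _ h0
          have hu : F ((F (Y a))⁻¹ • Y a) = 1 := by
            rw [hF_homog _ _ (inv_nonneg.mpr hs.le)]
            exact inv_mul_cancel₀ hs.ne'
          have hle : ⟪a, (F (Y a))⁻¹ • Y a⟫ ≤ Fs a := by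
            rw [hFs_eq]; exact hZmax a _ hu
          rw [real_inner_smul_right] at hle
          have hYa : ⟪a, Y a⟫ ≤ F (Y a) * Fs a := by
            have := mul_le_mul_of_nonneg_left hle hs.le
            rw [← mul_assoc, mul_inv_cancel₀ hs.ne', one_mul] at this
            linarith
          simp only [hg]
          nlinarith [sq_nonneg (Fs a - F (Y a))]
      linarith
  -- gradient computation
  have hgrad : ∀ a : V, HasGradientAt (fun c => Fs c ^ 2) ((2 : ℝ) • Y a) a := by
    intro a
    rw [hasGradientAt_iff_isLittleO, Asymptotics.isLittleO_iff]
    intro ε hε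
    have hr : 0 < ε * γ / 4 := by positivity
    filter_upwards [Metric.ball_mem_nhds a hr] with b hb
    have hb' : ‖b - a‖ < ε * γ / 4 := by
      rwa [Metric.mem_ball, dist_eq_norm] at hb
    have hinn : ⟪(2 : ℝ) • Y a, b - a⟫ = 2 * ⟪b - a, Y a⟫ := by
      rw [real_inner_smul_left, real_inner_comm]
    have e1 : ⟪b - a, Y a⟫ = ⟪b, Y a⟫ - ⟪a, Y a⟫ := inner_sub_left _ _ _
    have e2 : ⟪b - a, Y b⟫ = ⟪b, Y b⟫ - ⟪a, Y b⟫ := inner_sub_left _ _ _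
    have h1 : 0 ≤ Fs b ^ 2 - Fs a ^ 2 - ⟪(2 : ℝ) • Y a, b - a⟫ := by
      have h := hY b (Y a)
      simp only [hg] at h
      rw [hFs2 a, hFs2 b, hinn]
      simp only [hg]
      linarith
    have h2 : Fs b ^ 2 - Fs a ^ 2 - ⟪(2 : ℝ) • Y a, b - a⟫ ≤ 4 / γ * ‖b - a‖ ^ 2 := by
      have h := hY a (Y b)
      simp only [hg] at h
      have hie : ⟪b - a, Y b - Y a⟫ ≤ ‖b - a‖ * ‖Y b - Y a‖ := real_inner_le_norm _ _
      have hl : ‖Y b - Y a‖ ≤ 2 / γ * ‖b - a‖ := hYlip b a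
      have e3 : ⟪b - a, Y b - Y a⟫ = ⟪b - a, Y b⟫ - ⟪b - a, Y a⟫ := inner_sub_right _ _ _
      rw [hFs2 a, hFs2 b, hinn]
      simp only [hg]
      have hnn : (0:ℝ) ≤ ‖b - a‖ := norm_nonneg _
      have hm : ‖b - a‖ * ‖Y b - Y a‖ ≤ ‖b - a‖ * (2 / γ * ‖b - a‖) :=
        mul_le_mul_of_nonneg_left hl hnn
      have he : 4 / γ * ‖b - a‖ ^ 2 = 2 * (‖b - a‖ * (2 / γ * ‖b - a‖)) := by ring
      linarith
    rw [Real.norm_eq_abs, abs_of_nonneg h1]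
    have hnn : (0:ℝ) ≤ ‖b - a‖ := norm_nonneg _
    have h5 : ‖b - a‖ * ‖b - a‖ ≤ ‖b - a‖ * (ε * γ / 4) :=
      mul_le_mul_of_nonneg_left hb'.le hnn
    have h6 : 4 / γ * (‖b - a‖ * (ε * γ / 4)) = ε * ‖b - a‖ := by
      field_simp
    have h7 : 4 / γ * ‖b - a‖ ^ 2 ≤ 4 / γ * (‖b - a‖ * (ε * γ / 4)) := by
      have h40 : (0:ℝ) ≤ 4 / γ := by positivity
      have := mul_le_mul_of_nonneg_left h5 h40
      nlinarith
    linarith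
  have hgradEq : ∀ a : V, gradient (fun c => Fs c ^ 2) a = (2 : ℝ) • Y a := fun a =>
    (hgrad a).gradient
  -- final assembly
  obtain ⟨RK, hRKsub⟩ := hK.isBounded.subset_closedBall 0
  have hRK : ∀ a ∈ K, ‖a‖ ≤ RK := fun a ha => by
    simpa [Metric.mem_closedBall, dist_zero_right] using hRKsub ha
  have hRK0 : 0 ≤ RK := le_trans (norm_nonneg a₀) (hRK a₀ ha₀)
  obtain ⟨am, hamK, hammin⟩ := hK.exists_isMinOn ⟨a₀, ha₀⟩ hFs_cont.continuousOn
  set c := Fs am with hcdef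
  have hcpos : 0 < c := hFs_pos am (fun h => hK0 (h ▸ hamK))
  have hclb : ∀ a ∈ K, c ≤ Fs a := fun a ha => hammin ha
  have hYbd : ∀ a ∈ K, ‖Y a‖ ≤ 4 * RK / γ := by
    intro a ha
    have h0 := hgY0 a
    have hfl := Flb (Y a)
    have hib : ⟪a, Y a⟫ ≤ ‖a‖ * ‖Y a‖ := real_inner_le_norm _ _
    rcases (norm_nonneg (Y a)).lt_or_eq with hn | hn
    · have h1 : γ / 2 * ‖Y a‖ ^ 2 ≤ 2 * (‖a‖ * ‖Y a‖) := by
        simp only [hg] at h0; nlinarith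
      have h2 : γ / 2 * ‖Y a‖ ≤ 2 * ‖a‖ := by nlinarith
      have h3 := hRK a ha
      rw [le_div_iff₀ hγ]
      nlinarith
    · rw [← hn]
      positivity
  set B := 4 * RK / γ with hBdef
  set L := 2 / γ with hLdef
  set R0 := Real.sqrt (2 / γ) with hR0def
  have hcinv : (0:ℝ) < c⁻¹ := inv_pos.mpr hcpos
  have hL0 : 0 < L := div_pos two_pos hγ
  have hR00 : 0 ≤ R0 := Real.sqrt_nonneg _
  have hB0 : 0 ≤ B := div_nonneg (by linarith) hγ.le
  have hK1 : (0:ℝ) < c⁻¹ * L + c⁻¹ * c⁻¹ * R0 * B + 1 := by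
    have p1 : 0 < c⁻¹ * L := mul_pos hcinv hL0
    have p2 : 0 ≤ c⁻¹ * c⁻¹ * R0 * B :=
      mul_nonneg (mul_nonneg (mul_nonneg hcinv.le hcinv.le) hR00) hB0
    linarith
  refine ⟨c⁻¹ * L + c⁻¹ * c⁻¹ * R0 * B + 1, hK1, fun a ha b hb => ?_⟩
  have hFsa : 0 < Fs a := lt_of_lt_of_le hcpos (hclb a ha)
  have hFsb : 0 < Fs b := lt_of_lt_of_le hcpos (hclb b hb)
  rw [hgradEq a, hgradEq b]
  have hsa : (2 * Fs a)⁻¹ • ((2:ℝ) • Y a) = (Fs a)⁻¹ • Y a := by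
    rw [smul_smul]
    congr 1
    field_simp
  have hsb : (2 * Fs b)⁻¹ • ((2:ℝ) • Y b) = (Fs b)⁻¹ • Y b := by
    rw [smul_smul]
    congr 1
    field_simp
  rw [hsa, hsb]
  have hsplit : (Fs a)⁻¹ • Y a - (Fs b)⁻¹ • Y b
      = (Fs a)⁻¹ • (Y a - Y b) + ((Fs a)⁻¹ - (Fs b)⁻¹) • Y b := by
    rw [smul_sub, sub_smul]
    abel
  rw [hsplit]
  have hia : (Fs a)⁻¹ ≤ c⁻¹ := inv_anti₀ hcpos (hclb a ha)
  have hib' : (Fs b)⁻¹ ≤ c⁻¹ := inv_anti₀ hcpos (hclb b hb)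
  have t1 : ‖(Fs a)⁻¹ • (Y a - Y b)‖ ≤ c⁻¹ * (L * ‖a - b‖) := by
    rw [norm_smul, Real.norm_eq_abs, abs_of_nonneg (inv_nonneg.mpr hFsa.le)]
    exact mul_le_mul hia (hYlip a b) (norm_nonneg _) hcinv.le
  have habs : |Fs b - Fs a| ≤ R0 * ‖a - b‖ := by
    rw [abs_sub_le_iff]
    constructor
    · have h := hFs_lip b a
      rwa [norm_sub_rev] at h
    · exact hFs_lip a b
  have t2 : ‖((Fs a)⁻¹ - (Fs b)⁻¹) • Y b‖ ≤ R0 * ‖a - b‖ * (c⁻¹ * c⁻¹) * B := by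
    rw [norm_smul, Real.norm_eq_abs]
    have hdiff : (Fs a)⁻¹ - (Fs b)⁻¹ = (Fs b - Fs a) * ((Fs a)⁻¹ * (Fs b)⁻¹) := by
      field_simp
    have hprod : |(Fs a)⁻¹ * (Fs b)⁻¹| ≤ c⁻¹ * c⁻¹ := by
      rw [abs_mul, abs_of_nonneg (inv_nonneg.mpr hFsa.le),
        abs_of_nonneg (inv_nonneg.mpr hFsb.le)]
      exact mul_le_mul hia hib' (inv_nonneg.mpr hFsb.le) hcinv.le
    have habs2 : |(Fs a)⁻¹ - (Fs b)⁻¹| ≤ R0 * ‖a - b‖ * (c⁻¹ * c⁻¹) := by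
      rw [hdiff, abs_mul]
      exact mul_le_mul habs hprod (abs_nonneg _)
        (by positivity)
    exact mul_le_mul habs2 (hYbd b hb) (norm_nonneg _)
      (by positivity)
  calc ‖(Fs a)⁻¹ • (Y a - Y b) + ((Fs a)⁻¹ - (Fs b)⁻¹) • Y b‖
      ≤ ‖(Fs a)⁻¹ • (Y a - Y b)‖ + ‖((Fs a)⁻¹ - (Fs b)⁻¹) • Y b‖ := norm_add_le _ _
    _ ≤ c⁻¹ * (L * ‖a - b‖) + R0 * ‖a - b‖ * (c⁻¹ * c⁻¹) * B := add_le_add t1 t2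
    _ ≤ (c⁻¹ * L + c⁻¹ * c⁻¹ * R0 * B + 1) * ‖a - b‖ := by nlinarith [norm_nonneg (a - b)]
end

section
/- Let F be an asymmetric norm on ℝⁿ with r_M = max_{‖y‖=1} F(y) and r_m = min_{‖y‖=1} F(y). Fix v with ‖v‖ ∈ [1/2, 2r_M/r_m] and let ε ∈ (0, r_m‖v‖/(4n·r_M)]. Then for every w ∈ B_{‖·‖}[v, ε] and every t > 0, F²(w + t·v/‖v‖) - F²(w) > (r_m²/32)·t, and for t ∈ (0,1) additionally F²(w + t·v/‖v‖) - F²(w) < ((2r_m·r_M³ + 12r_M⁴)/r_m²)·t. -/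
set_option maxHeartbeats 2000000


/-- Almost radial growth rates of `F²` for an asymmetric norm `F` on `ℝⁿ`. -/
theorem almost_radial_growth_of_sq
    (n : ℕ) (F : EuclideanSpace ℝ (Fin n) → ℝ)
    (hF_nonneg : ∀ y, 0 ≤ F y)
    (hF_zero : ∀ y, F y = 0 → y = 0)
    (hF_homog : ∀ (μ : ℝ) (y : EuclideanSpace ℝ (Fin n)), 0 ≤ μ → F (μ • y) = μ * F y)
    (hF_triangle : ∀ y z, F (y + z) ≤ F y + F z)
    (rM rm : ℝ)
    (hrM : IsGreatest (F '' {y : EuclideanSpace ℝ (Fin n) | ‖y‖ = 1}) rM)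
    (hrm : IsLeast (F '' {y : EuclideanSpace ℝ (Fin n) | ‖y‖ = 1}) rm)
    (v : EuclideanSpace ℝ (Fin n)) (hv : ‖v‖ ∈ Set.Icc (1/2 : ℝ) (2 * rM / rm))
    (ε : ℝ) (hε : ε ∈ Set.Ioc 0 (rm * ‖v‖ / (4 * n * rM)))
    (w : EuclideanSpace ℝ (Fin n)) (hw : ‖w - v‖ ≤ ε) :
    (∀ t : ℝ, 0 < t →
      rm ^ 2 / 32 * t < F (w + t • ‖v‖⁻¹ • v) ^ 2 - F w ^ 2) ∧
    (∀ t ∈ Set.Ioo (0:ℝ) 1,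
      F (w + t • ‖v‖⁻¹ • v) ^ 2 - F w ^ 2
        < (2 * rm * rM ^ 3 + 12 * rM ^ 4) / rm ^ 2 * t) := by
  obtain ⟨y₀, hy₀, hy₀F⟩ := hrm.1
  have hrm_pos : 0 < rm := by
    rcases lt_or_eq_of_le (hF_nonneg y₀) with h | h
    · rwa [hy₀F] at h
    · exfalso
      have : y₀ = 0 := hF_zero y₀ h.symm
      rw [this] at hy₀; simp at hy₀
  have hrMrm : rm ≤ rM := hrM.2 ⟨y₀, hy₀, hy₀F⟩
  have hrM_pos : 0 < rM := lt_of_lt_of_le hrm_pos hrMrm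
  have hF0 : F 0 = 0 := by
    have := hF_homog 0 0 le_rfl
    simpa using this
  have hFlow : ∀ y, rm * ‖y‖ ≤ F y := by
    intro y
    rcases eq_or_ne y 0 with rfl | hy
    · simp [hF0]
    · have hny : 0 < ‖y‖ := norm_pos_iff.2 hy
      have h1 : ‖(‖y‖⁻¹ • y)‖ = 1 := norm_smul_inv_norm hy
      have h2 : rm ≤ F (‖y‖⁻¹ • y) := hrm.2 ⟨_, h1, rfl⟩
      have h3 : F y = ‖y‖ * F (‖y‖⁻¹ • y) := by
        conv_lhs => rw [← smul_inv_smul₀ hny.ne' y]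
        exact hF_homog _ _ hny.le
      rw [h3]; nlinarith
  have hFupp : ∀ y, F y ≤ rM * ‖y‖ := by
    intro y
    rcases eq_or_ne y 0 with rfl | hy
    · simp [hF0]
    · have hny : 0 < ‖y‖ := norm_pos_iff.2 hy
      have h1 : ‖(‖y‖⁻¹ • y)‖ = 1 := norm_smul_inv_norm hy
      have h2 : F (‖y‖⁻¹ • y) ≤ rM := hrM.2 ⟨_, h1, rfl⟩
      have h3 : F y = ‖y‖ * F (‖y‖⁻¹ • y) := by
        conv_lhs => rw [← smul_inv_smul₀ hny.ne' y]
        exact hF_homog _ _ hny.le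
      rw [h3]; nlinarith
  have hv1 : (1/2 : ℝ) ≤ ‖v‖ := hv.1
  have hv2 : ‖v‖ ≤ 2 * rM / rm := hv.2
  have hvpos : (0:ℝ) < ‖v‖ := by linarith
  have hε0 : 0 < ε := hε.1
  have hε1 : ε ≤ rm * ‖v‖ / (4 * n * rM) := hε.2
  have hn : (1:ℝ) ≤ (n:ℝ) := by
    rcases Nat.eq_zero_or_pos n with h | h
    · exfalso
      have h0 : ((n:ℝ)) = 0 := by simp [h]
      rw [h0] at hε1
      norm_num at hε1
      linarith
    · exact_mod_cast h
  have hden : (0:ℝ) < 4 * n * rM := by positivity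
  have hεden : ε * (4 * n * rM) ≤ rm * ‖v‖ := (le_div_iff₀ hden).mp hε1
  -- key numeric consequences
  have hvrm : ‖v‖ * rm ≤ 2 * rM := (le_div_iff₀ hrm_pos).mp hv2
  have hεv4 : ε ≤ ‖v‖ / 4 := by nlinarith [hεden, mul_pos hε0 hrM_pos]
  have hεrM : rM * ε ≤ rm * ‖v‖ / 4 := by nlinarith [hεden, mul_pos hε0 hrM_pos]
  have hεhalf : ε ≤ 1/2 := by nlinarith [hεden, mul_pos hε0 hrM_pos]
  have hwv : ‖v‖ - ε ≤ ‖w‖ := by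
    have h := norm_sub_norm_le v w
    have : ‖v - w‖ = ‖w - v‖ := norm_sub_rev v w
    linarith [h, this.le, this.ge]
  have hwu : ‖w‖ ≤ ‖v‖ + ε := by
    have h := norm_le_norm_add_norm_sub' w v
    linarith [norm_sub_rev w v ▸ hw]
  have hwl : 3/4 * ‖v‖ ≤ ‖w‖ := by linarith
  have hFw_low : rm * (3/4 * ‖v‖) ≤ F w := by
    calc rm * (3/4 * ‖v‖) ≤ rm * ‖w‖ := by nlinarith
    _ ≤ F w := hFlow w
  have hFwv : F (w - v) ≤ rm * ‖v‖ / 4 := by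
    calc F (w - v) ≤ rM * ‖w - v‖ := hFupp _
    _ ≤ rM * ε := by nlinarith
    _ ≤ rm * ‖v‖ / 4 := hεrM
  -- lower growth of F
  have hdiff : ∀ t : ℝ, 0 < t → F w + rm / 2 * t ≤ F (w + t • ‖v‖⁻¹ • v) := by
    intro t ht
    set s : ℝ := t * ‖v‖⁻¹ with hs_def
    have hs : 0 < s := by positivity
    have hsv : s * ‖v‖ = t := by rw [hs_def, mul_assoc, inv_mul_cancel₀ hvpos.ne', mul_one]
    have hueq : t • (‖v‖⁻¹ • v) = s • v := by rw [smul_smul]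
    have hid : (1 + s) • w = (w + t • ‖v‖⁻¹ • v) + s • (w - v) := by
      rw [hueq]; module
    have h1 : F ((1 + s) • w) ≤ F (w + t • ‖v‖⁻¹ • v) + F (s • (w - v)) := by
      rw [hid]; exact hF_triangle _ _
    have h2 : F ((1 + s) • w) = (1 + s) * F w := hF_homog _ _ (by linarith)
    have h3 : F (s • (w - v)) = s * F (w - v) := hF_homog _ _ hs.le
    rw [h2, h3] at h1
    have hgap : rm * ‖v‖ / 2 ≤ F w - F (w - v) := by linarith [hFw_low, hFwv]
    have key := mul_le_mul_of_nonneg_left hgap hs.le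
    have heq : rm / 2 * t = s * (rm * ‖v‖ / 2) := by rw [← hsv]; ring
    linarith [key, h1, heq.le, heq.ge]
  constructor
  · intro t ht
    have h1 := hdiff t ht
    have hsum : 3 * rm / 8 ≤ F (w + t • ‖v‖⁻¹ • v) + F w := by
      nlinarith [hF_nonneg (w + t • ‖v‖⁻¹ • v), hFw_low]
    have hd : rm / 2 * t ≤ F (w + t • ‖v‖⁻¹ • v) - F w := by linarith
    have key : (rm / 2 * t) * (3 * rm / 8) ≤
        (F (w + t • ‖v‖⁻¹ • v) - F w) * (F (w + t • ‖v‖⁻¹ • v) + F w) :=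
      mul_le_mul hd hsum (by positivity)
        (by nlinarith [hd, mul_pos hrm_pos ht])
    nlinarith [key, mul_pos (mul_pos hrm_pos hrm_pos) ht]
  · rintro t ⟨ht0, ht1⟩
    have hFu : F (t • ‖v‖⁻¹ • v) ≤ t * rM := by
      rw [hF_homog t _ ht0.le, hF_homog _ _ (by positivity)]
      have : F v ≤ rM * ‖v‖ := hFupp v
      have h := mul_le_mul_of_nonneg_left this (by positivity : (0:ℝ) ≤ ‖v‖⁻¹)
      have h2 : ‖v‖⁻¹ * (rM * ‖v‖) = rM := by field_simp
      nlinarith [mul_le_mul_of_nonneg_left (h.trans_eq h2) ht0.le]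
    have hFa : F (w + t • ‖v‖⁻¹ • v) ≤ F w + t * rM := by
      calc F (w + t • ‖v‖⁻¹ • v) ≤ F w + F (t • ‖v‖⁻¹ • v) := hF_triangle _ _
      _ ≤ F w + t * rM := by linarith
    have hFa2 : F (w + t • ‖v‖⁻¹ • v) ^ 2 ≤ (F w + t * rM) ^ 2 := by
      have := hF_nonneg (w + t • ‖v‖⁻¹ • v)
      nlinarith
    have hFwrm : F w * rm ≤ 2 * rM ^ 2 + rM * rm / 2 := by
      have h1 : F w ≤ rM * ‖w‖ := hFupp w
      nlinarith [mul_le_mul_of_nonneg_right h1 hrm_pos.le,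
        mul_le_mul_of_nonneg_left hwu (mul_pos hrM_pos hrm_pos).le,
        mul_le_mul_of_nonneg_left hvrm hrM_pos.le,
        mul_le_mul_of_nonneg_left hεhalf (mul_pos hrM_pos hrm_pos).le]
    rw [div_mul_eq_mul_div, lt_div_iff₀ (by positivity : (0:ℝ) < rm ^ 2)]
    have e1 : F (w + t • ‖v‖⁻¹ • v) ^ 2 - F w ^ 2 ≤ 2 * t * rM * F w + t ^ 2 * rM ^ 2 := by
      nlinarith [hFa2]
    have e1' : (F (w + t • ‖v‖⁻¹ • v) ^ 2 - F w ^ 2) * rm ^ 2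
        ≤ (2 * t * rM * F w + t ^ 2 * rM ^ 2) * rm ^ 2 :=
      mul_le_mul_of_nonneg_right e1 (sq_nonneg rm)
    have e2 : t ^ 2 ≤ t := by nlinarith
    have h3 : 2 * t * rM * rm * (F w * rm) ≤ 2 * t * rM * rm * (2 * rM ^ 2 + rM * rm / 2) :=
      mul_le_mul_of_nonneg_left hFwrm (by positivity)
    have h4 : t ^ 2 * (rM ^ 2 * rm ^ 2) ≤ t * (rM ^ 2 * rm ^ 2) :=
      mul_le_mul_of_nonneg_right e2 (by positivity)
    have hrm2 : rm ^ 2 ≤ rM ^ 2 := by nlinarith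
    have h5 : t * (rM ^ 2 * rm ^ 2) ≤ t * (rM ^ 2 * rM ^ 2) := by
      nlinarith [mul_le_mul_of_nonneg_left hrm2 (by positivity : (0:ℝ) ≤ t * rM ^ 2)]
    have h6 : t * (rM ^ 3 * rm) ≤ t * rM ^ 4 := by
      have := mul_le_mul_of_nonneg_left hrMrm (by positivity : (0:ℝ) ≤ t * rM ^ 3)
      linarith [this]
    have p1 : 0 < rM ^ 4 * t := by positivity
    have p2 : (0:ℝ) ≤ rm * rM ^ 3 * t := by positivity
    linarith [e1', h3, h4, h5, h6, p1, p2]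
end

section
/- Let f : ℝ → ℝ be convex and η_ε the standard mollifier. Then (η_ε * f)''(y) ≥ 0 for every y ∈ ℝ, and (η_ε * f)''(y) = 0 if and only if f is affine on the interval (y-ε, y+ε). -/
open MeasureTheory Real Set Filter

lemma slope_mono4 {f : ℝ → ℝ} (hf : ConvexOn ℝ Set.univ f) {p q s t : ℝ}
    (h1 : p < q) (h2 : q ≤ s) (h3 : s < t) :
    (f q - f p) / (q - p) ≤ (f t - f s) / (t - s) := by
  have A : (f q - f p) / (q - p) ≤ (f t - f p) / (t - p) :=
    hf.secant_mono (Set.mem_univ p) (Set.mem_univ q) (Set.mem_univ t)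
      h1.ne' (by linarith : p < t).ne' (by linarith)
  have B : (f p - f t) / (p - t) ≤ (f s - f t) / (s - t) :=
    hf.secant_mono (Set.mem_univ t) (Set.mem_univ p) (Set.mem_univ s)
      (by linarith : p < t).ne (by linarith : s < t).ne (by linarith)
  have e1 : (f t - f p) / (t - p) = (f p - f t) / (p - t) := by
    rw [← neg_div_neg_eq]; ring_nf
  have e2 : (f s - f t) / (s - t) = (f t - f s) / (t - s) := by
    rw [← neg_div_neg_eq]; ring_nf
  linarith [e1 ▸ A, e2 ▸ B]


lemma eng_mono : Monotone expNegInvGlue := by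
  intro a b hab
  rcases le_or_gt a 0 with h | h
  · rw [expNegInvGlue.zero_of_nonpos h]; exact expNegInvGlue.nonneg b
  · have hb : 0 < b := lt_of_lt_of_le h hab
    unfold expNegInvGlue
    rw [if_neg (not_le.2 h), if_neg (not_le.2 hb)]
    exact Real.exp_le_exp.2 (neg_le_neg (inv_anti₀ h hab))


lemma affine_of_collinear {f : ℝ → ℝ} {l r : ℝ} (hlr : l < r)
    (H : ∀ u v w, u ∈ Set.Ioo l r → v ∈ Set.Ioo l r → w ∈ Set.Ioo l r → u < v → v < w →
      (f v - f u) * (w - v) = (f w - f v) * (v - u)) :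
    ∃ a b : ℝ, ∀ x ∈ Set.Ioo l r, f x = a * x + b := by
  set p := (2*l + r)/3 with hp
  set q := (l + 2*r)/3 with hq
  have hpI : p ∈ Set.Ioo l r := by constructor <;> [skip; skip] <;> simp [hp] <;> linarith
  have hqI : q ∈ Set.Ioo l r := by constructor <;> simp [hp, hq] <;> linarith
  have hpq : p < q := by simp [hp, hq]; linarith
  refine ⟨(f q - f p)/(q - p), f p - (f q - f p)/(q - p) * p, ?_⟩
  intro x hx
  have hqp : q - p ≠ 0 := by intro h0; rw [sub_eq_zero] at h0; exact hpq.ne' h0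
  rcases lt_trichotomy x p with h | h | h
  · have := H x p q hx hpI hqI h hpq
    field_simp
    nlinarith [this]
  · subst h; field_simp; ring
  · rcases lt_trichotomy x q with h' | h' | h'
    · have := H p x q hpI hx hqI h h'
      field_simp
      nlinarith [this]
    · subst h'; field_simp; ring
    · have := H p q x hpI hqI hx hpq h'
      field_simp
      nlinarith [this]


lemma symm_second_diff_tendsto {g : ℝ → ℝ} (hg : ContDiff ℝ (⊤ : ℕ∞) g) (y : ℝ) :
    Tendsto (fun h : ℝ => (g (y+h) + g (y-h) - 2 * g y) / h^2) (nhdsWithin 0 (Set.Ioi 0))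
      (nhds (deriv (deriv g) y)) := by
  have hg1 : ContDiff ℝ (⊤ : ℕ∞) (deriv g) := (contDiff_infty_iff_deriv.mp hg).2
  have hg2 : ContDiff ℝ (⊤ : ℕ∞) (deriv (deriv g)) := (contDiff_infty_iff_deriv.mp hg1).2
  have hdg : Differentiable ℝ g := (contDiff_infty_iff_deriv.mp hg).1
  have hdg1 : Differentiable ℝ (deriv g) := (contDiff_infty_iff_deriv.mp hg1).1
  have hcg2 : Continuous (deriv (deriv g)) := hg2.continuous
  set D := deriv (deriv g) y with hD
  set G : ℝ → ℝ := fun t => g (y+t) + g (y-t) with hG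
  set G' : ℝ → ℝ := fun t => deriv g (y+t) - deriv g (y-t) with hG'
  have HG1 : ∀ t : ℝ, HasDerivAt G (G' t) t := by
    intro t
    have h1 : HasDerivAt (fun t : ℝ => g (y+t)) (deriv g (y+t)) t := by
      simpa [Function.comp_def] using (hdg (y+t)).hasDerivAt.comp t ((hasDerivAt_id t).const_add y)
    have h2 : HasDerivAt (fun t : ℝ => g (y-t)) (-deriv g (y-t)) t := by
      simpa [Function.comp_def] using (hdg (y-t)).hasDerivAt.comp t ((hasDerivAt_id t).neg.const_add y)
    exact (h1.add h2).congr_deriv (by simp only [hG']; ring)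
  have HG2 : ∀ t : ℝ, HasDerivAt G' (deriv (deriv g) (y+t) + deriv (deriv g) (y-t)) t := by
    intro t
    have h1 : HasDerivAt (fun t : ℝ => deriv g (y+t)) (deriv (deriv g) (y+t)) t := by
      simpa [Function.comp_def] using (hdg1 (y+t)).hasDerivAt.comp t ((hasDerivAt_id t).const_add y)
    have h2 : HasDerivAt (fun t : ℝ => deriv g (y-t)) (-deriv (deriv g) (y-t)) t := by
      simpa [Function.comp_def] using (hdg1 (y-t)).hasDerivAt.comp t ((hasDerivAt_id t).neg.const_add y)
    exact (h1.sub h2).congr_deriv (by ring)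
  have hc2p : Continuous (fun s : ℝ => deriv (deriv g) (y+s)) :=
    hcg2.comp (continuous_const.add continuous_id)
  have hc2m : Continuous (fun s : ℝ => deriv (deriv g) (y-s)) :=
    hcg2.comp (continuous_const.sub continuous_id)
  have hcG' : Continuous G' :=
    (hg1.continuous.comp (continuous_const.add continuous_id)).sub
      (hg1.continuous.comp (continuous_const.sub continuous_id))
  have hG'0 : G' 0 = 0 := by simp [hG']
  rw [Metric.tendsto_nhdsWithin_nhds]
  intro e he
  obtain ⟨δ, hδ, hcont⟩ := Metric.continuousAt_iff.mp (hcg2.continuousAt : ContinuousAt (deriv (deriv g)) y) (e/4) (by linarith)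
  refine ⟨δ, hδ, ?_⟩
  intro h hh hhd
  simp only [Set.mem_Ioi] at hh
  rw [Real.dist_eq, sub_zero, abs_of_pos hh] at hhd
  -- key bound on G' t for t in (0, h]
  have key : ∀ t ∈ Set.uIoc (0:ℝ) h, ‖G' t - 2*t*D‖ ≤ h * (e/2) := by
    intro t ht
    rw [Set.uIoc_of_le hh.le] at ht
    obtain ⟨ht0, hth⟩ := ht
    have e1 : (∫ s in (0:ℝ)..t, ((deriv (deriv g) (y+s) - D) + (deriv (deriv g) (y-s) - D)))
        = G' t - 2*t*D := by
      have heq : (fun s => ((deriv (deriv g) (y+s) - D) + (deriv (deriv g) (y-s) - D)))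
          = fun s => (deriv (deriv g) (y+s) + deriv (deriv g) (y-s)) - 2*D := by
        funext s; ring
      rw [heq, intervalIntegral.integral_sub (f := fun s => deriv (deriv g) (y+s) + deriv (deriv g) (y-s)) ((hc2p.add hc2m).intervalIntegrable _ _)
        intervalIntegrable_const, intervalIntegral.integral_const]
      have ftc : (∫ s in (0:ℝ)..t, (deriv (deriv g) (y+s) + deriv (deriv g) (y-s)))
          = G' t - G' 0 :=
        intervalIntegral.integral_eq_sub_of_hasDerivAt (fun s _ => HG2 s)
          ((hc2p.add hc2m).intervalIntegrable _ _)
      rw [ftc, hG'0]; simp; ring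
    have bnd : ∀ s ∈ Set.uIoc (0:ℝ) t,
        ‖(deriv (deriv g) (y+s) - D) + (deriv (deriv g) (y-s) - D)‖ ≤ e/2 := by
      intro s hs
      rw [Set.uIoc_of_le ht0.le] at hs
      have hs1 : |s| < δ := by
        rw [abs_of_pos hs.1]; exact lt_of_le_of_lt (hs.2.trans hth) hhd
      have b1 : |deriv (deriv g) (y+s) - D| < e/4 := by
        have := hcont (x := y + s) (by rw [Real.dist_eq]; simpa using hs1)
        rwa [Real.dist_eq] at this
      have b2 : |deriv (deriv g) (y-s) - D| < e/4 := by
        have := hcont (x := y - s) (by rw [Real.dist_eq]; simpa [abs_sub_comm] using hs1)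
        rwa [Real.dist_eq] at this
      calc ‖(deriv (deriv g) (y+s) - D) + (deriv (deriv g) (y-s) - D)‖
          ≤ |deriv (deriv g) (y+s) - D| + |deriv (deriv g) (y-s) - D| := abs_add_le _ _
        _ ≤ e/2 := by linarith
    calc ‖G' t - 2*t*D‖
        = ‖∫ s in (0:ℝ)..t, ((deriv (deriv g) (y+s) - D) + (deriv (deriv g) (y-s) - D))‖ := by
          rw [e1]
      _ ≤ (e/2) * |t - 0| := intervalIntegral.norm_integral_le_of_norm_le_const bnd
      _ ≤ h * (e/2) := by rw [sub_zero, abs_of_nonneg ht0.le]; nlinarith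
  -- FTC for G
  have e2 : (∫ t in (0:ℝ)..h, (G' t - 2*t*D)) = (G h - G 0) - h^2*D := by
    rw [intervalIntegral.integral_sub (hcG'.intervalIntegrable _ _)
      ((by continuity : Continuous (fun t : ℝ => 2*t*D)).intervalIntegrable _ _)]
    have ftcG : (∫ t in (0:ℝ)..h, G' t) = G h - G 0 :=
      intervalIntegral.integral_eq_sub_of_hasDerivAt (fun t _ => HG1 t)
        (hcG'.intervalIntegrable _ _)
    have i2 : (∫ t in (0:ℝ)..h, 2*t*D) = h^2*D := by
      have : (fun t : ℝ => 2*t*D) = fun t : ℝ => (2*D)*t := by funext t; ring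
      rw [this, intervalIntegral.integral_const_mul, integral_id]
      ring
    rw [ftcG, i2]
  have hbound : ‖(G h - G 0) - h^2*D‖ ≤ (h*(e/2)) * |h - 0| := by
    rw [← e2]
    exact intervalIntegral.norm_integral_le_of_norm_le_const key
  rw [Real.dist_eq]
  have hh2 : (0:ℝ) < h^2 := by positivity
  have hG0 : G 0 = 2 * g y := by simp [hG]; ring
  have hb2 : |G h - 2*g y - D*h^2| ≤ e/2 * h^2 := by
    have hnorm : G h - 2*g y - D*h^2 = (G h - G 0) - h^2*D := by rw [hG0]; ring
    rw [hnorm, ← Real.norm_eq_abs]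
    calc ‖(G h - G 0) - h^2*D‖ ≤ (h*(e/2)) * |h - 0| := hbound
      _ = e/2 * h^2 := by rw [sub_zero, abs_of_pos hh]; ring
  have hrw : (g (y+h) + g (y-h) - 2 * g y)/h^2 - D = (G h - 2*g y - D*h^2)/h^2 := by
    field_simp [hG]
    ring
  rw [hrw, abs_div, abs_of_pos hh2, div_lt_iff₀ hh2]
  calc |G h - 2*g y - D*h^2| ≤ e/2 * h^2 := hb2
    _ < e * h^2 := by nlinarith

lemma slope_mono4' {f : ℝ → ℝ} (hf : ConvexOn ℝ Set.univ f) {p q s t : ℝ}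
    (h1 : p < q) (h2 : q ≤ s) (h3 : s < t) :
    (f q - f p) * (t - s) ≤ (f t - f s) * (q - p) := by
  have := slope_mono4 hf h1 h2 h3
  rw [div_le_div_iff₀ (by linarith) (by linarith)] at this
  linarith

set_option maxHeartbeats 2000000 in
/-- For a convex `f : ℝ → ℝ`, the mollification `η_ε * f` has nonnegative second derivative
everywhere, and its second derivative vanishes at `y` iff `f` is affine on `(y-ε, y+ε)`. -/
theorem mollification_second_derivative
    (f : ℝ → ℝ) (hf : ConvexOn ℝ Set.univ f)
    (C : ℝ) (η : ℝ → ℝ)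
    (hη : ∀ y : ℝ, η y = if |y| < 1 then C * Real.exp (1 / (y ^ 2 - 1)) else 0)
    (hη_int : ∫ y, η y = 1)
    (ε : ℝ) (hε : 0 < ε)
    (g : ℝ → ℝ) (hg : ∀ y : ℝ, g y = ∫ z, ε⁻¹ * η (z / ε) * f (y - z)) :
    ∀ y : ℝ, 0 ≤ deriv (deriv g) y ∧
      (deriv (deriv g) y = 0 ↔
        ∃ a b : ℝ, ∀ x ∈ Set.Ioo (y - ε) (y + ε), f x = a * x + b) := by
  -- rewrite η via expNegInvGlue
  have hη' : ∀ x : ℝ, η x = C * expNegInvGlue (1 - x^2) := by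
    intro x
    rw [hη x]
    rcases lt_or_ge |x| 1 with h | h
    · rw [if_pos h]
      have hx2 : x^2 < 1 := by nlinarith [sq_abs x, abs_nonneg x]
      have h1 : ¬ (1 - x^2 ≤ 0) := by push_neg; linarith
      unfold expNegInvGlue
      rw [if_neg h1]
      congr 1
      have hne : x^2 - 1 ≠ 0 := by intro hc; nlinarith
      field_simp
      rw [← div_neg, neg_sub]
    · rw [if_neg (not_lt.2 h), expNegInvGlue.zero_of_nonpos (by nlinarith [sq_abs x]), mul_zero]
  -- C is positive
  have hC : 0 < C := by
    by_contra hC'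
    push_neg at hC'
    have : ∫ y, η y ≤ 0 := by
      apply integral_nonpos
      intro x
      rw [hη' x]
      exact mul_nonpos_of_nonpos_of_nonneg hC' (expNegInvGlue.nonneg _)
    rw [hη_int] at this; linarith
  -- the kernel
  set k : ℝ → ℝ := fun z => ε⁻¹ * C * expNegInvGlue (1 - (z/ε)^2) with hkdef
  have hgk : ∀ w : ℝ, g w = ∫ z, k z * f (w - z) := by
    intro w
    rw [hg w]
    congr 1
    funext z
    rw [hη' (z/ε), hkdef]
    ring
  have hkc : ContDiff ℝ (⊤:ℕ∞) k := by
    apply contDiff_const.mul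
    exact expNegInvGlue.contDiff.comp (contDiff_const.sub ((contDiff_id.div_const ε).pow 2))
  have hknn : ∀ z, 0 ≤ k z := fun z =>
    mul_nonneg (by positivity) (expNegInvGlue.nonneg _)
  have hksupp : ∀ z : ℝ, ε ≤ |z| → k z = 0 := by
    intro z hz
    have : (1:ℝ) - (z/ε)^2 ≤ 0 := by
      have : ε^2 ≤ z^2 := by nlinarith [sq_abs z, abs_nonneg z]
      have h2 : (z/ε)^2 = z^2/ε^2 := by rw [div_pow]
      rw [h2]
      rw [sub_nonpos, le_div_iff₀ (by positivity)]
      linarith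
    rw [hkdef]
    simp [expNegInvGlue.zero_of_nonpos this]
  have hkcompact : HasCompactSupport k := by
    apply HasCompactSupport.intro (isCompact_Icc (a := -ε) (b := ε))
    intro x hx
    apply hksupp
    simp only [Set.mem_Icc, not_and_or, not_le] at hx
    rcases hx with h | h
    · rw [abs_of_neg (by linarith)]; linarith
    · rw [abs_of_pos (by linarith)]; linarith
  -- continuity of f
  have hfc : Continuous f :=
    continuousOn_univ.mp (by simpa using hf.continuousOn isOpen_univ)
  have hInt : ∀ w : ℝ, Integrable (fun z => k z * f (w - z)) := by
    intro w
    apply Continuous.integrable_of_hasCompactSupport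
    · exact hkc.continuous.mul (hfc.comp (continuous_const.sub continuous_id))
    · exact hkcompact.mul_right
  -- smoothness of g
  have hgsmooth : ContDiff ℝ (⊤:ℕ∞) g := by
    have hconv : g = convolution k f (ContinuousLinearMap.mul ℝ ℝ) volume := by
      funext w
      rw [hgk w]
      simp [convolution, ContinuousLinearMap.mul_apply']
    rw [hconv]
    exact hkcompact.contDiff_convolution_left _ hkc hfc.locallyIntegrable
  -- second differences of f are nonnegative
  have hΔnn : ∀ x h : ℝ, 0 ≤ f (x+h) + f (x-h) - 2*f x := by
    intro x h
    have h2 := hf.2 (Set.mem_univ (x+h)) (Set.mem_univ (x-h))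
      (by norm_num : (0:ℝ) ≤ 1/2) (by norm_num : (0:ℝ) ≤ 1/2) (by norm_num)
    have e : (1/2 : ℝ) • (x+h) + (1/2 : ℝ) • (x-h) = x := by
      simp only [smul_eq_mul]; ring
    rw [e] at h2
    simp only [smul_eq_mul] at h2
    linarith
  intro y
  have hlim := symm_second_diff_tendsto hgsmooth y
  -- the second difference formula
  have hF : ∀ h : ℝ, g (y+h) + g (y-h) - 2*g y
      = ∫ z, k z * (f (y+h-z) + f (y-h-z) - 2*f (y-z)) := by
    intro h
    have e : (fun z => k z * (f (y+h-z) + f (y-h-z) - 2*f (y-z)))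
        = fun z => (k z * f ((y+h) - z) + k z * f ((y-h) - z)) - (2:ℝ) * (k z * f (y - z)) := by
      funext z
      have e1 : y + h - z = (y+h) - z := by ring
      have e2 : y - h - z = (y-h) - z := by ring
      rw [e1, e2]; ring
    rw [hgk (y+h), hgk (y-h), hgk y, e]
    rw [integral_sub (f := fun z => k z * f (y+h-z) + k z * f (y-h-z))
      (g := fun z => (2:ℝ)*(k z * f (y-z)))
      (by exact (hInt (y+h)).add (hInt (y-h))) (by exact (hInt y).const_mul 2)]
    rw [integral_add (f := fun z => k z * f (y+h-z)) (g := fun z => k z * f (y-h-z))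
      (by exact hInt (y+h)) (by exact hInt (y-h))]
    rw [integral_const_mul]
  have hΔnn' : ∀ h z : ℝ, 0 ≤ f (y+h-z) + f (y-h-z) - 2*f (y-z) := by
    intro h z
    have := hΔnn (y - z) h
    have e1 : y - z + h = y + h - z := by ring
    have e2 : y - z - h = y - h - z := by ring
    rw [e1, e2] at this
    exact this
  -- Part 1 : nonnegativity
  have part1 : 0 ≤ deriv (deriv g) y := by
    refine ge_of_tendsto hlim ?_
    filter_upwards [self_mem_nhdsWithin] with h hh
    apply div_nonneg _ (sq_nonneg h)
    rw [hF h]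
    exact integral_nonneg fun z => mul_nonneg (hknn z) (hΔnn' h z)
  refine ⟨part1, ?_, ?_⟩
  · -- vanishing second derivative implies affine
    intro h0
    by_contra hna
    have hncol : ¬ (∀ u v w : ℝ, u ∈ Set.Ioo (y-ε) (y+ε) → v ∈ Set.Ioo (y-ε) (y+ε) →
        w ∈ Set.Ioo (y-ε) (y+ε) → u < v → v < w →
        (f v - f u) * (w - v) = (f w - f v) * (v - u)) :=
      fun H => hna (affine_of_collinear (by linarith) H)
    push_neg at hncol
    obtain ⟨u, v, w, hu, hv, hw, huv, hvw, hne⟩ := hncol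
    have hle := slope_mono4' hf huv le_rfl hvw
    have hslt : (f v - f u)/(v - u) < (f w - f v)/(w - v) := by
      rw [div_lt_div_iff₀ (by linarith) (by linarith)]
      exact lt_of_le_of_ne hle hne
    set δ : ℝ := (f w - f v)/(w - v) - (f v - f u)/(v - u) with hδdef
    have hδ : 0 < δ := by simp only [hδdef]; linarith
    set r : ℝ := (max (y-u) (w-y) + ε)/2 with hr
    have hmaxlt : max (y-u) (w-y) < ε := max_lt (by linarith [hu.1]) (by linarith [hw.2])
    have hmax0 : 0 < max (y-u) (w-y) := by
      rcases le_or_gt w y with hc | hc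
      · exact lt_max_iff.mpr (Or.inl (by linarith))
      · exact lt_max_iff.mpr (Or.inr (by linarith))
    have hr0 : 0 < r := by simp only [hr]; linarith
    have hrε : r < ε := by simp only [hr]; linarith
    have hru : y - u < r := by
      have := le_max_left (y-u) (w-y); simp only [hr]; linarith
    have hrw : w - y < r := by
      have := le_max_right (y-u) (w-y); simp only [hr]; linarith
    set h₀ : ℝ := min (r - (y-u)) (r - (w-y)) with hh₀def
    have hh₀ : 0 < h₀ := lt_min (by linarith) (by linarith)
    set m : ℝ := ε⁻¹ * C * expNegInvGlue (1 - (r/ε)^2) with hm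
    have hm0 : 0 < m := by
      apply mul_pos (by positivity)
      apply expNegInvGlue.pos_of_pos
      have : (r/ε)^2 < 1 := by
        rw [div_pow, div_lt_one (by positivity)]; nlinarith
      linarith
    have hkm : ∀ z ∈ Set.Icc (-r) r, m ≤ k z := by
      intro z hz
      simp only [hm, hkdef]
      apply mul_le_mul_of_nonneg_left _ (by positivity)
      apply eng_mono
      have h1 : z^2 ≤ r^2 := sq_le_sq' (by linarith [hz.1]) hz.2
      have h2 : (z/ε)^2 ≤ (r/ε)^2 := by rw [div_pow, div_pow]; gcongr
      linarith
    have key : ∀ h : ℝ, 0 < h → h ≤ h₀ → m * δ ≤ (g (y+h) + g (y-h) - 2*g y)/h^2 := by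
      intro h hph hhh
      set A : ℝ := y - r with hA
      set B : ℝ := y + r with hB
      have hAu : A + h ≤ u := by
        have := min_le_left (r - (y-u)) (r - (w-y))
        simp only [hh₀def] at hhh
        simp only [hA]; linarith
      have hwB : w ≤ B - h := by
        have := min_le_right (r - (y-u)) (r - (w-y))
        simp only [hh₀def] at hhh
        simp only [hB]; linarith
      set ψ : ℝ → ℝ := fun x => f (x+h) + f (x-h) - 2*f x with hψ
      have hψc : Continuous ψ :=
        ((hfc.comp (continuous_id.add continuous_const)).add
          (hfc.comp (continuous_id.sub continuous_const))).sub (continuous_const.mul hfc)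
      have hψnn : ∀ x, 0 ≤ ψ x := fun x => hΔnn x h
      have hψy : (fun z : ℝ => k z * (f (y+h-z) + f (y-h-z) - 2*f (y-z)))
          = fun z => k z * ψ (y - z) := by
        funext z
        simp only [hψ]
        rw [show y-z+h = y+h-z from by ring, show y-z-h = y-h-z from by ring]
      have hχc : Continuous (fun z : ℝ => k z * ψ (y - z)) :=
        hkc.continuous.mul (hψc.comp (continuous_const.sub continuous_id))
      have hIχ : Integrable (fun z : ℝ => k z * ψ (y - z)) :=
        hχc.integrable_of_hasCompactSupport hkcompact.mul_right
      have step1 : (∫ z in Set.Ioc (-r) r, k z * ψ (y-z)) ≤ ∫ z, k z * ψ (y-z) :=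
        setIntegral_le_integral hIχ
          (Filter.Eventually.of_forall fun z => mul_nonneg (hknn z) (hψnn _))
      have step2 : (∫ z in (-r)..r, k z * ψ (y-z)) = ∫ z in Set.Ioc (-r) r, k z * ψ (y-z) :=
        intervalIntegral.integral_of_le (by linarith)
      have step3 : (∫ z in (-r)..r, m * ψ (y-z)) ≤ ∫ z in (-r)..r, k z * ψ (y-z) := by
        apply intervalIntegral.integral_mono_on (by linarith)
          ((continuous_const.mul (hψc.comp (continuous_const.sub continuous_id))).intervalIntegrable _ _)
          (hχc.intervalIntegrable _ _)
        intro z hz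
        exact mul_le_mul_of_nonneg_right (hkm z hz) (hψnn _)
      have step4 : (∫ z in (-r)..r, m * ψ (y-z)) = m * ∫ z in (-r)..r, ψ (y-z) :=
        intervalIntegral.integral_const_mul _ _
      have step5 : (∫ z in (-r)..r, ψ (y-z)) = ∫ x in A..B, ψ x := by
        rw [intervalIntegral.integral_comp_sub_left ψ y]
        rw [show y - -r = y + r from by ring]
      set Φ : ℝ → ℝ := fun x => ∫ t in (0:ℝ)..x, f t with hΦdef
      have hfint : ∀ a b : ℝ, IntervalIntegrable f volume a b :=
        fun a b => hfc.intervalIntegrable a b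
      have hΦ : ∀ a b : ℝ, (∫ x in a..b, f x) = Φ b - Φ a := by
        intro a b
        have h1 := intervalIntegral.integral_add_adjacent_intervals (hfint 0 a) (hfint a b)
        simp only [hΦdef]
        linarith
      have j1 : IntervalIntegrable (fun x : ℝ => f (x+h)) volume A B :=
        (hfc.comp (continuous_id.add continuous_const)).intervalIntegrable _ _
      have j2 : IntervalIntegrable (fun x : ℝ => f (x-h)) volume A B :=
        (hfc.comp (continuous_id.sub continuous_const)).intervalIntegrable _ _
      have j3 : IntervalIntegrable (fun x : ℝ => (2:ℝ)*f x) volume A B :=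
        (continuous_const.mul hfc).intervalIntegrable _ _
      have step6 : (∫ x in A..B, ψ x)
          = (Φ (B+h) - Φ B) - (Φ B - Φ (B-h)) - ((Φ (A+h) - Φ A) - (Φ A - Φ (A-h))) := by
        simp only [hψ]
        rw [intervalIntegral.integral_sub (f := fun x => f (x+h) + f (x-h))
          (g := fun x => (2:ℝ)*f x) (by exact j1.add j2) j3]
        rw [intervalIntegral.integral_add (f := fun x => f (x+h)) (g := fun x => f (x-h)) j1 j2]
        rw [intervalIntegral.integral_comp_add_right f h,
          intervalIntegral.integral_comp_sub_right f h,
          intervalIntegral.integral_const_mul]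
        rw [hΦ (A+h) (B+h), hΦ (A-h) (B-h), hΦ A B]
        ring
      have step8 : ∀ c : ℝ, (∫ t in (0:ℝ)..h, f (c+t)) = Φ (c+h) - Φ c := by
        intro c
        rw [intervalIntegral.integral_comp_add_left f c]
        rw [show c + 0 = c from by ring]
        exact hΦ c (c+h)
      have step9 : (∫ x in A..B, ψ x)
          = ∫ t in (0:ℝ)..h, ((f (B+t) - f (B-h+t)) - (f (A+t) - f (A-h+t))) := by
        have iB1 : IntervalIntegrable (fun t : ℝ => f (B+t)) volume 0 h :=
          (hfc.comp (continuous_const.add continuous_id)).intervalIntegrable _ _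
        have iB2 : IntervalIntegrable (fun t : ℝ => f (B-h+t)) volume 0 h :=
          (hfc.comp (continuous_const.add continuous_id)).intervalIntegrable _ _
        have iA1 : IntervalIntegrable (fun t : ℝ => f (A+t)) volume 0 h :=
          (hfc.comp (continuous_const.add continuous_id)).intervalIntegrable _ _
        have iA2 : IntervalIntegrable (fun t : ℝ => f (A-h+t)) volume 0 h :=
          (hfc.comp (continuous_const.add continuous_id)).intervalIntegrable _ _
        rw [intervalIntegral.integral_sub (f := fun t => f (B+t) - f (B-h+t))
          (g := fun t => f (A+t) - f (A-h+t)) (by exact iB1.sub iB2) (by exact iA1.sub iA2)]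
        rw [intervalIntegral.integral_sub (f := fun t => f (B+t)) (g := fun t => f (B-h+t))
          (by exact iB1) (by exact iB2)]
        rw [intervalIntegral.integral_sub (f := fun t => f (A+t)) (g := fun t => f (A-h+t))
          (by exact iA1) (by exact iA2)]
        rw [step8 B, step8 A, step8 (B-h), step8 (A-h)]
        rw [show B - h + h = B from by ring, show A - h + h = A from by ring]
        rw [step6]
      have step10 : (∫ t in (0:ℝ)..h, h*δ)
          ≤ ∫ t in (0:ℝ)..h, ((f (B+t) - f (B-h+t)) - (f (A+t) - f (A-h+t))) := by
        apply intervalIntegral.integral_mono_on hph.le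
          (intervalIntegrable_const)
          (by
            apply Continuous.intervalIntegrable
            exact ((hfc.comp (continuous_const.add continuous_id)).sub
              (hfc.comp (continuous_const.add continuous_id))).sub
              ((hfc.comp (continuous_const.add continuous_id)).sub
                (hfc.comp (continuous_const.add continuous_id))))
        intro t ht
        obtain ⟨ht0, hth⟩ := ht
        have hB1 := slope_mono4' hf hvw (show w ≤ B-h+t by linarith) (show B-h+t < B+t by linarith)
        rw [show B+t - (B-h+t) = h from by ring] at hB1
        have hB2 : h * ((f w - f v)/(w-v)) ≤ f (B+t) - f (B-h+t) := by
          rw [show h * ((f w - f v)/(w-v)) = (f w - f v)*h/(w-v) from by ring,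
            div_le_iff₀ (by linarith)]
          linarith
        have hA1 := slope_mono4' hf (show A-h+t < A+t by linarith)
          (show A+t ≤ u by linarith) huv
        rw [show A+t - (A-h+t) = h from by ring] at hA1
        have hA2 : f (A+t) - f (A-h+t) ≤ h * ((f v - f u)/(v-u)) := by
          rw [show h * ((f v - f u)/(v-u)) = (f v - f u)*h/(v-u) from by ring,
            le_div_iff₀ (by linarith)]
          linarith
        calc h*δ = h*((f w - f v)/(w-v)) - h*((f v - f u)/(v-u)) := by
              simp only [hδdef]; ring
          _ ≤ (f (B+t) - f (B-h+t)) - (f (A+t) - f (A-h+t)) := by linarith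
      have step11 : (∫ t in (0:ℝ)..h, h*δ) = h^2 * δ := by
        rw [intervalIntegral.integral_const]
        simp only [sub_zero, smul_eq_mul]
        ring
      rw [le_div_iff₀ (by positivity : (0:ℝ) < h^2)]
      rw [hF h, hψy]
      have c1 : h^2 * δ ≤ ∫ x in A..B, ψ x := by
        rw [step9]; rw [← step11]; exact step10
      have c2 : m * (h^2 * δ) ≤ ∫ z in (-r)..r, k z * ψ (y-z) := by
        calc m * (h^2*δ) ≤ m * ∫ x in A..B, ψ x := by
              apply mul_le_mul_of_nonneg_left c1 hm0.le
          _ = ∫ z in (-r)..r, m * ψ (y-z) := by rw [step4, step5]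
          _ ≤ _ := step3
      calc m * δ * h^2 = m * (h^2*δ) := by ring
        _ ≤ ∫ z in (-r)..r, k z * ψ (y-z) := c2
        _ = ∫ z in Set.Ioc (-r) r, k z * ψ (y-z) := step2
        _ ≤ ∫ z, k z * ψ (y-z) := step1
    have hge : m * δ ≤ deriv (deriv g) y := by
      refine ge_of_tendsto hlim ?_
      filter_upwards [Ioc_mem_nhdsGT hh₀] with h hh
      exact key h hh.1 hh.2
    rw [h0] at hge
    nlinarith [mul_pos hm0 hδ]

  · -- affine implies vanishing second derivative
    rintro ⟨a, b, hab⟩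
    refine le_antisymm ?_ part1
    set Sp : ℝ := f (y+ε+2) - f (y+ε+1) with hSp
    set Sm : ℝ := f (y-ε-1) - f (y-ε-2) with hSm
    have hLnn : 0 ≤ Sp - Sm := by
      have h := slope_mono4 hf (show y-ε-2 < y-ε-1 by linarith)
        (show y-ε-1 ≤ y+ε+1 by linarith) (show y+ε+1 < y+ε+2 by linarith)
      rw [show y-ε-1 - (y-ε-2) = 1 from by ring, show y+ε+2 - (y+ε+1) = 1 from by ring,
        div_one, div_one] at h
      simp only [hSp, hSm]
      linarith
    have hΔle : ∀ x h : ℝ, 0 < h → h ≤ 1 → y - ε ≤ x → x ≤ y + ε →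
        f (x+h) + f (x-h) - 2*f x ≤ h * (Sp - Sm) := by
      intro x h h0 h1 hx1 hx2
      have A1 := slope_mono4 hf (show x < x+h by linarith)
        (show x+h ≤ y+ε+1 by linarith) (show y+ε+1 < y+ε+2 by linarith)
      rw [show x+h-x = h from by ring, show y+ε+2 - (y+ε+1) = 1 from by ring, div_one] at A1
      rw [div_le_iff₀ h0] at A1
      have A2 := slope_mono4 hf (show y-ε-2 < y-ε-1 by linarith)
        (show y-ε-1 ≤ x-h by linarith) (show x-h < x by linarith)
      rw [show x - (x-h) = h from by ring, show y-ε-1 - (y-ε-2) = 1 from by ring, div_one] at A2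
      rw [le_div_iff₀ h0] at A2
      simp only [hSp, hSm]
      nlinarith
    set κ : ℝ → ℝ := fun h => ε⁻¹ * C * expNegInvGlue (1 - ((ε-h)/ε)^2) with hκ
    have hκnn : ∀ h, 0 ≤ κ h := fun h => mul_nonneg (by positivity) (expNegInvGlue.nonneg _)
    have hκc : Continuous κ :=
      continuous_const.mul ((expNegInvGlue.contDiff (n:=(1:ℕ∞))).continuous.comp (continuous_const.sub (((continuous_const.sub continuous_id).div_const ε).pow 2)))
    have hκ0 : κ 0 = 0 := by
      simp only [hκ, sub_zero, div_self hε.ne', one_pow, sub_self, expNegInvGlue.zero, mul_zero]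
    have hbt : Tendsto (fun h => 2*(Sp-Sm)*κ h) (nhdsWithin 0 (Set.Ioi 0)) (nhds 0) := by
      have h1 : Tendsto (fun h : ℝ => 2*(Sp-Sm)*κ h) (nhds 0) (nhds (2*(Sp-Sm)*κ 0)) :=
        (continuous_const.mul hκc).tendsto 0
      rw [hκ0, mul_zero] at h1
      exact h1.mono_left nhdsWithin_le_nhds
    refine le_of_tendsto_of_tendsto hlim hbt ?_
    filter_upwards [Ioo_mem_nhdsGT (show (0:ℝ) < min ε 1 from lt_min hε one_pos)]
      with h hh
    obtain ⟨hh0, hhm⟩ := hh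
    have hhε : h < ε := lt_of_lt_of_le hhm (min_le_left _ _)
    have hh1 : h ≤ 1 := (lt_of_lt_of_le hhm (min_le_right _ _)).le
    set M : ℝ := κ h * ((Sp - Sm) * h) with hM
    have hMnn : 0 ≤ M := mul_nonneg (hκnn h) (mul_nonneg hLnn hh0.le)
    have indnn : ∀ (s : Set ℝ) (z : ℝ), 0 ≤ s.indicator (fun _ => M) z :=
      fun s z => Set.indicator_nonneg (fun _ _ => hMnn) z
    have hbound : ∀ z : ℝ, k z * (f (y+h-z) + f (y-h-z) - 2*f (y-z))
        ≤ (Set.Icc (ε-h) ε).indicator (fun _ => M) z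
          + (Set.Icc (-ε) (-(ε-h))).indicator (fun _ => M) z := by
      intro z
      rcases lt_or_ge |z| (ε - h) with hz | hz
      · obtain ⟨hza, hzb⟩ := abs_lt.mp hz
        have hz1 : y + h - z ∈ Set.Ioo (y-ε) (y+ε) := ⟨by linarith, by linarith⟩
        have hz2 : y - h - z ∈ Set.Ioo (y-ε) (y+ε) := ⟨by linarith, by linarith⟩
        have hz3 : y - z ∈ Set.Ioo (y-ε) (y+ε) := ⟨by linarith, by linarith⟩
        have hzero : f (y+h-z) + f (y-h-z) - 2*f (y-z) = 0 := by
          rw [hab _ hz1, hab _ hz2, hab _ hz3]; ring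
        rw [hzero, mul_zero]
        exact add_nonneg (indnn _ _) (indnn _ _)
      · rcases le_or_gt |z| ε with hz2 | hz2
        · have hkz : k z ≤ κ h := by
            simp only [hkdef, hκ]
            apply mul_le_mul_of_nonneg_left _ (by positivity)
            apply eng_mono
            have h1 : (ε - h)^2 ≤ z^2 := by nlinarith [sq_abs z, abs_nonneg z]
            have h2 : ((ε-h)/ε)^2 ≤ (z/ε)^2 := by
              rw [div_pow, div_pow]
              gcongr
            linarith
          have hΔ : f (y+h-z) + f (y-h-z) - 2*f (y-z) ≤ h*(Sp-Sm) := by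
            obtain ⟨hza, hzb⟩ := abs_le.mp hz2
            have := hΔle (y - z) h hh0 hh1 (by linarith) (by linarith)
            rw [show y-z+h = y+h-z from by ring, show y-z-h = y-h-z from by ring] at this
            exact this
          have main : k z * (f (y+h-z) + f (y-h-z) - 2*f (y-z)) ≤ M := by
            calc k z * (f (y+h-z) + f (y-h-z) - 2*f (y-z))
                ≤ κ h * (h*(Sp-Sm)) := mul_le_mul hkz hΔ (hΔnn' h z) (hκnn h)
              _ = M := by rw [hM]; ring
          rcases le_or_gt 0 z with hzs | hzs
          · have hmem : z ∈ Set.Icc (ε-h) ε :=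
              ⟨by rwa [abs_of_nonneg hzs] at hz, by rwa [abs_of_nonneg hzs] at hz2⟩
            rw [Set.indicator_of_mem hmem]
            have := indnn (Set.Icc (-ε) (-(ε-h))) z
            linarith
          · have hmem : z ∈ Set.Icc (-ε) (-(ε-h)) := by
              rw [abs_of_neg hzs] at hz hz2
              exact ⟨by linarith, by linarith⟩
            rw [Set.indicator_of_mem hmem]
            have := indnn (Set.Icc (ε-h) ε) z
            linarith
        · rw [hksupp z hz2.le, zero_mul]
          exact add_nonneg (indnn _ _) (indnn _ _)
    have hIχ : Integrable (fun z => k z * (f (y+h-z) + f (y-h-z) - 2*f (y-z))) := by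
      apply Integrable.congr (f := fun z => (k z * f ((y+h) - z) + k z * f ((y-h) - z))
        - (2:ℝ) * (k z * f (y - z)))
      · exact ((hInt (y+h)).add (hInt (y-h))).sub ((hInt y).const_mul 2)
      · exact Filter.Eventually.of_forall (fun z => by ring)
    have hind : ∀ (u v : ℝ), Integrable ((Set.Icc u v).indicator (fun _ => M)) := by
      intro u v
      rw [integrable_indicator_iff measurableSet_Icc]
      apply integrableOn_const measure_Icc_lt_top.ne
    have hindint : ∀ (u v : ℝ), v - u = h → 0 ≤ v - u →
        (∫ z, (Set.Icc u v).indicator (fun _ => M) z) = M * h := by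
      intro u v huv hnn
      rw [integral_indicator_const _ measurableSet_Icc, measureReal_def, Real.volume_Icc, smul_eq_mul,
        ENNReal.toReal_ofReal hnn, huv]
      ring
    rw [div_le_iff₀ (by positivity : (0:ℝ) < h^2)]
    calc g (y+h) + g (y-h) - 2*g y
        = ∫ z, k z * (f (y+h-z) + f (y-h-z) - 2*f (y-z)) := hF h
      _ ≤ ∫ z, ((Set.Icc (ε-h) ε).indicator (fun _ => M) z
            + (Set.Icc (-ε) (-(ε-h))).indicator (fun _ => M) z) :=
          integral_mono hIχ ((hind _ _).add (hind _ _)) hbound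
      _ = M * h + M * h := by
          rw [integral_add (hind _ _) (hind _ _),
            hindint (ε-h) ε (by ring) (by linarith),
            hindint (-ε) (-(ε-h)) (by ring) (by linarith)]
      _ ≤ 2*(Sp-Sm)*κ h * h^2 := by rw [hM]; nlinarith [hκnn h]
end

section
/- Let f, g : ℝⁿ\{0} → ℝ be smooth convex functions with the same level hypersurface at the value r, where r is a regular value of both f and g, and suppose f⁻¹(r) is compact. Let λ be the continuous function on f⁻¹(r) with ∇g(y) = λ(y)∇f(y). Suppose f is strongly convex with respect to √(γ/2)‖·‖. Then λ > 0 on f⁻¹(r), and Hess g at y₀ satisfies (Hess g)_{y₀}(v,v) ≥ λ_m·γ·‖v‖² for every y₀ ∈ f⁻¹(r) and every v ∈ ker df_{y₀}, where λ_m = min_{y ∈ f⁻¹(r)} λ(y). -/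
set_option linter.unusedSectionVars false
set_option maxHeartbeats 1000000

open Filter Topology Set

section HessianAux

variable {E : Type*} [NormedAddCommGroup E] [InnerProductSpace ℝ E]

lemma convexOn_support_ineq {f : E → ℝ} (hf : ConvexOn ℝ Set.univ f)
    {y : E} (hd : DifferentiableAt ℝ f y) (z : E) :
    f y + fderiv ℝ f y (z - y) ≤ f z := by
  have hφ' : HasDerivAt (fun t : ℝ => f (y + t • (z - y))) (fderiv ℝ f y (z - y)) 0 := by
    have hline : HasDerivAt (fun t : ℝ => y + t • (z - y)) (z - y) 0 := by
      simpa using ((hasDerivAt_id (0:ℝ)).smul_const (z - y)).const_add y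
    have h1 : HasFDerivAt f (fderiv ℝ f y) (y + (0:ℝ) • (z - y)) := by
      simpa using hd.hasFDerivAt
    simpa [Function.comp_def] using h1.comp_hasDerivAt 0 hline
  have hconv : ConvexOn ℝ (Set.univ : Set ℝ) (fun t : ℝ => f (y + t • (z - y))) := by
    refine ⟨convex_univ, fun s _ t _ a b ha hb hab => ?_⟩
    have h := hf.2 (Set.mem_univ (y + s • (z - y))) (Set.mem_univ (y + t • (z - y))) ha hb hab
    have hb' : b = 1 - a := by linarith
    subst hb'
    simp only [smul_eq_mul] at h ⊢
    convert h using 2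
    module
  have hs := hconv.le_slope_of_hasDerivAt (Set.mem_univ (0:ℝ)) (Set.mem_univ (1:ℝ)) one_pos hφ'
  simp only [slope_def_field, zero_smul, add_zero, one_smul] at hs
  have h1 : y + (z - y) = z := by abel
  rw [h1] at hs
  norm_num at hs
  have hms : (fderiv ℝ f y) (z - y) = (fderiv ℝ f y) z - (fderiv ℝ f y) y := map_sub _ _ _
  linarith

lemma tendsto_sub_div_sq {ψ ψ' : ℝ → ℝ} {q : ℝ}
    (hψ : ∀ᶠ t in 𝓝 (0:ℝ), HasDerivAt ψ (ψ' t) t)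
    (h0 : ψ' 0 = 0) (hq : HasDerivAt ψ' q 0) :
    Tendsto (fun t => (ψ t - ψ 0) / t ^ 2) (𝓝[≠] (0:ℝ)) (𝓝 (q / 2)) := by
  have hslope : Tendsto (fun t => ψ' t / t) (𝓝[≠] (0:ℝ)) (𝓝 q) := by
    have h := hasDerivAt_iff_tendsto_slope.mp hq
    have : (slope ψ' 0) = fun t => ψ' t / t := by
      funext t; simp [slope_def_field, h0]
    rwa [this] at h
  have hdiv : Tendsto (fun t => ψ' t / (2 * t)) (𝓝[≠] (0:ℝ)) (𝓝 (q / 2)) := by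
    have h2 := hslope.div_const 2
    refine h2.congr' ?_
    filter_upwards [self_mem_nhdsWithin] with t (ht : t ≠ 0)
    rw [div_div, mul_comm]
  have main := HasDerivAt.lhopital_zero_nhdsNE
    (f := fun t => ψ t - ψ 0) (f' := ψ') (g := fun t => t ^ 2) (g' := fun t => 2 * t)
    (eventually_nhdsWithin_of_eventually_nhds <| hψ.mono fun t ht => ht.sub_const (ψ 0))
    (eventually_nhdsWithin_of_eventually_nhds <| Eventually.of_forall fun t => by
      simpa [mul_comm] using (hasDerivAt_pow 2 t))
    (by filter_upwards [self_mem_nhdsWithin] with t (ht : t ≠ 0); positivity)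
    ?_ ?_ hdiv
  · exact main
  · have hc : ContinuousAt ψ 0 := (hψ.self_of_nhds).continuousAt
    have h2 : Tendsto (fun t => ψ t - ψ 0) (𝓝 (0:ℝ)) (𝓝 (ψ 0 - ψ 0)) :=
      hc.tendsto.sub_const (ψ 0)
    simpa using h2.mono_left nhdsWithin_le_nhds
  · have : Tendsto (fun t : ℝ => t ^ 2) (𝓝 (0:ℝ)) (𝓝 (0:ℝ)) := by
      simpa using (continuous_pow 2).tendsto (0:ℝ)
    exact this.mono_left nhdsWithin_le_nhds


lemma exists_far_point {f : E → ℝ} {r γ : ℝ} (hγ : 0 < γ)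
    (hstrong : ∀ y z : E, y ≠ 0 → z ≠ 0 →
      f z ≥ f y + fderiv ℝ f y (z - y) + γ / 2 * ‖z - y‖ ^ 2)
    {y : E} (hy0 : y ≠ 0) (hyr : f y = r) (p d : E) (hd : d ≠ 0) :
    ∃ T : ℝ, 0 < T ∧ r < f (p + T • d) := by
  set M : ℝ := ‖fderiv ℝ f y‖ with hM
  have hM0 : 0 ≤ M := norm_nonneg _
  set R : ℝ := max 1 (2 * (M + 1) / γ) with hR
  have hd0 : (0:ℝ) < ‖d‖ := norm_pos_iff.mpr hd
  set T : ℝ := (R + ‖p - y‖ + ‖p‖ + 1) / ‖d‖ with hT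
  have hT0 : 0 < T := by
    apply div_pos _ hd0
    have h1 : (0:ℝ) < R := lt_of_lt_of_le one_pos (le_max_left _ _)
    positivity
  have hTd : T * ‖d‖ = R + ‖p - y‖ + ‖p‖ + 1 := by
    rw [hT, div_mul_cancel₀ _ hd0.ne']
  refine ⟨T, hT0, ?_⟩
  set z : E := p + T • d with hz
  have hnTd : ‖T • d‖ = T * ‖d‖ := by
    rw [norm_smul, Real.norm_eq_abs, abs_of_pos hT0]
  set ρ : ℝ := ‖z - y‖ with hρ
  have hρ1 : T * ‖d‖ - ‖p - y‖ ≤ ρ := by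
    have h1 : z - y = T • d - (-(p - y)) := by rw [hz]; abel
    have h2 := norm_sub_norm_le (T • d) (-(p - y))
    rw [← h1, norm_neg, hnTd] at h2
    exact h2
  have hρR : R ≤ ρ := by
    have : 0 ≤ ‖p‖ := norm_nonneg _
    linarith [hρ1, hTd]
  have hz0 : z ≠ 0 := by
    have h1 : z = T • d - (-p) := by rw [hz]; abel
    have h2 := norm_sub_norm_le (T • d) (-p)
    rw [← h1, norm_neg, hnTd] at h2
    have hzn : (0:ℝ) < ‖z‖ := by
      have h3 : (0:ℝ) < R := lt_of_lt_of_le one_pos (le_max_left _ _)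
      have : 0 ≤ ‖p - y‖ := norm_nonneg _
      linarith [hTd]
    exact norm_pos_iff.mp hzn
  have hmain := hstrong y z hy0 hz0
  have hL : -(M * ρ) ≤ fderiv ℝ f y (z - y) := by
    have h1 : ‖fderiv ℝ f y (z - y)‖ ≤ M * ρ := (fderiv ℝ f y).le_opNorm (z - y)
    have h2 := neg_abs_le (fderiv ℝ f y (z - y))
    rw [Real.norm_eq_abs] at h1
    linarith [h2, neg_le_neg h1]
  have hρ1' : 1 ≤ ρ := le_trans (le_max_left _ _) hρR
  have hγρ : γ * ρ / 2 - M ≥ 1 := by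
    have h1 : 2 * (M + 1) / γ ≤ ρ := le_trans (le_max_right _ _) hρR
    have h2 : 2 * (M + 1) ≤ γ * ρ := by
      rw [div_le_iff₀ hγ] at h1
      linarith
    linarith
  have hquad : γ / 2 * ρ ^ 2 - M * ρ ≥ 1 := by
    have : γ / 2 * ρ ^ 2 - M * ρ = ρ * (γ * ρ / 2 - M) := by ring
    rw [this]
    nlinarith
  rw [hyr] at hmain
  linarith


variable [CompleteSpace E]

lemma grad_apply (h : E → ℝ) (x z : E) :
    fderiv ℝ h x z = (inner ℝ (gradient h x) z : ℝ) := by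
  unfold gradient
  exact (InnerProductSpace.toDual_symm_apply).symm

lemma grad_ne {h : E → ℝ} {x : E} (hne : fderiv ℝ h x ≠ 0) : gradient h x ≠ 0 := by
  intro hz
  apply hne
  unfold gradient at hz
  rwa [LinearIsometryEquiv.map_eq_zero_iff] at hz

lemma grad_self (h : E → ℝ) (x : E) :
    fderiv ℝ h x (gradient h x) = ‖gradient h x‖ ^ 2 := by
  rw [grad_apply, real_inner_self_eq_norm_sq]


lemma level_proj_bound {f g : E → ℝ} {r : ℝ}
    (hf_smooth : ContDiffOn ℝ (⊤ : ℕ∞) f {(0:E)}ᶜ)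
    (hg_smooth : ContDiffOn ℝ (⊤ : ℕ∞) g {(0:E)}ᶜ)
    (hf_conv : ConvexOn ℝ Set.univ f) (hf_cont : Continuous f)
    (hsub : ∀ x : E, f x = r → g x = r)
    {y₀ : E} (hy0 : y₀ ≠ 0) (hyr : f y₀ = r) (hreg : fderiv ℝ f y₀ ≠ 0) :
    ∃ K : ℝ, 0 ≤ K ∧ ∀ᶠ x in 𝓝 y₀, |g x - r| ≤ K * |f x - r| := by
  have hU : IsOpen ({(0:E)}ᶜ) := isOpen_compl_singleton
  have hy₀U : y₀ ∈ ({(0:E)}ᶜ : Set E) := hy0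
  have h1top : (1 : WithTop ℕ∞) ≤ ((⊤ : ℕ∞) : WithTop ℕ∞) := by
    exact_mod_cast (le_top : (1:ℕ∞) ≤ ⊤)
  have hfd : ∀ x : E, x ≠ 0 → DifferentiableAt ℝ f x := fun x hx =>
    (hf_smooth.contDiffAt (hU.mem_nhds hx)).differentiableAt (by simp)
  set u : E := (InnerProductSpace.toDual ℝ E).symm (fderiv ℝ f y₀) with hu
  have hfu : fderiv ℝ f y₀ u = ‖u‖ ^ 2 := by
    have h1 := InnerProductSpace.toDual_symm_apply (𝕜 := ℝ) (E := E)
      (y := fderiv ℝ f y₀) (x := u)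
    rw [← hu] at h1
    rw [← h1, real_inner_self_eq_norm_sq]
  have hune : u ≠ 0 := by
    intro h
    apply hreg
    rw [hu, LinearIsometryEquiv.map_eq_zero_iff] at h
    exact h
  set a : ℝ := ‖u‖ ^ 2 with ha'
  have ha : 0 < a := by
    have := norm_pos_iff.mpr hune
    positivity
  have hf' : ContDiffOn ℝ (⊤ : ℕ∞) (fderiv ℝ f) {(0:E)}ᶜ :=
    ((contDiffOn_infty_iff_fderiv_of_isOpen hU).mp hf_smooth).2
  have hcder : ContinuousOn (fun x => fderiv ℝ f x u) {(0:E)}ᶜ :=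
    (ContinuousLinearMap.apply ℝ ℝ u).continuous.comp_continuousOn hf'.continuousOn
  have hca : ContinuousAt (fun x => fderiv ℝ f x u) y₀ :=
    hcder.continuousAt (hU.mem_nhds hy₀U)
  have hev1 : ∀ᶠ x in 𝓝 y₀, a / 2 < fderiv ℝ f x u := by
    have hlt : a / 2 < fderiv ℝ f y₀ u := by rw [hfu]; linarith
    exact hca.eventually_const_lt hlt
  obtain ⟨K₁, t, ht, hK₁⟩ :=
    ((hg_smooth.contDiffAt (hU.mem_nhds hy₀U)).of_le h1top).exists_lipschitzOnWith
  have hmem : (t ∩ {x | a / 2 < fderiv ℝ f x u} ∩ {(0:E)}ᶜ) ∈ 𝓝 y₀ :=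
    inter_mem (inter_mem ht hev1) (hU.mem_nhds hy₀U)
  obtain ⟨ε, hε, hball⟩ := Metric.mem_nhds_iff.mp hmem
  refine ⟨4 * (K₁ : ℝ) * ‖u‖ / a, by positivity, ?_⟩
  have hev2 : ∀ᶠ x in 𝓝 y₀, |f x - r| < a * ε / (8 * (‖u‖ + 1)) := by
    have hc : ContinuousAt (fun x => |f x - r|) y₀ :=
      ((hf_cont.continuousAt).sub continuousAt_const).abs
    apply hc.eventually_lt_const
    simp [hyr]
    positivity
  have hev3 : ∀ᶠ x in 𝓝 y₀, x ∈ Metric.ball y₀ (ε / 2) :=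
    Metric.ball_mem_nhds _ (by positivity)
  filter_upwards [hev2, hev3] with x hx2 hx3
  set δ : ℝ := f x - r with hδ
  set s₁ : ℝ := 4 * |δ| / a with hs₁
  have hs₁0 : 0 ≤ s₁ := by positivity
  have hnu : (0:ℝ) < ‖u‖ := norm_pos_iff.mpr hune
  have hs₁u : s₁ * ‖u‖ < ε / 2 := by
    have h1 : |δ| * (8 * (‖u‖ + 1)) < a * ε := (lt_div_iff₀ (by positivity)).mp hx2
    have h2 : s₁ * ‖u‖ = 4 * |δ| * ‖u‖ / a := by rw [hs₁]; ring
    rw [h2, div_lt_iff₀ ha]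
    nlinarith [abs_nonneg δ]
  have hxball : ‖x - y₀‖ < ε / 2 := by
    rw [← dist_eq_norm]; exact hx3
  -- membership of perturbed points
  have hseg : ∀ s : ℝ, |s| ≤ s₁ → x + s • u ∈ Metric.ball y₀ ε := by
    intro s hs
    rw [Metric.mem_ball, dist_eq_norm]
    have h1 : x + s • u - y₀ = (x - y₀) + s • u := by abel
    rw [h1]
    calc ‖(x - y₀) + s • u‖ ≤ ‖x - y₀‖ + ‖s • u‖ := norm_add_le _ _
      _ ≤ ε / 2 + s₁ * ‖u‖ := by
          rw [norm_smul, Real.norm_eq_abs]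
          have : |s| * ‖u‖ ≤ s₁ * ‖u‖ := mul_le_mul_of_nonneg_right hs (norm_nonneg u)
          linarith
      _ < ε := by linarith [hs₁u]
  have hclaim : ∃ p : E, f p = r ∧ ‖x - p‖ ≤ s₁ * ‖u‖ ∧ p ∈ Metric.ball y₀ ε := by
    rcases le_or_gt r (f x) with hge | hlt
    · -- go backwards
      have habs : |δ| = δ := abs_of_nonneg (by rw [hδ]; linarith)
      set xm : E := x - s₁ • u with hxm
      have hxmball : xm ∈ Metric.ball y₀ ε := by
        have := hseg (-s₁) (by rw [abs_neg, abs_of_nonneg hs₁0])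
        simpa [hxm, sub_eq_add_neg, neg_smul] using this
      have hxm0 : xm ≠ 0 := (hball hxmball).2
      have hxmder : a / 2 < fderiv ℝ f xm u := (hball hxmball).1.2
      have hsupp := convexOn_support_ineq hf_conv (hfd xm hxm0) x
      have hxx : x - xm = s₁ • u := by rw [hxm]; abel
      rw [hxx] at hsupp
      have hder : fderiv ℝ f xm (s₁ • u) = s₁ * fderiv ℝ f xm u := by
        rw [map_smul]; rfl
      have hfxm : f xm ≤ r := by
        rw [hder] at hsupp
        have h2 : s₁ * (a / 2) ≤ s₁ * fderiv ℝ f xm u :=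
          mul_le_mul_of_nonneg_left (le_of_lt hxmder) hs₁0
        have h3 : s₁ * (a / 2) = 2 * |δ| := by rw [hs₁]; field_simp; ring
        have h4 : f x = r + δ := by rw [hδ]; ring
        rw [habs] at h3
        linarith
      -- IVT
      have hcont : ContinuousOn (fun s : ℝ => f (x - s • u)) (Icc 0 s₁) :=
        (hf_cont.comp (continuous_const.sub (continuous_id.smul continuous_const))).continuousOn
      have hivt := intermediate_value_Icc' hs₁0 hcont
      have hrmem : r ∈ Icc (f (x - s₁ • u)) (f (x - (0:ℝ) • u)) := by
        constructor
        · exact hfxm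
        · simpa using hge
      obtain ⟨s, hsmem, hps⟩ := hivt hrmem
      refine ⟨x - s • u, hps, ?_, ?_⟩
      · have : x - (x - s • u) = s • u := by abel
        rw [this, norm_smul, Real.norm_eq_abs, abs_of_nonneg hsmem.1]
        exact mul_le_mul_of_nonneg_right hsmem.2 (norm_nonneg u)
      · have := hseg (-s) (by rw [abs_neg, abs_of_nonneg hsmem.1]; exact hsmem.2)
        simpa [sub_eq_add_neg, neg_smul] using this
    · -- go forward
      have habs : |δ| = -δ := abs_of_neg (by rw [hδ]; linarith)
      have hx0 : x ≠ 0 := by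
        have : x ∈ Metric.ball y₀ ε := by
          apply Metric.ball_subset_ball (by linarith) hx3
        exact (hball this).2
      have hxder : a / 2 < fderiv ℝ f x u := by
        have : x ∈ Metric.ball y₀ ε := Metric.ball_subset_ball (by linarith) hx3
        exact (hball this).1.2
      have hsupp := convexOn_support_ineq hf_conv (hfd x hx0) (x + s₁ • u)
      have hxx : x + s₁ • u - x = s₁ • u := by abel
      rw [hxx] at hsupp
      have hder : fderiv ℝ f x (s₁ • u) = s₁ * fderiv ℝ f x u := by
        rw [map_smul]; rfl
      have hfxp : r ≤ f (x + s₁ • u) := by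
        rw [hder] at hsupp
        have h2 : s₁ * (a / 2) ≤ s₁ * fderiv ℝ f x u :=
          mul_le_mul_of_nonneg_left (le_of_lt hxder) hs₁0
        have h3 : s₁ * (a / 2) = 2 * |δ| := by rw [hs₁]; field_simp; ring
        have h4 : f x = r + δ := by rw [hδ]; ring
        rw [habs] at h3
        linarith
      have hcont : ContinuousOn (fun s : ℝ => f (x + s • u)) (Icc 0 s₁) :=
        (hf_cont.comp (continuous_const.add (continuous_id.smul continuous_const))).continuousOn
      have hivt := intermediate_value_Icc hs₁0 hcont
      have hrmem : r ∈ Icc (f (x + (0:ℝ) • u)) (f (x + s₁ • u)) := by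
        constructor
        · simpa using le_of_lt hlt
        · exact hfxp
      obtain ⟨s, hsmem, hps⟩ := hivt hrmem
      refine ⟨x + s • u, hps, ?_, ?_⟩
      · have : x - (x + s • u) = -(s • u) := by abel
        rw [this, norm_neg, norm_smul, Real.norm_eq_abs, abs_of_nonneg hsmem.1]
        exact mul_le_mul_of_nonneg_right hsmem.2 (norm_nonneg u)
      · exact hseg s (by rw [abs_of_nonneg hsmem.1]; exact hsmem.2)
  obtain ⟨p, hpr, hpd, hpball⟩ := hclaim
  have hgp : g p = r := hsub p hpr
  have hxt : x ∈ t := (hball (Metric.ball_subset_ball (by linarith) hx3)).1.1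
  have hpt : p ∈ t := (hball hpball).1.1
  have hlipb := hK₁.dist_le_mul x hxt p hpt
  rw [dist_eq_norm, dist_eq_norm] at hlipb
  have h1 : |g x - r| = ‖g x - g p‖ := by rw [hgp]; rw [Real.norm_eq_abs]
  rw [h1]
  calc ‖g x - g p‖ ≤ K₁ * ‖x - p‖ := hlipb
    _ ≤ K₁ * (s₁ * ‖u‖) := by
        exact mul_le_mul_of_nonneg_left hpd (NNReal.coe_nonneg K₁)
    _ = 4 * (K₁ : ℝ) * ‖u‖ / a * |δ| := by rw [hs₁]; field_simp


lemma no_crossing {f g : E → ℝ} {r γ : ℝ} (hγ : 0 < γ)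
    (hf_cont : Continuous f) (hg_conv : ConvexOn ℝ Set.univ g)
    (hstrong : ∀ y z : E, y ≠ 0 → z ≠ 0 →
      f z ≥ f y + fderiv ℝ f y (z - y) + γ / 2 * ‖z - y‖ ^ 2)
    (hsub : ∀ x : E, f x = r → g x = r)
    {y : E} (hy0 : y ≠ 0) (hyr : f y = r)
    {p : E} (hfp : f p < r) (hgp : r < g p) : False := by
  obtain ⟨T₁, hT₁, hfT₁⟩ := exists_far_point hγ hstrong hy0 hyr p y hy0
  obtain ⟨T₂, hT₂, hfT₂⟩ := exists_far_point hγ hstrong hy0 hyr p (-y) (neg_ne_zero.mpr hy0)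
  have hc1 : ContinuousOn (fun s : ℝ => f (p + s • y)) (Icc 0 T₁) :=
    (hf_cont.comp (continuous_const.add (continuous_id.smul continuous_const))).continuousOn
  have hc2 : ContinuousOn (fun s : ℝ => f (p + s • (-y))) (Icc 0 T₂) :=
    (hf_cont.comp (continuous_const.add (continuous_id.smul continuous_const))).continuousOn
  obtain ⟨t₁, ht₁mem, ht₁⟩ := intermediate_value_Icc (le_of_lt hT₁) hc1
    ⟨by simpa using le_of_lt hfp, le_of_lt hfT₁⟩
  obtain ⟨t₂, ht₂mem, ht₂⟩ := intermediate_value_Icc (le_of_lt hT₂) hc2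
    ⟨by simpa using le_of_lt hfp, le_of_lt hfT₂⟩
  have ht₁pos : 0 < t₁ := by
    rcases eq_or_lt_of_le ht₁mem.1 with h | h
    · exfalso
      rw [← h] at ht₁
      simp at ht₁
      rw [ht₁] at hfp
      exact lt_irrefl r hfp
    · exact h
  have ht₂pos : 0 < t₂ := by
    rcases eq_or_lt_of_le ht₂mem.1 with h | h
    · exfalso
      rw [← h] at ht₂
      simp at ht₂
      rw [ht₂] at hfp
      exact lt_irrefl r hfp
    · exact h
  set x₁ : E := p + t₁ • y with hx₁def
  set x₂ : E := p + t₂ • (-y) with hx₂def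
  have hg1 : g x₁ = r := hsub _ ht₁
  have hg2 : g x₂ = r := hsub _ ht₂
  set α : ℝ := t₂ / (t₁ + t₂) with hα'
  set β : ℝ := t₁ / (t₁ + t₂) with hβ'
  have hsum : 0 < t₁ + t₂ := by linarith
  have hα : 0 ≤ α := by positivity
  have hβ : 0 ≤ β := by positivity
  have hαβ : α + β = 1 := by rw [hα', hβ']; field_simp; ring
  have hcoef : α * t₁ = β * t₂ := by rw [hα', hβ']; field_simp
  have hcomb : α • x₁ + β • x₂ = p := by
    have h2 : α • x₁ + β • x₂ = (α + β) • p + (α * t₁ - β * t₂) • y := by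
      simp only [hx₁def, hx₂def, smul_add, smul_smul, smul_neg]
      rw [add_smul, sub_smul]
      abel
    rw [h2, hαβ, hcoef, sub_self, one_smul, zero_smul, add_zero]
  have hjen := hg_conv.2 (Set.mem_univ x₁) (Set.mem_univ x₂) hα hβ hαβ
  rw [hcomb, hg1, hg2] at hjen
  simp only [smul_eq_mul] at hjen
  have hr : α * r + β * r = r := by
    have : α * r + β * r = (α + β) * r := by ring
    rw [this, hαβ, one_mul]
  linarith




/-- Hessian comparison along a common level hypersurface: if smooth convex `f, g` share the
level set at the regular value `r`, `f` is strongly convex with respect to `√(γ/2)‖·‖`, and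
`∇g = λ ∇f` along the level set, then `λ > 0` there and
`(Hess g)(v,v) ≥ λ_m γ ‖v‖²` for tangent vectors `v`. -/
theorem hessian_comparison_level_set
    (n : ℕ) (f g lam : EuclideanSpace ℝ (Fin n) → ℝ) (r γ : ℝ) (hγ : 0 < γ)
    (hf_smooth : ContDiffOn ℝ (⊤ : ℕ∞) f {(0 : EuclideanSpace ℝ (Fin n))}ᶜ)
    (hg_smooth : ContDiffOn ℝ (⊤ : ℕ∞) g {(0 : EuclideanSpace ℝ (Fin n))}ᶜ)
    (hf_conv : ConvexOn ℝ Set.univ f)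
    (hg_conv : ConvexOn ℝ Set.univ g)
    (hlevel : f ⁻¹' {r} = g ⁻¹' {r})
    (h0 : (0 : EuclideanSpace ℝ (Fin n)) ∉ f ⁻¹' {r})
    (hreg_f : ∀ y ∈ f ⁻¹' {r}, fderiv ℝ f y ≠ 0)
    (hreg_g : ∀ y ∈ f ⁻¹' {r}, fderiv ℝ g y ≠ 0)
    (hcompact : IsCompact (f ⁻¹' {r}))
    (hlam_cont : ContinuousOn lam (f ⁻¹' {r}))
    (hlam : ∀ y ∈ f ⁻¹' {r}, gradient g y = lam y • gradient f y)
    (hstrong : ∀ y z : EuclideanSpace ℝ (Fin n), y ≠ 0 → z ≠ 0 →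
      f z ≥ f y + fderiv ℝ f y (z - y) + γ / 2 * ‖z - y‖ ^ 2) :
    (∀ y ∈ f ⁻¹' {r}, 0 < lam y) ∧
    (∀ y₀ ∈ f ⁻¹' {r}, ∀ v : EuclideanSpace ℝ (Fin n), fderiv ℝ f y₀ v = 0 →
      fderiv ℝ (fun x => fderiv ℝ g x v) y₀ v ≥ sInf (lam '' (f ⁻¹' {r})) * γ * ‖v‖ ^ 2) := by
  classical
  have hU : IsOpen ({(0 : EuclideanSpace ℝ (Fin n))}ᶜ : Set (EuclideanSpace ℝ (Fin n))) :=
    isOpen_compl_singleton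
  have h1top : (1 : WithTop ℕ∞) ≤ ((⊤ : ℕ∞) : WithTop ℕ∞) := by
    exact_mod_cast (le_top : (1:ℕ∞) ≤ ⊤)
  have hf_cont : Continuous f := continuousOn_univ.mp (hf_conv.continuousOn isOpen_univ)
  have hg_cont : Continuous g := continuousOn_univ.mp (hg_conv.continuousOn isOpen_univ)
  have hsub : ∀ x, f x = r → g x = r := by
    intro x hx
    have hx' : x ∈ f ⁻¹' {r} := hx
    rw [hlevel] at hx'
    exact hx'
  have hfd : ∀ x : EuclideanSpace ℝ (Fin n), x ≠ 0 → DifferentiableAt ℝ f x := fun x hx =>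
    (hf_smooth.contDiffAt (hU.mem_nhds hx)).differentiableAt (by simp)
  have hgd : ∀ x : EuclideanSpace ℝ (Fin n), x ≠ 0 → DifferentiableAt ℝ g x := fun x hx =>
    (hg_smooth.contDiffAt (hU.mem_nhds hx)).differentiableAt (by simp)
  have hfg : ∀ y ∈ f ⁻¹' {r}, fderiv ℝ g y = lam y • fderiv ℝ f y := by
    intro y hy
    have h1 := congrArg (InnerProductSpace.toDual ℝ (EuclideanSpace ℝ (Fin n))) (hlam y hy)
    simp only [gradient, LinearIsometryEquiv.apply_symm_apply, map_smul] at h1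
    exact h1
  have part1 : ∀ y ∈ f ⁻¹' {r}, 0 < lam y := by
    intro y hy
    have hy0 : y ≠ 0 := fun h => h0 (by rwa [h] at hy)
    have hyr : f y = r := hy
    have hfgy := hfg y hy
    have hlamne : lam y ≠ 0 := by
      intro h
      exact hreg_g y hy (by rw [hfgy, h, zero_smul])
    rcases hlamne.lt_or_gt with hneg | hpos
    swap
    · exact hpos
    exfalso
    set ug : EuclideanSpace ℝ (Fin n) := gradient g y with hug
    set uf : EuclideanSpace ℝ (Fin n) := gradient f y with huf
    have hufne : uf ≠ 0 := grad_ne (hreg_f y hy)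
    have hugne : ug ≠ 0 := grad_ne (hreg_g y hy)
    have hfug : fderiv ℝ f y ug = lam y * ‖uf‖ ^ 2 := by
      rw [grad_apply, hug, hlam y hy, real_inner_smul_right, real_inner_self_eq_norm_sq]
    have hfug_neg : fderiv ℝ f y ug < 0 := by
      rw [hfug]
      have : (0:ℝ) < ‖uf‖ ^ 2 := by
        have := norm_pos_iff.mpr hufne
        positivity
      exact mul_neg_of_neg_of_pos hneg this
    have hθ : HasDerivAt (fun s : ℝ => f (y + s • ug)) (fderiv ℝ f y ug) 0 := by
      have hline : HasDerivAt (fun s : ℝ => y + s • ug) ug 0 := by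
        simpa using ((hasDerivAt_id (0:ℝ)).smul_const ug).const_add y
      have h1 : HasFDerivAt f (fderiv ℝ f y) (y + (0:ℝ) • ug) := by
        simpa using (hfd y hy0).hasFDerivAt
      simpa [Function.comp_def] using h1.comp_hasDerivAt 0 hline
    have hslope := hasDerivAt_iff_tendsto_slope.mp hθ
    have hslope' : Filter.Tendsto (slope (fun s : ℝ => f (y + s • ug)) 0) (nhdsWithin 0 (Set.Ioi 0))
        (nhds (fderiv ℝ f y ug)) :=
      hslope.mono_left (nhdsWithin_mono _ (fun s hs => ne_of_gt hs))
    have hev : ∀ᶠ s in nhdsWithin (0:ℝ) (Set.Ioi 0),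
        slope (fun s : ℝ => f (y + s • ug)) 0 s < 0 :=
      hslope'.eventually_lt_const hfug_neg
    obtain ⟨ε, hslope_neg, hε⟩ := (hev.and self_mem_nhdsWithin).exists
    have hεpos : (0:ℝ) < ε := hε
    have hfp : f (y + ε • ug) < r := by
      rw [slope_def_field] at hslope_neg
      have h00 : f (y + (0:ℝ) • ug) = r := by simpa using hyr
      rw [h00] at hslope_neg
      by_contra hcon
      push_neg at hcon
      have : 0 ≤ (f (y + ε • ug) - r) / (ε - 0) := div_nonneg (by linarith) (by linarith)
      linarith
    have hgp : r < g (y + ε • ug) := by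
      have hsupp := convexOn_support_ineq hg_conv (hgd y hy0) (y + ε • ug)
      have h1 : y + ε • ug - y = ε • ug := by abel
      rw [h1] at hsupp
      have h2 : fderiv ℝ g y (ε • ug) = ε * ‖ug‖ ^ 2 := by
        rw [map_smul, smul_eq_mul, grad_self]
      have h3 : 0 < ε * ‖ug‖ ^ 2 := by
        have := norm_pos_iff.mpr hugne
        positivity
      have h4 : g y = r := hsub y hyr
      rw [h2, h4] at hsupp
      linarith
    exact no_crossing hγ hf_cont hg_conv hstrong hsub hy0 hyr hfp hgp
  refine ⟨part1, ?_⟩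
  intro y₀ hy₀ v hv
  have hy0ne : y₀ ≠ 0 := fun h => h0 (by rwa [h] at hy₀)
  have hyr : f y₀ = r := hy₀
  have hfgy := hfg y₀ hy₀
  have hlam_pos := part1 y₀ hy₀
  have hf' : ContDiffOn ℝ (⊤ : ℕ∞) (fderiv ℝ f) {(0 : EuclideanSpace ℝ (Fin n))}ᶜ :=
    ((contDiffOn_infty_iff_fderiv_of_isOpen hU).mp hf_smooth).2
  have hg' : ContDiffOn ℝ (⊤ : ℕ∞) (fderiv ℝ g) {(0 : EuclideanSpace ℝ (Fin n))}ᶜ :=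
    ((contDiffOn_infty_iff_fderiv_of_isOpen hU).mp hg_smooth).2
  have hfd2 : DifferentiableAt ℝ (fderiv ℝ f) y₀ :=
    (hf'.contDiffAt (hU.mem_nhds hy0ne)).differentiableAt (by simp)
  have hgd2 : DifferentiableAt ℝ (fderiv ℝ g) y₀ :=
    (hg'.contDiffAt (hU.mem_nhds hy0ne)).differentiableAt (by simp)
  set D2f := fderiv ℝ (fderiv ℝ f) y₀ with hD2f
  set D2g := fderiv ℝ (fderiv ℝ g) y₀ with hD2g
  set Hf : ℝ := D2f v v with hHfdef
  set Hg : ℝ := D2g v v with hHgdef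
  have hrepr : fderiv ℝ (fun x => fderiv ℝ g x v) y₀ v = Hg := by
    rw [fderiv_clm_apply hgd2 (differentiableAt_const v)]
    simp [ContinuousLinearMap.flip_apply, hHgdef, hD2g]
  rw [hrepr]
  -- gradient of f at y₀
  set u : EuclideanSpace ℝ (Fin n) := gradient f y₀ with hu
  have hune : u ≠ 0 := grad_ne (hreg_f y₀ hy₀)
  set a : ℝ := ‖u‖ ^ 2 with ha'
  have ha : 0 < a := by
    have := norm_pos_iff.mpr hune
    positivity
  have hfa : fderiv ℝ f y₀ u = a := grad_self f y₀
  set w : EuclideanSpace ℝ (Fin n) := (-(Hf / (2 * a))) • u with hw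
  have hfw : fderiv ℝ f y₀ w = -(Hf / 2) := by
    rw [hw, map_smul, smul_eq_mul, hfa]
    field_simp
  have hgv : fderiv ℝ g y₀ v = 0 := by
    rw [hfgy, ContinuousLinearMap.smul_apply, hv, smul_eq_mul, mul_zero]
  have hgw : fderiv ℝ g y₀ w = lam y₀ * -(Hf / 2) := by
    rw [hfgy, ContinuousLinearMap.smul_apply, hfw, smul_eq_mul]
  -- the curve
  set c : ℝ → EuclideanSpace ℝ (Fin n) := fun t => y₀ + t • v + t ^ 2 • w with hc
  have hc0 : c 0 = y₀ := by simp [hc]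
  have hcder : ∀ t : ℝ, HasDerivAt c (v + (2 * t) • w) t := by
    intro t
    have h1 : HasDerivAt (fun s : ℝ => y₀ + s • v) v t := by
      simpa using ((hasDerivAt_id t).smul_const v).const_add y₀
    have h2 : HasDerivAt (fun s : ℝ => s ^ 2 • w) ((2 * t) • w) t := by
      have h3 := (hasDerivAt_pow 2 t).smul_const w
      simpa [pow_one] using h3
    exact h1.add h2
  have hccont : Continuous c := by
    apply Continuous.add
    · exact continuous_const.add (continuous_id.smul continuous_const)
    · exact (continuous_pow 2).smul continuous_const
  have hctend : Filter.Tendsto c (nhds 0) (nhds y₀) := by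
    rw [← hc0]
    exact hccont.continuousAt
  have hcne : ∀ᶠ t in nhds (0:ℝ), c t ≠ 0 := hctend.eventually_ne hy0ne
  -- F and its derivatives
  set F : ℝ → ℝ := fun t => f (c t) with hF
  set F' : ℝ → ℝ := fun t => fderiv ℝ f (c t) (v + (2 * t) • w) with hF'
  have hFder : ∀ᶠ t in nhds (0:ℝ), HasDerivAt F (F' t) t := by
    filter_upwards [hcne] with t ht
    exact (hfd (c t) ht).hasFDerivAt.comp_hasDerivAt t (hcder t)
  have hF'0 : F' 0 = 0 := by
    simp [hF', hc0, hv]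
  have hvw : HasDerivAt (fun t : ℝ => v + (2 * t) • w) ((2:ℝ) • w) 0 := by
    have hm : HasDerivAt (fun t : ℝ => 2 * t) 2 (0:ℝ) := by
      simpa using (hasDerivAt_id (0:ℝ)).const_mul (2:ℝ)
    simpa using (hm.smul_const w).const_add v
  have hAf : HasDerivAt (fun t => fderiv ℝ f (c t)) (D2f v) 0 := by
    have h1 : HasFDerivAt (fderiv ℝ f) D2f (c 0) := by rw [hc0]; exact hfd2.hasFDerivAt
    have h2 := h1.comp_hasDerivAt 0 (hcder 0)
    simpa [Function.comp_def] using h2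
  have hF'der : HasDerivAt F' (Hf + 2 * fderiv ℝ f y₀ w) 0 := by
    have h := hAf.clm_apply hvw
    have he : (D2f v) (v + (2 * (0:ℝ)) • w) + (fderiv ℝ f (c 0)) ((2:ℝ) • w)
        = Hf + 2 * fderiv ℝ f y₀ w := by
      rw [hc0]
      simp [map_smul, smul_eq_mul, hHfdef]
    exact he ▸ h
  have hQf : Hf + 2 * fderiv ℝ f y₀ w = 0 := by rw [hfw]; ring
  have hF0 : F 0 = r := by simp [hF, hc0, hyr]
  have hlimF : Filter.Tendsto (fun t => (F t - r) / t ^ 2) (nhdsWithin 0 {(0:ℝ)}ᶜ) (nhds 0) := by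
    have h := tendsto_sub_div_sq hFder hF'0 hF'der
    rw [hF0, hQf] at h
    simpa using h
  -- G and its derivatives
  set G : ℝ → ℝ := fun t => g (c t) with hG
  set G' : ℝ → ℝ := fun t => fderiv ℝ g (c t) (v + (2 * t) • w) with hG'
  have hGder : ∀ᶠ t in nhds (0:ℝ), HasDerivAt G (G' t) t := by
    filter_upwards [hcne] with t ht
    exact (hgd (c t) ht).hasFDerivAt.comp_hasDerivAt t (hcder t)
  have hG'0 : G' 0 = 0 := by
    simp [hG', hc0, hgv]
  have hAg : HasDerivAt (fun t => fderiv ℝ g (c t)) (D2g v) 0 := by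
    have h1 : HasFDerivAt (fderiv ℝ g) D2g (c 0) := by rw [hc0]; exact hgd2.hasFDerivAt
    have h2 := h1.comp_hasDerivAt 0 (hcder 0)
    simpa [Function.comp_def] using h2
  have hG'der : HasDerivAt G' (Hg + 2 * fderiv ℝ g y₀ w) 0 := by
    have h := hAg.clm_apply hvw
    have he : (D2g v) (v + (2 * (0:ℝ)) • w) + (fderiv ℝ g (c 0)) ((2:ℝ) • w)
        = Hg + 2 * fderiv ℝ g y₀ w := by
      rw [hc0]
      simp [map_smul, smul_eq_mul, hHgdef]
    exact he ▸ h
  have hG0 : G 0 = r := by simp [hG, hc0, hsub y₀ hyr]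
  have hlimG : Filter.Tendsto (fun t => (G t - r) / t ^ 2) (nhdsWithin 0 {(0:ℝ)}ᶜ)
      (nhds ((Hg + 2 * fderiv ℝ g y₀ w) / 2)) := by
    have h := tendsto_sub_div_sq hGder hG'0 hG'der
    rwa [hG0] at h
  -- projection bound and squeeze
  obtain ⟨K, hK0, hKev⟩ :=
    level_proj_bound hf_smooth hg_smooth hf_conv hf_cont hsub hy0ne hyr (hreg_f y₀ hy₀)
  have hcev : ∀ᶠ t in nhds (0:ℝ), |g (c t) - r| ≤ K * |f (c t) - r| := hctend.eventually hKev
  have hzero : Filter.Tendsto (fun t => (G t - r) / t ^ 2) (nhdsWithin 0 {(0:ℝ)}ᶜ) (nhds 0) := by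
    apply squeeze_zero_norm' (a := fun t => K * |(F t - r) / t ^ 2|)
    · filter_upwards [hcev.filter_mono nhdsWithin_le_nhds, self_mem_nhdsWithin]
        with t ht (ht0 : t ≠ 0)
      have ht2 : (0:ℝ) < |t ^ 2| := by positivity
      rw [Real.norm_eq_abs, abs_div, abs_div, ← mul_div_assoc]
      gcongr
    · have h := hlimF.abs.const_mul K
      simpa using h
  have hQg2 : (Hg + 2 * fderiv ℝ g y₀ w) / 2 = 0 := tendsto_nhds_unique hlimG hzero
  have hHgval : Hg = lam y₀ * Hf := by
    rw [hgw] at hQg2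
    field_simp at hQg2
    linarith
  -- strong convexity bound on Hf
  have hsineq : ∀ᶠ t in nhdsWithin (0:ℝ) {(0:ℝ)}ᶜ,
      fderiv ℝ f y₀ w + γ / 2 * ‖v + t • w‖ ^ 2 ≤ (F t - r) / t ^ 2 := by
    filter_upwards [hcne.filter_mono nhdsWithin_le_nhds, self_mem_nhdsWithin]
      with t hct (ht : t ≠ 0)
    have hst := hstrong y₀ (c t) hy0ne hct
    have hdiff : c t - y₀ = t • (v + t • w) := by
      rw [hc]
      simp only [smul_add, smul_smul]
      rw [pow_two]
      abel
    have hlin : fderiv ℝ f y₀ (c t - y₀) = t ^ 2 * fderiv ℝ f y₀ w := by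
      rw [hdiff, map_smul, map_add, map_smul, hv, smul_eq_mul, smul_eq_mul]
      ring
    have hnorm : ‖c t - y₀‖ ^ 2 = t ^ 2 * ‖v + t • w‖ ^ 2 := by
      rw [hdiff, norm_smul, mul_pow, Real.norm_eq_abs, sq_abs]
    rw [hyr, hlin, hnorm] at hst
    have ht2 : (0:ℝ) < t ^ 2 := by positivity
    rw [le_div_iff₀ ht2]
    have h2 : (fderiv ℝ f y₀ w + γ / 2 * ‖v + t • w‖ ^ 2) * t ^ 2
        = t ^ 2 * fderiv ℝ f y₀ w + γ / 2 * (t ^ 2 * ‖v + t • w‖ ^ 2) := by ring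
    rw [h2]
    linarith [hst]
  have hrhs : Filter.Tendsto (fun t : ℝ => fderiv ℝ f y₀ w + γ / 2 * ‖v + t • w‖ ^ 2)
      (nhdsWithin 0 {(0:ℝ)}ᶜ) (nhds (fderiv ℝ f y₀ w + γ / 2 * ‖v‖ ^ 2)) := by
    have hcont : Continuous (fun t : ℝ => fderiv ℝ f y₀ w + γ / 2 * ‖v + t • w‖ ^ 2) := by
      apply continuous_const.add
      apply continuous_const.mul
      exact ((continuous_const.add (continuous_id.smul continuous_const)).norm).pow 2
    have h := hcont.tendsto 0
    simp only [zero_smul, add_zero] at h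
    exact h.mono_left nhdsWithin_le_nhds
  have hkey : fderiv ℝ f y₀ w + γ / 2 * ‖v‖ ^ 2 ≤ 0 :=
    le_of_tendsto_of_tendsto hrhs hlimF hsineq
  have hHfb : γ * ‖v‖ ^ 2 ≤ Hf := by
    rw [hfw] at hkey
    linarith
  -- conclusion
  have hlamm : sInf (lam '' (f ⁻¹' {r})) ≤ lam y₀ :=
    csInf_le (hcompact.image_of_continuousOn hlam_cont).bddBelow ⟨y₀, hy₀, rfl⟩
  have h1 : lam y₀ * (γ * ‖v‖ ^ 2) ≤ lam y₀ * Hf :=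
    mul_le_mul_of_nonneg_left hHfb (le_of_lt hlam_pos)
  have h2 : sInf (lam '' (f ⁻¹' {r})) * (γ * ‖v‖ ^ 2) ≤ lam y₀ * (γ * ‖v‖ ^ 2) :=
    mul_le_mul_of_nonneg_right hlamm (by positivity)
  have h3 : sInf (lam '' (f ⁻¹' {r})) * γ * ‖v‖ ^ 2
      = sInf (lam '' (f ⁻¹' {r})) * (γ * ‖v‖ ^ 2) := by ring
  rw [ge_iff_le, h3, hHgval]
  linarith


end HessianAux
end

section
/- Let 𝔤 be a finite-dimensional Lie algebra with inner product and F_e a strongly convex asymmetric norm on 𝔤. For every 𝔞₀ ∈ 𝔤*\{0}, the initial value problem 𝔞̇(t) = 𝔞(t)([u(𝔞(t)), ·]), 𝔞(0) = 𝔞₀, admits a unique solution, and this solution is defined for all t ∈ ℝ. -/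
open Set
open scoped NNReal

private lemma hasDerivWithinAt_of_nmem_Icc {X : Type*} [NormedAddCommGroup X] [NormedSpace ℝ X]
    {f : ℝ → X} {f' : X} {p q t : ℝ} (h : t ∉ Icc p q) :
    HasDerivWithinAt f f' (Icc p q) t :=
  hasDerivWithinAt_iff_hasFDerivWithinAt.mpr <|
    HasFDerivWithinAt.of_notMem_closure (by rwa [isClosed_Icc.closure_eq])

private lemma pl_step {X : Type*} [NormedAddCommGroup X] [NormedSpace ℝ X] [CompleteSpace X]
    (v : X → X) (K : ℝ≥0) (hv : LipschitzWith K v) (t₀ : ℝ) (x₀ : X) :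
    ∃ f : ℝ → X, f t₀ = x₀ ∧ ∀ t ∈ Icc (t₀ - (2*(K:ℝ)+2)⁻¹) (t₀ + (2*(K:ℝ)+2)⁻¹),
      HasDerivWithinAt f (v (f t)) (Icc (t₀ - (2*(K:ℝ)+2)⁻¹) (t₀ + (2*(K:ℝ)+2)⁻¹)) t := by
  have hK : (0:ℝ) < 2*(K:ℝ)+2 := by positivity
  have hεpos : (0:ℝ) < (2*(K:ℝ)+2)⁻¹ := by positivity
  have hR0 : (0:ℝ) < ‖v x₀‖ + 1 := by positivity
  have hpl : IsPicardLindelof (fun _ : ℝ => v) (tmin := t₀ - (2*(K:ℝ)+2)⁻¹)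
      (tmax := t₀ + (2*(K:ℝ)+2)⁻¹) ⟨t₀, by constructor <;> linarith⟩
      x₀ (‖v x₀‖₊ + 1) 0 ((K+1) * (‖v x₀‖₊ + 1)) K := by
    constructor
    · exact fun _ _ => hv.lipschitzOnWith
    · exact fun _ _ => continuousOn_const
    · intro t _ x hx
      simp only [NNReal.coe_mul, NNReal.coe_add, NNReal.coe_one, coe_nnnorm] at hx ⊢
      have h1 : ‖v x - v x₀‖ ≤ (K:ℝ) * ‖x - x₀‖ := by
        simpa [dist_eq_norm] using hv.dist_le_mul x x₀
      have h2 : ‖x - x₀‖ ≤ ‖v x₀‖ + 1 := by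
        simpa [dist_eq_norm] using Metric.mem_closedBall.mp hx
      have h3 : ‖v x‖ - ‖v x₀‖ ≤ ‖v x - v x₀‖ := norm_sub_norm_le _ _
      have hKnn : (0:ℝ) ≤ K := K.coe_nonneg
      nlinarith [mul_le_mul_of_nonneg_left h2 hKnn, norm_nonneg (v x₀)]
    · simp only [NNReal.coe_mul, NNReal.coe_add, NNReal.coe_one, coe_nnnorm, NNReal.coe_zero,
        sub_zero]
      have : max (t₀ + (2*(K:ℝ)+2)⁻¹ - t₀) (t₀ - (t₀ - (2*(K:ℝ)+2)⁻¹)) = (2*(K:ℝ)+2)⁻¹ := by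
        rw [add_sub_cancel_left, sub_sub_cancel, max_self]
      rw [this]
      have h1 : (2*(K:ℝ)+2) * (2*(K:ℝ)+2)⁻¹ = 1 := mul_inv_cancel₀ hK.ne'
      nlinarith [K.coe_nonneg]
  obtain ⟨f, hf0, hf⟩ := hpl.exists_eq_forall_mem_Icc_hasDerivWithinAt₀
  exact ⟨f, hf0, hf⟩

private lemma global_exists {X : Type*} [NormedAddCommGroup X] [NormedSpace ℝ X] [CompleteSpace X]
    (v : X → X) (K : ℝ≥0) (hv : LipschitzWith K v) (x₀ : X) :
    ∃ f : ℝ → X, f 0 = x₀ ∧ ∀ t, HasDerivAt f (v (f t)) t := by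
  set ε : ℝ := (2*(K:ℝ)+2)⁻¹ with hεdef
  have hε0 : 0 < ε := by positivity
  have P : ∀ n : ℕ, ∃ f : ℝ → X, f 0 = x₀ ∧ ∀ t ∈ Icc (-(((n:ℝ)+1)*ε)) (((n:ℝ)+1)*ε),
      HasDerivWithinAt f (v (f t)) (Icc (-(((n:ℝ)+1)*ε)) (((n:ℝ)+1)*ε)) t := by
    intro n
    induction n with
    | zero =>
      obtain ⟨f, hf0, hf⟩ := pl_step v K hv 0 x₀
      refine ⟨f, hf0, ?_⟩
      have e1 : -((((0:ℕ):ℝ)+1)*ε) = 0 - ε := by push_cast; ring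
      have e2 : (((0:ℕ):ℝ)+1)*ε = 0 + ε := by push_cast; ring
      rw [e1, e2]
      exact hf
    | succ n ih =>
      obtain ⟨f, hf0, hf⟩ := ih
      set b : ℝ := ((n:ℝ)+1)*ε with hbdef
      have hb0 : 0 < b := by positivity
      obtain ⟨gp, hgp0, hgp⟩ := pl_step v K hv b (f b)
      obtain ⟨gm, hgm0, hgm⟩ := pl_step v K hv (-b) (f (-b))
      have hbig : (((n:ℕ)+1:ℕ):ℝ)+1 = ((n:ℝ)+1)+1 := by push_cast; ring
      have hbe : ((((n:ℕ)+1:ℕ):ℝ)+1)*ε = b + ε := by rw [hbig]; ring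
      refine ⟨fun t => if t < -b then gm t else if t ≤ b then f t else gp t, ?_, ?_⟩
      · show (if (0:ℝ) < -b then gm 0 else if (0:ℝ) ≤ b then f 0 else gp 0) = x₀
        rw [if_neg (by simp only [not_lt]; linarith : ¬ (0:ℝ) < -b), if_pos hb0.le]
        exact hf0
      · intro t ht
        rw [hbe] at ht ⊢
        set h : ℝ → X := fun t => if t < -b then gm t else if t ≤ b then f t else gp t with hh
        -- agreement lemmas
        have eqf : ∀ s ∈ Icc (-b) b, h s = f s := by
          intro s hs
          simp only [hh]
          rw [if_neg (not_lt.mpr hs.1), if_pos hs.2]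
        have eqgp : ∀ s ∈ Icc b (b+ε), h s = gp s := by
          intro s hs
          simp only [hh]
          rcases eq_or_lt_of_le hs.1 with h1 | h1
          · rw [if_neg (not_lt.mpr (by linarith)), if_pos (le_of_eq h1.symm), ← h1, hgp0]
          · rw [if_neg (not_lt.mpr (by linarith)), if_neg (not_le.mpr h1)]
        have eqgm : ∀ s ∈ Icc (-(b+ε)) (-b), h s = gm s := by
          intro s hs
          simp only [hh]
          rcases eq_or_lt_of_le hs.2 with h1 | h1
          · rw [if_neg (not_lt.mpr h1.ge), if_pos (by rw [h1]; linarith), h1, hgm0]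
          · rw [if_pos h1]
        -- derivative within each piece
        have dm : HasDerivWithinAt h (v (h t)) (Icc (-(b+ε)) (-b)) t := by
          by_cases htm : t ∈ Icc (-(b+ε)) (-b)
          · have sub1 : Icc (-(b+ε)) (-b) ⊆ Icc (-b - ε) (-b + ε) :=
              Icc_subset_Icc (by linarith) (by linarith)
            have := ((hgm t (sub1 htm)).mono sub1).congr_of_mem eqgm htm
            rwa [eqgm t htm]
          · exact hasDerivWithinAt_of_nmem_Icc htm
        have df : HasDerivWithinAt h (v (h t)) (Icc (-b) b) t := by
          by_cases htf : t ∈ Icc (-b) b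
          · have := (hf t htf).congr_of_mem eqf htf
            rwa [eqf t htf]
          · exact hasDerivWithinAt_of_nmem_Icc htf
        have dp : HasDerivWithinAt h (v (h t)) (Icc b (b+ε)) t := by
          by_cases htp : t ∈ Icc b (b+ε)
          · have sub1 : Icc b (b+ε) ⊆ Icc (b - ε) (b + ε) :=
              Icc_subset_Icc (by linarith) le_rfl
            have := ((hgp t (sub1 htp)).mono sub1).congr_of_mem eqgp htp
            rwa [eqgp t htp]
          · exact hasDerivWithinAt_of_nmem_Icc htp
        have hsub : Icc (-(b+ε)) (b+ε) ⊆ (Icc (-(b+ε)) (-b) ∪ Icc (-b) b) ∪ Icc b (b+ε) := by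
          intro s hs
          rcases le_total s (-b) with h1 | h1
          · exact Or.inl (Or.inl ⟨hs.1, h1⟩)
          · rcases le_total s b with h2 | h2
            · exact Or.inl (Or.inr ⟨h1, h2⟩)
            · exact Or.inr ⟨h2, hs.2⟩
        exact ((dm.union df).union dp).mono hsub
  choose sol hsol0 hsolD using P
  have hcont : ∀ n : ℕ, ContinuousOn (sol n) (Icc (-(((n:ℝ)+1)*ε)) (((n:ℝ)+1)*ε)) :=
    fun n t ht => (hsolD n t ht).continuousWithinAt
  have hderiv : ∀ n : ℕ, ∀ t ∈ Ioo (-(((n:ℝ)+1)*ε)) (((n:ℝ)+1)*ε),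
      HasDerivAt (sol n) (v (sol n t)) t := fun n t ht =>
    (hsolD n t (Ioo_subset_Icc_self ht)).hasDerivAt (Icc_mem_nhds ht.1 ht.2)
  have hcons : ∀ m n : ℕ, m ≤ n →
      EqOn (sol m) (sol n) (Icc (-(((m:ℝ)+1)*ε)) (((m:ℝ)+1)*ε)) := by
    intro m n hmn
    have hmn' : ((m:ℝ)+1)*ε ≤ ((n:ℝ)+1)*ε := by
      have : ((m:ℝ)+1) ≤ ((n:ℝ)+1) := by exact_mod_cast by omega
      nlinarith
    have hm0 : 0 < ((m:ℝ)+1)*ε := by positivity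
    refine ODE_solution_unique_of_mem_Icc (v := fun _ => v) (s := fun _ => univ)
      (fun _ _ => hv.lipschitzOnWith) (t₀ := 0) ⟨by linarith, hm0⟩
      (hcont m) (fun t ht => hderiv m t ht) (fun _ _ => trivial)
      ((hcont n).mono (Icc_subset_Icc (by linarith) hmn'))
      (fun t ht => hderiv n t (Ioo_subset_Ioo (by linarith) hmn' ht)) (fun _ _ => trivial)
      ((hsol0 m).trans (hsol0 n).symm)
  have hmem : ∀ (t : ℝ) (n : ℕ), |t| / ε ≤ (n:ℝ) → t ∈ Icc (-(((n:ℝ)+1)*ε)) (((n:ℝ)+1)*ε) := by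
    intro t n hn
    have h1 : |t| ≤ (n:ℝ)*ε := by
      rw [div_le_iff₀ hε0] at hn; linarith
    have h2 : |t| ≤ ((n:ℝ)+1)*ε := by nlinarith
    exact ⟨by linarith [neg_abs_le t], by linarith [le_abs_self t]⟩
  refine ⟨fun t => sol ⌈|t| / ε⌉₊ t, ?_, ?_⟩
  · simpa using hsol0 0
  · intro t
    set n : ℕ := ⌈|t| / ε⌉₊ with hn
    have htmem : t ∈ Ioo (-(((n:ℝ)+1)*ε)) (((n:ℝ)+1)*ε) := by
      have h1 := hmem t n (Nat.le_ceil _)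
      have h2 : |t| ≤ ((n:ℝ))*ε := by
        have := Nat.le_ceil (|t| / ε)
        rw [div_le_iff₀ hε0] at this; linarith
      constructor
      · have := neg_abs_le t; nlinarith
      · have := le_abs_self t; nlinarith
    have hev : (fun s => sol ⌈|s| / ε⌉₊ s) =ᶠ[nhds t] sol n := by
      have hopen : Ioo (-(((n:ℝ)+1)*ε)) (((n:ℝ)+1)*ε) ∈ nhds t :=
        Ioo_mem_nhds htmem.1 htmem.2
      filter_upwards [hopen] with s hs
      set m : ℕ := ⌈|s| / ε⌉₊ with hm
      have hsmemm : s ∈ Icc (-(((m:ℝ)+1)*ε)) (((m:ℝ)+1)*ε) := hmem s m (Nat.le_ceil _)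
      have hsmemn : s ∈ Icc (-(((n:ℝ)+1)*ε)) (((n:ℝ)+1)*ε) := Ioo_subset_Icc_self hs
      rcases le_total m n with hc | hc
      · exact hcons m n hc hsmemm
      · exact (hcons n m hc hsmemn).symm
    have hd := hderiv n t htmem
    have hft : (fun s => sol ⌈|s| / ε⌉₊ s) t = sol n t := by rfl
    rw [show v (sol ⌈|t| / ε⌉₊ t) = v (sol n t) from rfl]
    exact hd.congr_of_eventuallyEq hev

private lemma global_unique {X : Type*} [NormedAddCommGroup X] [NormedSpace ℝ X]
    (v : X → X) (K : ℝ≥0) (hv : LipschitzWith K v)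
    {f g : ℝ → X} (hf : ∀ t, HasDerivAt f (v (f t)) t) (hg : ∀ t, HasDerivAt g (v (g t)) t)
    (h0 : f 0 = g 0) : f = g := by
  funext t
  have habs : (0:ℝ) < |t| + 1 := by positivity
  refine ODE_solution_unique_of_mem_Icc (v := fun _ => v) (s := fun _ => univ)
    (fun _ _ => hv.lipschitzOnWith) (t₀ := 0) (a := -(|t|+1)) (b := |t|+1)
    ⟨by linarith, habs⟩
    (fun s _ => (hf s).continuousAt.continuousWithinAt)
    (fun s _ => hf s) (fun _ _ => trivial)
    (fun s _ => (hg s).continuousAt.continuousWithinAt)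
    (fun s _ => hg s) (fun _ _ => trivial) h0
    ⟨by linarith [neg_abs_le t], by linarith [le_abs_self t]⟩

set_option maxHeartbeats 6000000 in
/-- For a finite-dimensional Lie algebra with inner product and a strongly convex asymmetric
norm `F`, the initial value problem `𝔞̇(t) = 𝔞(t)([u(𝔞(t)), ·])`, `𝔞(0) = 𝔞₀ ≠ 0`,
admits a unique solution, defined for all `t ∈ ℝ`. -/
theorem vertical_extremal_global_existence_uniqueness
    {V : Type*} [NormedAddCommGroup V] [InnerProductSpace ℝ V] [FiniteDimensional ℝ V]
    (bracket : V →ₗ[ℝ] V →ₗ[ℝ] V)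
    (halt : ∀ x : V, bracket x x = 0)
    (hjacobi : ∀ x y z : V,
      bracket x (bracket y z) + bracket y (bracket z x) + bracket z (bracket x y) = 0)
    (F : V → ℝ) (γ : ℝ) (hγ : 0 < γ)
    (hF_nonneg : ∀ y, 0 ≤ F y)
    (hF_zero : ∀ y, F y = 0 → y = 0)
    (hF_homog : ∀ (μ : ℝ) (y : V), 0 ≤ μ → F (μ • y) = μ * F y)
    (hF_triangle : ∀ y z, F (y + z) ≤ F y + F z)
    (hsc : ∀ (y z : V) (α : V →L[ℝ] ℝ),
      (∀ w, F w ^ 2 ≥ F y ^ 2 + α (w - y)) →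
      F z ^ 2 ≥ F y ^ 2 + α (z - y) + γ / 2 * ‖z - y‖ ^ 2)
    (u : (V →L[ℝ] ℝ) → V)
    (hu : ∀ α : V →L[ℝ] ℝ, α ≠ 0 →
      F (u α) = 1 ∧ (∀ y : V, F y = 1 → α y ≤ α (u α)))
    (E : (V →L[ℝ] ℝ) → (V →L[ℝ] ℝ))
    (hE : ∀ (α : V →L[ℝ] ℝ) (y : V), E α y = α (bracket (u α) y))
    (a₀ : V →L[ℝ] ℝ) (ha₀ : a₀ ≠ 0) :
    ∃! a : ℝ → (V →L[ℝ] ℝ), a 0 = a₀ ∧ ∀ t : ℝ, HasDerivAt a (E (a t)) t := by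
  classical
  -- Basic facts about F
  have hF0 : F 0 = 0 := by
    have := hF_homog 0 0 le_rfl
    simpa using this
  have hFpos : ∀ y : V, y ≠ 0 → 0 < F y := by
    intro y hy
    rcases (hF_nonneg y).lt_or_eq with h | h
    · exact h
    · exact absurd (hF_zero y h.symm) hy
  -- lower bound:  c * ‖y‖ ≤ F y  with  c = sqrt (γ/2)
  set c : ℝ := Real.sqrt (γ/2) with hcdef
  have hc : 0 < c := Real.sqrt_pos.mpr (by linarith)
  have hlow : ∀ y : V, c * ‖y‖ ≤ F y := by
    intro y
    have hprem : ∀ w : V, F w ^ 2 ≥ F 0 ^ 2 + (0 : V →L[ℝ] ℝ) (w - 0) := by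
      intro w
      have h0 : (0:ℝ) ≤ F w ^ 2 := by positivity
      simpa [hF0] using h0
    have h := hsc 0 y 0 hprem
    simp only [hF0, ContinuousLinearMap.zero_apply, sub_zero, add_zero, zero_add,
      ne_eq, OfNat.ofNat_ne_zero, not_false_eq_true, zero_pow] at h
    have hsq : (c * ‖y‖)^2 = γ/2 * ‖y‖^2 := by
      rw [mul_pow, hcdef, Real.sq_sqrt (by linarith : (0:ℝ) ≤ γ/2)]
    by_contra hcon
    push_neg at hcon
    have h2 : (F y)^2 < (c * ‖y‖)^2 := by
      apply pow_lt_pow_left₀ hcon (hF_nonneg y)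
      norm_num
    rw [hsq] at h2
    linarith
  -- upper bound:  F y ≤ Cb * ‖y‖
  have hnt : Nontrivial V := by
    by_contra h
    rw [not_nontrivial_iff_subsingleton] at h
    exact ha₀ (ContinuousLinearMap.ext fun w => by rw [Subsingleton.elim w (0:V)]; simp)
  have hconv : ConvexOn ℝ Set.univ F := by
    refine ⟨convex_univ, ?_⟩
    intro x _ y _ p q hp hq hpq
    calc F (p • x + q • y) ≤ F (p • x) + F (q • y) := hF_triangle _ _
      _ = p * F x + q * F y := by rw [hF_homog p x hp, hF_homog q y hq]
  have hcont : Continuous F := by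
    rw [← continuousOn_univ]
    exact hconv.continuousOn isOpen_univ
  obtain ⟨w₀, hw₀mem, hw₀max'⟩ := (isCompact_sphere (0:V) 1).exists_isMaxOn
    (NormedSpace.sphere_nonempty.mpr zero_le_one) hcont.continuousOn
  have hw₀max : ∀ w ∈ Metric.sphere (0:V) 1, F w ≤ F w₀ := fun w hw => hw₀max' hw
  set Cb : ℝ := max (F w₀) 1 with hCbdef
  have hCb0 : 0 < Cb := lt_of_lt_of_le zero_lt_one (le_max_right _ _)
  have hCb : ∀ y : V, F y ≤ Cb * ‖y‖ := by
    intro y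
    by_cases hy : y = 0
    · simp [hy, hF0]
    · have hny : ‖y‖ ≠ 0 := norm_ne_zero_iff.mpr hy
      have hmem : ‖y‖⁻¹ • y ∈ Metric.sphere (0:V) 1 := by
        rw [mem_sphere_zero_iff_norm, norm_smul, norm_inv, norm_norm, inv_mul_cancel₀ hny]
      have h1 : F (‖y‖⁻¹ • y) ≤ Cb := le_trans (hw₀max _ hmem) (le_max_left _ _)
      have h2 : F y = ‖y‖ * F (‖y‖⁻¹ • y) := by
        rw [← hF_homog ‖y‖ (‖y‖⁻¹ • y) (norm_nonneg y), smul_inv_smul₀ hny]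
      rw [h2, mul_comm Cb ‖y‖]
      exact mul_le_mul_of_nonneg_left h1 (norm_nonneg y)
  -- bound for the bracket
  set T : V →ₗ[ℝ] (V →L[ℝ] V) :=
    (LinearMap.toContinuousLinearMap.toLinearMap.comp bracket) with hTdef
  set T' : V →L[ℝ] (V →L[ℝ] V) := LinearMap.toContinuousLinearMap T with hT'def
  set M : ℝ := ‖T'‖ with hMdef
  have hM0 : 0 ≤ M := by rw [hMdef]; exact norm_nonneg T'
  have hM : ∀ x y : V, ‖bracket x y‖ ≤ M * ‖x‖ * ‖y‖ := by
    intro x y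
    have he : bracket x y = (T' x) y := by
      simp [hT'def, hTdef]
    rw [he]
    calc ‖(T' x) y‖ ≤ ‖T' x‖ * ‖y‖ := (T' x).le_opNorm y
      _ ≤ (M * ‖x‖) * ‖y‖ :=
        mul_le_mul_of_nonneg_right (T'.le_opNorm x) (norm_nonneg y)
      _ = M * ‖x‖ * ‖y‖ := by ring
  -- facts about the maximizer u
  have hαu_pos : ∀ (α : V →L[ℝ] ℝ), α ≠ 0 → 0 < α (u α) := by
    intro α hα
    obtain ⟨x, hx⟩ : ∃ x : V, α x ≠ 0 := by
      by_contra h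
      push_neg at h
      exact hα (ContinuousLinearMap.ext fun w => by simp [h w])
    obtain ⟨x', hx'pos⟩ : ∃ x' : V, 0 < α x' := by
      rcases lt_or_gt_of_ne hx with h | h
      · refine ⟨-x, ?_⟩
        rw [map_neg]
        linarith
      · exact ⟨x, h⟩
    have hx0 : x' ≠ 0 := by
      intro h
      rw [h, map_zero] at hx'pos
      exact lt_irrefl 0 hx'pos
    have hFx : 0 < F x' := hFpos x' hx0
    have hunit : F ((F x')⁻¹ • x') = 1 := by
      rw [hF_homog _ _ (inv_nonneg.mpr hFx.le), inv_mul_cancel₀ hFx.ne']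
    have h1 := (hu α hα).2 _ hunit
    rw [map_smul, smul_eq_mul] at h1
    have h2 : 0 < (F x')⁻¹ * α x' := mul_pos (inv_pos.mpr hFx) hx'pos
    linarith
  have hsub : ∀ (α : V →L[ℝ] ℝ), α ≠ 0 → ∀ w : V, α w ≤ α (u α) * F w := by
    intro α hα w
    by_cases hw : w = 0
    · simp [hw, hF0]
    · have hFw : 0 < F w := hFpos w hw
      have hunit : F ((F w)⁻¹ • w) = 1 := by
        rw [hF_homog _ _ (inv_nonneg.mpr hFw.le), inv_mul_cancel₀ hFw.ne']
      have h1 := (hu α hα).2 _ hunit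
      rw [map_smul, smul_eq_mul] at h1
      have h2 := mul_le_mul_of_nonneg_left h1 hFw.le
      rw [← mul_assoc, mul_inv_cancel₀ hFw.ne', one_mul] at h2
      nlinarith
  have hdual : ∀ (α : V →L[ℝ] ℝ), α ≠ 0 → ‖α‖ ≤ Cb * α (u α) := by
    intro α hα
    have hpos := hαu_pos α hα
    refine ContinuousLinearMap.opNorm_le_bound α (mul_nonneg hCb0.le hpos.le) (fun w => ?_)
    rw [Real.norm_eq_abs, abs_le]
    constructor
    · have h1 := hsub α hα (-w)
      rw [map_neg] at h1
      have h2 : α (u α) * F (-w) ≤ α (u α) * (Cb * ‖w‖) := by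
        have h3 := hCb (-w)
        rw [norm_neg] at h3
        exact mul_le_mul_of_nonneg_left h3 hpos.le
      nlinarith
    · have h1 := hsub α hα w
      have h2 : α (u α) * F w ≤ α (u α) * (Cb * ‖w‖) :=
        mul_le_mul_of_nonneg_left (hCb w) hpos.le
      nlinarith
  have hu_norm : ∀ (α : V →L[ℝ] ℝ), α ≠ 0 → ‖u α‖ ≤ c⁻¹ := by
    intro α hα
    have h1 := hlow (u α)
    rw [(hu α hα).1] at h1
    have h2 : ‖u α‖ = c⁻¹ * (c * ‖u α‖) := by field_simp
    rw [h2]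
    calc c⁻¹ * (c * ‖u α‖) ≤ c⁻¹ * 1 :=
        mul_le_mul_of_nonneg_left h1 (inv_nonneg.mpr hc.le)
      _ = c⁻¹ := mul_one _
  -- the quantitative strong-convexity estimate at the maximizer
  have hkey1 : ∀ (α : V →L[ℝ] ℝ), α ≠ 0 → ∀ z : V, F z = 1 →
      α (u α) * (γ/4) * ‖z - u α‖^2 ≤ α (u α) - α z := by
    intro α hα z hz
    have ha : 0 < α (u α) := hαu_pos α hα
    have hprem : ∀ w : V, F w ^ 2 ≥ F (u α) ^ 2 + ((2/(α (u α))) • α) (w - u α) := by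
      intro w
      have h1 : α w ≤ α (u α) * F w := hsub α hα w
      have h2 : ((2/(α (u α))) • α) (w - u α) = (2/(α (u α))) * α w - 2 := by
        rw [ContinuousLinearMap.smul_apply, map_sub, smul_eq_mul, mul_sub]
        field_simp
      rw [(hu α hα).1, h2]
      have h3 : (2/(α (u α))) * α w ≤ 2 * F w := by
        calc (2/(α (u α))) * α w ≤ (2/(α (u α))) * (α (u α) * F w) :=
            mul_le_mul_of_nonneg_left h1 (le_of_lt (div_pos two_pos ha))
          _ = 2 * F w := by field_simp
      nlinarith [sq_nonneg (F w - 1)]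
    have h := hsc (u α) z ((2/(α (u α))) • α) hprem
    rw [(hu α hα).1, hz] at h
    have h2 : ((2/(α (u α))) • α) (z - u α) = (2/(α (u α))) * (α z - α (u α)) := by
      rw [ContinuousLinearMap.smul_apply, map_sub, smul_eq_mul]
    rw [h2] at h
    have h3 : (2/(α (u α))) * (α z - α (u α)) + γ/2 * ‖z - u α‖^2 ≤ 0 := by
      rw [one_pow] at h
      linarith
    have h4 := mul_le_mul_of_nonneg_left h3 (le_of_lt (half_pos ha))
    have h5 : α (u α)/2 * ((2/(α (u α))) * (α z - α (u α)) + γ/2 * ‖z - u α‖^2)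
        = (α z - α (u α)) + α (u α) * (γ/4) * ‖z - u α‖^2 := by
      field_simp
      ring
    rw [h5, mul_zero] at h4
    linarith
  -- Lipschitz estimate for u  (in the product form avoiding division)
  have hpair : ∀ (α β : V →L[ℝ] ℝ), ((α - β) (u α - u β)) ≤ ‖α - β‖ * ‖u α - u β‖ := by
    intro α β
    calc (α - β) (u α - u β) ≤ ‖(α - β) (u α - u β)‖ := le_abs_self _
      _ ≤ ‖α - β‖ * ‖u α - u β‖ := (α - β).le_opNorm _
  have hu_dist : ∀ (α β : V →L[ℝ] ℝ), α ≠ 0 → β ≠ 0 →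
      γ * (‖β‖ * ‖u α - u β‖) ≤ 4 * Cb * ‖α - β‖ := by
    intro α β hα hβ
    have hγ4 : (0:ℝ) ≤ γ/4 := by linarith
    have hd0 : (0:ℝ) ≤ ‖u α - u β‖ := norm_nonneg _
    have k1 := hkey1 α hα (u β) (hu β hβ).1
    have k2 := hkey1 β hβ (u α) (hu α hα).1
    rw [norm_sub_rev] at k1
    have hsum : (α (u α) + β (u β)) * (γ/4) * ‖u α - u β‖^2 ≤ (α - β) (u α - u β) := by
      have e : (α - β) (u α - u β) = (α (u α) - α (u β)) + (β (u β) - β (u α)) := by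
        rw [ContinuousLinearMap.sub_apply, map_sub, map_sub]
        ring
      rw [e]
      nlinarith [k1, k2]
    have hβb : ‖β‖ ≤ Cb * (α (u α) + β (u β)) := by
      have h1 := hdual β hβ
      have h2 := hαu_pos α hα
      have h3 : Cb * β (u β) ≤ Cb * (α (u α) + β (u β)) :=
        mul_le_mul_of_nonneg_left (by linarith) hCb0.le
      linarith
    by_cases hd : ‖u α - u β‖ = 0
    · rw [hd, mul_zero, mul_zero]
      exact mul_nonneg (mul_nonneg (by norm_num) hCb0.le) (norm_nonneg _)
    · have hdpos : 0 < ‖u α - u β‖ := lt_of_le_of_ne hd0 (Ne.symm hd)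
      have h7 : ‖β‖ * (γ/4) * ‖u α - u β‖^2
          ≤ Cb * (α (u α) + β (u β)) * (γ/4) * ‖u α - u β‖^2 :=
        mul_le_mul_of_nonneg_right
          (mul_le_mul_of_nonneg_right hβb hγ4) (sq_nonneg ‖u α - u β‖)
      have h8 : Cb * ((α (u α) + β (u β)) * (γ/4) * ‖u α - u β‖^2)
          ≤ Cb * (‖α - β‖ * ‖u α - u β‖) :=
        mul_le_mul_of_nonneg_left (le_trans hsum (hpair α β)) hCb0.le
      have h9 : (‖β‖ * (γ/4) * ‖u α - u β‖) * ‖u α - u β‖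
          ≤ (Cb * ‖α - β‖) * ‖u α - u β‖ := by nlinarith
      have h10 : ‖β‖ * (γ/4) * ‖u α - u β‖ ≤ Cb * ‖α - β‖ :=
        le_of_mul_le_mul_right h9 hdpos
      nlinarith
  -- E is globally Lipschitz
  have hE0 : E 0 = 0 := ContinuousLinearMap.ext fun w => by simp [hE]
  have hCb4 : (0:ℝ) ≤ 4 * Cb / γ := div_nonneg (by nlinarith [hCb0]) hγ.le
  set K₁ : ℝ := M * c⁻¹ + M * (4 * Cb / γ) with hK₁def
  have hK₁0 : 0 ≤ K₁ := by
    rw [hK₁def]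
    have : (0:ℝ) ≤ M * c⁻¹ := mul_nonneg hM0 (inv_nonneg.mpr hc.le)
    nlinarith [mul_nonneg hM0 hCb4]
  have hMc : (0:ℝ) ≤ M * c⁻¹ := mul_nonneg hM0 (inv_nonneg.mpr hc.le)
  have hMc_le : M * c⁻¹ ≤ K₁ := by
    rw [hK₁def]
    nlinarith [mul_nonneg hM0 hCb4]
  have hEbound : ∀ (α : V →L[ℝ] ℝ), α ≠ 0 → ‖E α‖ ≤ M * c⁻¹ * ‖α‖ := by
    intro α hα
    refine ContinuousLinearMap.opNorm_le_bound _ (mul_nonneg hMc (norm_nonneg _))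
      (fun w => ?_)
    rw [hE]
    calc ‖α (bracket (u α) w)‖ ≤ ‖α‖ * ‖bracket (u α) w‖ := α.le_opNorm _
      _ ≤ ‖α‖ * (M * ‖u α‖ * ‖w‖) :=
        mul_le_mul_of_nonneg_left (hM _ _) (norm_nonneg α)
      _ = (M * ‖u α‖) * (‖α‖ * ‖w‖) := by ring
      _ ≤ (M * c⁻¹) * (‖α‖ * ‖w‖) :=
        mul_le_mul_of_nonneg_right (mul_le_mul_of_nonneg_left (hu_norm α hα) hM0)
          (mul_nonneg (norm_nonneg α) (norm_nonneg w))
      _ = M * c⁻¹ * ‖α‖ * ‖w‖ := by ring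
  have hEdiff : ∀ (α β : V →L[ℝ] ℝ), α ≠ 0 → β ≠ 0 → ‖E α - E β‖ ≤ K₁ * ‖α - β‖ := by
    intro α β hα hβ
    refine ContinuousLinearMap.opNorm_le_bound _ (mul_nonneg hK₁0 (norm_nonneg _))
      (fun w => ?_)
    have e1 : (E α - E β) w = (α - β) (bracket (u α) w) + β (bracket (u α - u β) w) := by
      rw [ContinuousLinearMap.sub_apply, hE, hE, map_sub bracket (u α) (u β),
        LinearMap.sub_apply, map_sub, ContinuousLinearMap.sub_apply]
      ring
    rw [e1]
    have t1 : ‖(α - β) (bracket (u α) w)‖ ≤ ‖α - β‖ * (M * c⁻¹ * ‖w‖) := by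
      calc ‖(α - β) (bracket (u α) w)‖ ≤ ‖α - β‖ * ‖bracket (u α) w‖ :=
          (α - β).le_opNorm _
        _ ≤ ‖α - β‖ * (M * ‖u α‖ * ‖w‖) :=
          mul_le_mul_of_nonneg_left (hM _ _) (norm_nonneg _)
        _ ≤ ‖α - β‖ * (M * c⁻¹ * ‖w‖) := by
          apply mul_le_mul_of_nonneg_left _ (norm_nonneg _)
          exact mul_le_mul_of_nonneg_right
            (mul_le_mul_of_nonneg_left (hu_norm α hα) hM0) (norm_nonneg w)
    have t2 : ‖β (bracket (u α - u β) w)‖ ≤ ‖β‖ * (M * ‖u α - u β‖ * ‖w‖) := by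
      calc ‖β (bracket (u α - u β) w)‖ ≤ ‖β‖ * ‖bracket (u α - u β) w‖ := β.le_opNorm _
        _ ≤ ‖β‖ * (M * ‖u α - u β‖ * ‖w‖) :=
          mul_le_mul_of_nonneg_left (hM _ _) (norm_nonneg _)
    have t3 : ‖β‖ * ‖u α - u β‖ ≤ (4 * Cb / γ) * ‖α - β‖ := by
      have h1 := hu_dist α β hα hβ
      rw [div_mul_eq_mul_div, le_div_iff₀ hγ]
      nlinarith
    have t4 : ‖β‖ * (M * ‖u α - u β‖ * ‖w‖) ≤ M * ((4 * Cb / γ) * ‖α - β‖) * ‖w‖ := by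
      calc ‖β‖ * (M * ‖u α - u β‖ * ‖w‖) = M * (‖β‖ * ‖u α - u β‖) * ‖w‖ := by ring
        _ ≤ M * ((4 * Cb / γ) * ‖α - β‖) * ‖w‖ :=
          mul_le_mul_of_nonneg_right (mul_le_mul_of_nonneg_left t3 hM0) (norm_nonneg w)
    calc ‖(α - β) (bracket (u α) w) + β (bracket (u α - u β) w)‖
        ≤ ‖(α - β) (bracket (u α) w)‖ + ‖β (bracket (u α - u β) w)‖ := norm_add_le _ _
      _ ≤ ‖α - β‖ * (M * c⁻¹ * ‖w‖) + M * ((4 * Cb / γ) * ‖α - β‖) * ‖w‖ := by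
          linarith [t1, t2, t4]
      _ = K₁ * ‖α - β‖ * ‖w‖ := by rw [hK₁def]; ring
  have hKE : LipschitzWith (Real.toNNReal K₁) E := by
    apply LipschitzWith.of_dist_le_mul
    intro α β
    rw [dist_eq_norm, dist_eq_norm, Real.coe_toNNReal K₁ hK₁0]
    by_cases hα : α = 0
    · by_cases hβ : β = 0
      · simp [hα, hβ, hE0]
      · rw [hα, hE0, zero_sub, norm_neg, zero_sub, norm_neg]
        calc ‖E β‖ ≤ M * c⁻¹ * ‖β‖ := hEbound β hβ
          _ ≤ K₁ * ‖β‖ := mul_le_mul_of_nonneg_right hMc_le (norm_nonneg β)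
    · by_cases hβ : β = 0
      · rw [hβ, hE0, sub_zero, sub_zero]
        calc ‖E α‖ ≤ M * c⁻¹ * ‖α‖ := hEbound α hα
          _ ≤ K₁ * ‖α‖ := mul_le_mul_of_nonneg_right hMc_le (norm_nonneg α)
      · exact hEdiff α β hα hβ
  -- conclude via global existence and uniqueness
  obtain ⟨f, hf0, hfd⟩ := global_exists E (Real.toNNReal K₁) hKE a₀
  refine ⟨f, ⟨hf0, hfd⟩, ?_⟩
  rintro g ⟨hg0, hgd⟩
  exact global_unique E (Real.toNNReal K₁) hKE hgd hfd (hg0.trans hf0.symm)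
end

section
/- Let F be a strongly convex asymmetric norm on a finite-dimensional inner product space V with respect to √(γ/2)‖·‖. Then there exists R > 0 such that for every y ∈ S_F[0,1] and every subgradient α_y of F² at y, there exists ỹ ∈ V with S_F[0,1] ⊆ B_{‖·‖}[ỹ, R], y ∈ S_{‖·‖}[ỹ, R], and the tangent hyperplane of the Euclidean sphere S_{‖·‖}[ỹ,R] at y equals the hyperplane {z : α_y(z) = α_y(y)}. -/
open scoped RealInnerProductSpace

/-- For a strongly convex asymmetric norm `F` there is `R > 0` such that for every `y` on the
unit sphere of `F` and every subgradient `α` of `F²` at `y`, there exists a Euclidean ball of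
radius `R` containing the unit sphere of `F`, whose boundary sphere passes through `y`, and
whose tangent hyperplane at `y` is `{z : α(z) = α(y)}`. -/
theorem strongly_convex_sphere_supporting_balls
    {V : Type*} [NormedAddCommGroup V] [InnerProductSpace ℝ V] [FiniteDimensional ℝ V]
    (F : V → ℝ) (γ : ℝ) (hγ : 0 < γ)
    (hF_nonneg : ∀ y, 0 ≤ F y)
    (hF_zero : ∀ y, F y = 0 → y = 0)
    (hF_homog : ∀ (μ : ℝ) (y : V), 0 ≤ μ → F (μ • y) = μ * F y)
    (hF_triangle : ∀ y z, F (y + z) ≤ F y + F z)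
    (hsc : ∀ (y z : V) (α : V →L[ℝ] ℝ),
      (∀ w, F w ^ 2 ≥ F y ^ 2 + α (w - y)) →
      F z ^ 2 ≥ F y ^ 2 + α (z - y) + γ / 2 * ‖z - y‖ ^ 2) :
    ∃ R > 0, ∀ y : V, F y = 1 → ∀ α : V →L[ℝ] ℝ,
      (∀ w, F w ^ 2 ≥ F y ^ 2 + α (w - y)) →
      ∃ ytilde : V,
        {z : V | F z = 1} ⊆ Metric.closedBall ytilde R ∧
        ‖y - ytilde‖ = R ∧
        {z : V | ⟪y - ytilde, z - y⟫ = 0} = {z : V | α z = α y} := by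
  -- F 0 = 0
  have hF0 : F 0 = 0 := by
    have := hF_homog 0 0 le_rfl
    simpa using this
  -- F is convex
  have hconv : ConvexOn ℝ Set.univ F := by
    refine ⟨convex_univ, fun x _ y _ a b ha hb hab => ?_⟩
    calc F (a • x + b • y) ≤ F (a • x) + F (b • y) := hF_triangle _ _
      _ = a * F x + b * F y := by rw [hF_homog a x ha, hF_homog b y hb]
  have hcont : Continuous F := by
    have := hconv.continuousOn isOpen_univ
    rwa [continuousOn_univ] at this
  -- M : bound of F on the closed unit ball
  obtain ⟨u₀, -, hM⟩ := (isCompact_closedBall (0 : V) 1).exists_isMaxOn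
    ⟨0, Metric.mem_closedBall_self zero_le_one⟩ hcont.continuousOn
  set M := F u₀ with hMdef
  have hM0 : 0 ≤ M := hF_nonneg _
  refine ⟨(1 + M) ^ 2 / γ, by positivity, fun y hFy α hα => ?_⟩
  set R := (1 + M) ^ 2 / γ with hRdef
  have hR : 0 < R := by positivity
  -- the Riesz vector of α
  set v := (InnerProductSpace.toDual ℝ V).symm α with hvdef
  have hv : ∀ w : V, ⟪v, w⟫ = α w := fun w => InnerProductSpace.toDual_symm_apply
  -- α y ≥ 1
  have hαy : α (0 - y) ≤ F 0 ^ 2 - F y ^ 2 := by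
    have := hα 0; linarith
  have hαy1 : (1 : ℝ) ≤ α y := by
    simp only [zero_sub, map_neg, hF0, hFy] at hαy
    nlinarith
  have hvne : v ≠ 0 := by
    intro h
    have := hv y
    rw [h, inner_zero_left] at this
    linarith
  have hvpos : 0 < ‖v‖ := norm_pos_iff.mpr hvne
  -- ‖v‖ ≤ (1+M)^2 - 1
  have hαbound : ∀ u : V, ‖u‖ ≤ 1 → α u ≤ (1 + M) ^ 2 - 1 := by
    intro u hu
    have h1 : F (y + u) ≤ 1 + M := by
      have : F u ≤ M := hM (by simpa [Metric.mem_closedBall] using hu)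
      calc F (y + u) ≤ F y + F u := hF_triangle _ _
        _ ≤ 1 + M := by rw [hFy]; linarith
    have h2 := hα (y + u)
    simp only [add_sub_cancel_left] at h2
    have h3 : F (y + u) ^ 2 ≤ (1 + M) ^ 2 := by
      nlinarith [hF_nonneg (y + u)]
    rw [hFy] at h2
    nlinarith
  have hvnorm : ‖v‖ ≤ (1 + M) ^ 2 - 1 := by
    have := hαbound (‖v‖⁻¹ • v) (by
      rw [norm_smul, norm_inv, norm_norm, inv_mul_cancel₀ hvpos.ne'])
    rw [← hv, real_inner_smul_right, real_inner_self_eq_norm_sq,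
      inv_mul_eq_div, sq, mul_div_assoc, div_self hvpos.ne', mul_one] at this
    exact this
  -- the center
  refine ⟨y - (R / ‖v‖) • v, ?_, ?_, ?_⟩
  · -- containment
    intro z hz
    simp only [Set.mem_setOf_eq] at hz
    have hsc' := hsc y z α hα
    rw [hFy, hz] at hsc'
    have hkey : α (z - y) ≤ -(γ / 2) * ‖z - y‖ ^ 2 := by linarith
    have hinner : ⟪z - y, (R / ‖v‖) • v⟫ = (R / ‖v‖) * α (z - y) := by
      rw [real_inner_smul_right, real_inner_comm, hv]
    rw [Metric.mem_closedBall, dist_eq_norm]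
    have hexp : z - (y - (R / ‖v‖) • v) = (z - y) + (R / ‖v‖) • v := by abel
    have hsq : ‖z - (y - (R / ‖v‖) • v)‖ ^ 2 ≤ R ^ 2 := by
      rw [hexp, norm_add_sq_real, hinner, norm_smul, norm_div, Real.norm_eq_abs,
        abs_of_pos hR, norm_norm, div_mul_cancel₀ _ hvpos.ne']
      have hRv : 0 < R / ‖v‖ := div_pos hR hvpos
      have hRγ : ‖v‖ ≤ R * γ := by
        rw [hRdef, div_mul_cancel₀ _ hγ.ne']
        linarith
      have h1 : (R / ‖v‖) * α (z - y) ≤ (R / ‖v‖) * (-(γ / 2) * ‖z - y‖ ^ 2) :=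
        mul_le_mul_of_nonneg_left hkey hRv.le
      have h2 : (R / ‖v‖) * (γ / 2) ≥ 1 / 2 := by
        rw [ge_iff_le, div_mul_div_comm, le_div_iff₀ (by positivity)]
        linarith
      nlinarith [sq_nonneg ‖z - y‖]
    nlinarith [norm_nonneg (z - (y - (R / ‖v‖) • v))]
  · -- radius
    rw [sub_sub_cancel, norm_smul, norm_div, Real.norm_eq_abs, abs_of_pos hR,
      norm_norm, div_mul_cancel₀ _ hvpos.ne']
  · -- tangent plane
    ext z
    simp only [Set.mem_setOf_eq, sub_sub_cancel, real_inner_smul_left, hv]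
    have hα' : α (z - y) = α z - α y := by simp
    constructor
    · intro h
      have : α (z - y) = 0 := by
        rcases mul_eq_zero.mp h with h' | h'
        · exact absurd h' (div_pos hR hvpos).ne'
        · exact h'
      linarith [hα' ▸ this]
    · intro h
      rw [hα', h, sub_self, mul_zero]
end
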